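/- arXiv:2304.01163 — 8 statements merged into one kernel-verified Lean document; each statement's English description precedes it below -/
import Mathlib

section
/- Let X be a [0,∞]-valued random variable, g: [0,∞] → [0,∞] a concave function, and F a sub-σ-algebra. Then E[g(X)|F] ≤ g(E[X|F]) almost surely (conditional Jensen's inequality in the extended regime). -/
open MeasureTheory Filter
open scoped ENNReal

/-- Extended conditional expectation of a `[0,∞]`-valued random variable `X` given a
sub-σ-algebra `F`: the (increasing) limit of the classical conditional expectations of
the truncations `X ∧ n`. -/
noncomputable def extCondExp {Ω : Type*} {mΩ : MeasurableSpace Ω} (μ : Measure Ω)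
    (F : MeasurableSpace Ω) (X : Ω → ℝ≥0∞) : Ω → ℝ≥0∞ :=
  fun ω => ⨆ n : ℕ, ENNReal.ofReal ((μ[fun ω' => (min (X ω') n).toReal | F]) ω)


section Analytic

variable {g : ℝ≥0∞ → ℝ≥0∞}

lemma hg_real (hg : ∀ x y a b : ℝ≥0∞, a + b = 1 → a * g x + b * g y ≤ g (a * x + b * y))
    {x z : ℝ≥0∞} (hx : x ≠ ∞) (hz : z ≠ ∞) {a b : ℝ} (ha : 0 ≤ a) (hb : 0 ≤ b)
    (hab : a + b = 1) :
    ENNReal.ofReal a * g x + ENNReal.ofReal b * g z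
      ≤ g (ENNReal.ofReal (a * x.toReal + b * z.toReal)) := by
  have h1 : ENNReal.ofReal a + ENNReal.ofReal b = 1 := by
    rw [← ENNReal.ofReal_add ha hb, hab, ENNReal.ofReal_one]
  have h := hg x z (.ofReal a) (.ofReal b) h1
  have h2 : ENNReal.ofReal a * x + ENNReal.ofReal b * z
      = ENNReal.ofReal (a * x.toReal + b * z.toReal) := by
    rw [ENNReal.ofReal_add (by positivity) (by positivity),
      ENNReal.ofReal_mul ha, ENNReal.ofReal_mul hb,
      ENNReal.ofReal_toReal hx, ENNReal.ofReal_toReal hz]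
  rwa [h2] at h

lemma g_mono (hg : ∀ x y a b : ℝ≥0∞, a + b = 1 → a * g x + b * g y ≤ g (a * x + b * y)) :
    Monotone g := by
  intro x y hxy
  rcases eq_or_lt_of_le hxy with rfl | hlt
  · exact le_rfl
  rcases eq_or_ne y ∞ with rfl | hy
  · -- g x ≤ g ∞
    have hx : x ≠ ∞ := hlt.ne
    have h := hg x ∞ 2⁻¹ 2⁻¹ ENNReal.inv_two_add_inv_two
    have hxt : (2⁻¹ : ℝ≥0∞) * x + 2⁻¹ * ∞ = ∞ := by
      rw [ENNReal.mul_top (by norm_num)]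
      simp
    rw [hxt] at h
    rcases eq_or_ne (g ∞) ∞ with hgt | hgt
    · rw [hgt]; exact le_top
    have h2 : (2⁻¹:ℝ≥0∞) * g x + 2⁻¹ * g ∞ ≤ 2⁻¹ * g ∞ + 2⁻¹ * g ∞ := by
      calc (2⁻¹:ℝ≥0∞) * g x + 2⁻¹ * g ∞ ≤ g ∞ := h
      _ = 2⁻¹ * g ∞ + 2⁻¹ * g ∞ := by
          rw [← add_mul, ENNReal.inv_two_add_inv_two, one_mul]
    have h3 : (2⁻¹:ℝ≥0∞) * g x ≤ 2⁻¹ * g ∞ :=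
      ENNReal.add_le_add_iff_right (ENNReal.mul_ne_top (by norm_num) hgt) |>.mp h2
    exact (ENNReal.mul_le_mul_iff_right (by norm_num) (by norm_num)).mp h3
  · -- x < y < ∞
    rcases eq_or_ne (g y) ∞ with hgt | hgt
    · rw [hgt]; exact le_top
    have hx : x ≠ ∞ := (hlt.trans_le le_top).ne
    set xr := x.toReal with hxr
    set yr := y.toReal with hyr
    have hxy' : xr < yr := ENNReal.toReal_lt_toReal hx hy |>.mpr hlt
    -- one-z helper
    have key : ∀ z : ℝ, yr < z →
        ENNReal.ofReal ((z - yr)/(z - xr)) * g x ≤ g y := by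
      intro z hz
      have hyr0 : (0:ℝ) ≤ yr := ENNReal.toReal_nonneg
      have hzx : (0:ℝ) < z - xr := by linarith
      have ha : (0:ℝ) ≤ (z - yr)/(z - xr) := div_nonneg (by linarith) (by linarith)
      have hb : (0:ℝ) ≤ (yr - xr)/(z - xr) := div_nonneg (by linarith) (by linarith)
      have hab : (z - yr)/(z - xr) + (yr - xr)/(z - xr) = 1 := by
        field_simp
        ring
      have hpt : (z - yr)/(z - xr) * xr + (yr - xr)/(z - xr) * z = yr := by
        field_simp; ring
      have h := hg_real hg hx (z := ENNReal.ofReal z) ENNReal.ofReal_ne_top ha hb hab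
      rw [ENNReal.toReal_ofReal (by linarith)] at h
      rw [hpt] at h
      rw [ENNReal.ofReal_toReal hy] at h
      exact le_trans le_self_add h
    -- g x ≠ ∞
    have hgx : g x ≠ ∞ := by
      intro habs
      have h := key (yr + 1) (by linarith)
      rw [habs, ENNReal.mul_top] at h
      · exact hgt (top_le_iff.mp h)
      · simp only [ne_eq, ENNReal.ofReal_eq_zero, not_le]
        have : xr < yr := hxy'
        rw [div_pos_iff] ; left; constructor <;> linarith
    -- real inequality
    set A := (g x).toReal with hA
    set B := (g y).toReal with hB
    have hrkey : ∀ z : ℝ, yr < z → (z - yr)/(z - xr) * A ≤ B := by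
      intro z hz
      have h := key z hz
      have hne : ENNReal.ofReal ((z - yr)/(z - xr)) * g x ≠ ∞ :=
        ENNReal.mul_ne_top ENNReal.ofReal_ne_top hgx
      have := (ENNReal.toReal_le_toReal hne hgt).mpr h
      have hyr0 : (0:ℝ) ≤ yr := ENNReal.toReal_nonneg
      rwa [ENNReal.toReal_mul, ENNReal.toReal_ofReal
        (div_nonneg (by linarith) (by linarith))] at this
    have hA0 : 0 ≤ A := ENNReal.toReal_nonneg
    have hB0 : 0 ≤ B := ENNReal.toReal_nonneg
    -- conclude A ≤ B
    have hAB : A ≤ B := by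
      by_contra hcon
      push_neg at hcon
      set z := max (yr + 1) ((A*yr - B*xr)/(A - B) + 1) with hzdef
      have hz1 : yr < z := lt_of_lt_of_le (lt_add_one yr) (le_max_left _ _)
      have hz2 : (A*yr - B*xr)/(A - B) < z :=
        lt_of_lt_of_le (lt_add_one _) (le_max_right _ _)
      have hABpos : 0 < A - B := by linarith
      have hz3 : A*yr - B*xr < z * (A - B) := (div_lt_iff₀ hABpos).mp hz2
      have h := hrkey z hz1
      have hzx : (0:ℝ) < z - xr := by linarith
      rw [div_mul_eq_mul_div, div_le_iff₀ hzx] at h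
      nlinarith
    calc g x = ENNReal.ofReal A := (ENNReal.ofReal_toReal hgx).symm
    _ ≤ ENNReal.ofReal B := ENNReal.ofReal_le_ofReal hAB
    _ = g y := ENNReal.ofReal_toReal hgt

noncomputable def slopeSup (g : ℝ≥0∞ → ℝ≥0∞) (p : ℝ≥0∞) : ℝ≥0∞ :=
  ⨆ z, (g z - g p) / (z - p)

lemma slope_upper (hg : ∀ x y a b : ℝ≥0∞, a + b = 1 → a * g x + b * g y ≤ g (a * x + b * y))
    {p z : ℝ≥0∞} (hz : z ≠ ∞) :
    g z ≤ g p + slopeSup g p * (z - p) := by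
  rcases le_or_gt z p with h | h
  · exact le_trans (g_mono hg h) le_self_add
  · have h1 : (g z - g p) / (z - p) ≤ slopeSup g p := le_iSup (fun z => (g z - g p) / (z - p)) z
    have hzp0 : z - p ≠ 0 := by
      rw [ne_eq, tsub_eq_zero_iff_le]; exact not_le.mpr h
    have hzpt : z - p ≠ ∞ := ENNReal.sub_ne_top hz
    have h2 : g z - g p ≤ slopeSup g p * (z - p) := by
      calc g z - g p = (g z - g p) / (z - p) * (z - p) :=
            (ENNReal.div_mul_cancel hzp0 hzpt).symm
      _ ≤ slopeSup g p * (z - p) := mul_le_mul_left h1 _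
    calc g z ≤ g p + (g z - g p) := le_add_tsub
    _ ≤ g p + slopeSup g p * (z - p) := add_le_add_right h2 _

lemma slope_lower (hg : ∀ x y a b : ℝ≥0∞, a + b = 1 → a * g x + b * g y ≤ g (a * x + b * y))
    {p x : ℝ≥0∞} (hp0 : p ≠ 0) (hpt : p ≠ ∞) (hgp : g p ≠ ∞) (hxp : x < p) :
    slopeSup g p ≤ (g p - g x) / (p - x) := by
  apply iSup_le
  intro z
  rcases le_or_gt z p with h | h
  · rw [tsub_eq_zero_of_le (g_mono hg h), ENNReal.zero_div]
    exact zero_le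
  rcases eq_or_ne z ∞ with rfl | hzt
  · rw [ENNReal.top_sub hpt, ENNReal.div_top]
    exact zero_le
  -- x < p < z < ∞
  have hxt : x ≠ ∞ := (hxp.trans_le le_top).ne
  set xr := x.toReal with hxr
  set pr := p.toReal with hpr
  set zr := z.toReal with hzr
  have hxr0 : (0:ℝ) ≤ xr := ENNReal.toReal_nonneg
  have hxp' : xr < pr := (ENNReal.toReal_lt_toReal hxt hpt).mpr hxp
  have hpz' : pr < zr := (ENNReal.toReal_lt_toReal hpt hzt).mpr h
  have hzx : (0:ℝ) < zr - xr := by linarith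
  have ha : (0:ℝ) ≤ (zr - pr)/(zr - xr) := div_nonneg (by linarith) (by linarith)
  have hb : (0:ℝ) ≤ (pr - xr)/(zr - xr) := div_nonneg (by linarith) (by linarith)
  have hab : (zr - pr)/(zr - xr) + (pr - xr)/(zr - xr) = 1 := by field_simp; ring
  have hpt' : (zr - pr)/(zr - xr) * xr + (pr - xr)/(zr - xr) * zr = pr := by
    field_simp; ring
  have hkey := hg_real hg hxt hzt ha hb hab
  rw [show z.toReal = zr from rfl, show x.toReal = xr from rfl, hpt',
    ENNReal.ofReal_toReal hpt] at hkey
  -- g z ≠ ∞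
  have hgz : g z ≠ ∞ := by
    intro habs
    rw [habs, ENNReal.mul_top (by
      simp only [ne_eq, ENNReal.ofReal_eq_zero, not_le]
      exact div_pos (by linarith) (by linarith)), add_top] at hkey
    exact hgp (top_le_iff.mp hkey)
  have hgx : g x ≠ ∞ := fun hc => hgp (top_le_iff.mp (hc ▸ g_mono hg hxp.le))
  -- real version
  have hreal : (zr - pr)/(zr - xr) * (g x).toReal + (pr - xr)/(zr - xr) * (g z).toReal
      ≤ (g p).toReal := by
    have hne : ENNReal.ofReal ((zr - pr)/(zr - xr)) * g x
        + ENNReal.ofReal ((pr - xr)/(zr - xr)) * g z ≠ ∞ :=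
      ENNReal.add_ne_top.mpr ⟨ENNReal.mul_ne_top ENNReal.ofReal_ne_top hgx,
        ENNReal.mul_ne_top ENNReal.ofReal_ne_top hgz⟩
    have := (ENNReal.toReal_le_toReal hne hgp).mpr hkey
    rwa [ENNReal.toReal_add (ENNReal.mul_ne_top ENNReal.ofReal_ne_top hgx)
      (ENNReal.mul_ne_top ENNReal.ofReal_ne_top hgz), ENNReal.toReal_mul,
      ENNReal.toReal_mul, ENNReal.toReal_ofReal ha, ENNReal.toReal_ofReal hb] at this
  -- target via toReal
  have hmono1 : g p ≤ g z := g_mono hg h.le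
  have hmono2 : g x ≤ g p := g_mono hg hxp.le
  have hzp0 : z - p ≠ 0 := by rw [ne_eq, tsub_eq_zero_iff_le]; exact not_le.mpr h
  have hpx0 : p - x ≠ 0 := by rw [ne_eq, tsub_eq_zero_iff_le]; exact not_le.mpr hxp
  have hlhsne : (g z - g p) / (z - p) ≠ ∞ :=
    (ENNReal.div_lt_top (by simp [ENNReal.sub_ne_top hgz]) hzp0).ne
  have hrhsne : (g p - g x) / (p - x) ≠ ∞ :=
    (ENNReal.div_lt_top (ENNReal.sub_ne_top hgp) hpx0).ne
  rw [← ENNReal.toReal_le_toReal hlhsne hrhsne, ENNReal.toReal_div, ENNReal.toReal_div,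
    ENNReal.toReal_sub_of_le hmono1 hgz, ENNReal.toReal_sub_of_le hmono2 hgp,
    ENNReal.toReal_sub_of_le h.le hzt, ENNReal.toReal_sub_of_le hxp.le hpt]
  set A := (g x).toReal; set B := (g p).toReal; set Cc := (g z).toReal
  rw [div_mul_eq_mul_div, div_mul_eq_mul_div, ← add_div,
    div_le_iff₀ (by linarith)] at hreal
  rw [div_le_div_iff₀ (by linarith) (by linarith)]
  nlinarith

lemma slope_mul_le (hg : ∀ x y a b : ℝ≥0∞, a + b = 1 → a * g x + b * g y ≤ g (a * x + b * y))
    {p : ℝ≥0∞} (hp0 : p ≠ 0) (hpt : p ≠ ∞) (hgp : g p ≠ ∞) :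
    slopeSup g p * p ≤ g p ∧ slopeSup g p ≠ ∞ := by
  have h := slope_lower hg hp0 hpt hgp (show (0:ℝ≥0∞) < p from pos_iff_ne_zero.mpr hp0)
  rw [tsub_zero] at h
  have h2 : slopeSup g p ≤ g p / p :=
    h.trans (ENNReal.div_le_div_right tsub_le_self _)
  constructor
  · calc slopeSup g p * p ≤ g p / p * p := mul_le_mul_left h2 _
    _ = g p := ENNReal.div_mul_cancel hp0 hpt
  · exact (h2.trans_lt (ENNReal.div_lt_top hgp hp0)).ne

lemma line_dom (hg : ∀ x y a b : ℝ≥0∞, a + b = 1 → a * g x + b * g y ≤ g (a * x + b * y))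
    {p x : ℝ≥0∞} (hp0 : p ≠ 0) (hpt : p ≠ ∞) (hgp : g p ≠ ∞) (hx : x ≠ ∞) :
    g x ≤ (g p - slopeSup g p * p) + slopeSup g p * x := by
  set m := slopeSup g p with hm
  obtain ⟨hmp, hmt⟩ := slope_mul_le hg hp0 hpt hgp
  rcases le_or_gt p x with h | h
  · have key := slope_upper hg (p := p) hx
    have expand : (g p - m * p) + m * x = g p + m * (x - p) := by
      have h1 : m * x = m * p + m * (x - p) := by
        rw [← mul_add, add_tsub_cancel_of_le h]
      rw [h1, ← add_assoc, tsub_add_cancel_of_le hmp]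
    rw [expand]
    exact key
  · have h1 : m ≤ (g p - g x) / (p - x) := slope_lower hg hp0 hpt hgp h
    have hpx0 : p - x ≠ 0 := by rw [ne_eq, tsub_eq_zero_iff_le]; exact not_le.mpr h
    have hpxt : p - x ≠ ∞ := ENNReal.sub_ne_top hpt
    have h2 : m * (p - x) ≤ g p - g x :=
      (ENNReal.le_div_iff_mul_le (Or.inl hpx0) (Or.inl hpxt)).mp h1
    have hgx : g x ≤ g p := g_mono hg h.le
    have h3 : g x + m * (p - x) ≤ g p := by
      calc g x + m * (p - x) ≤ g x + (g p - g x) := add_le_add_right h2 _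
      _ = g p := add_tsub_cancel_of_le hgx
    have hfin : m * (p - x) ≠ ∞ := ENNReal.mul_ne_top hmt hpxt
    rw [← ENNReal.add_le_add_iff_right hfin]
    calc g x + m * (p - x) ≤ g p := h3
    _ = (g p - m * p) + m * x + m * (p - x) := by
        rw [add_assoc, ← mul_add, add_tsub_cancel_of_le h.le, tsub_add_cancel_of_le hmp]

noncomputable def lineM (g : ℝ≥0∞ → ℝ≥0∞) (q : ℚ) : ℝ≥0∞ :=
  if 0 < q ∧ g (ENNReal.ofReal q) ≠ ∞ then slopeSup g (ENNReal.ofReal q) else 0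

noncomputable def lineC (g : ℝ≥0∞ → ℝ≥0∞) (q : ℚ) : ℝ≥0∞ :=
  if 0 < q ∧ g (ENNReal.ofReal q) ≠ ∞ then
    g (ENNReal.ofReal q) - slopeSup g (ENNReal.ofReal q) * ENNReal.ofReal q else ∞

lemma lineM_ne_top (hg : ∀ x y a b : ℝ≥0∞, a + b = 1 → a * g x + b * g y ≤ g (a * x + b * y))
    (q : ℚ) : lineM g q ≠ ∞ := by
  rw [lineM]
  split_ifs with h
  · exact (slope_mul_le hg (ENNReal.ofReal_pos.mpr (by exact_mod_cast h.1)).ne'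
      ENNReal.ofReal_ne_top h.2).2
  · simp

lemma line_dom' (hg : ∀ x y a b : ℝ≥0∞, a + b = 1 → a * g x + b * g y ≤ g (a * x + b * y))
    (q : ℚ) {x : ℝ≥0∞} (hx : x ≠ ∞) : g x ≤ lineC g q + lineM g q * x := by
  rw [lineC, lineM]
  split_ifs with h
  · exact line_dom hg (ENNReal.ofReal_pos.mpr (by exact_mod_cast h.1)).ne'
      ENNReal.ofReal_ne_top h.2 hx
  · simp

lemma line_inf_le (hg : ∀ x y a b : ℝ≥0∞, a + b = 1 → a * g x + b * g y ≤ g (a * x + b * y))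
    {y : ℝ≥0∞} (hy0 : y ≠ 0) (hyt : y ≠ ∞) :
    ⨅ q : ℚ, (lineC g q + lineM g q * y) ≤ g y := by
  rcases eq_or_ne (g y) ∞ with hgy | hgy
  · rw [hgy]; exact le_top
  apply ENNReal.le_of_forall_pos_le_add
  intro ε hε _
  have hε' : (0:ℝ) < ε := hε
  set yr := y.toReal with hyrdef
  have hyr : 0 < yr := ENNReal.toReal_pos hy0 hyt
  set B := (g y).toReal with hBdef
  have hB0 : (0:ℝ) ≤ B := ENNReal.toReal_nonneg
  set Kr := B / (yr/4) with hKrdef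
  have hKr : (0:ℝ) ≤ Kr := div_nonneg hB0 (by linarith)
  set δ := min (yr/4) ((ε:ℝ)/(Kr+1)) with hδdef
  have hδ : 0 < δ := lt_min (by linarith) (div_pos hε' (by linarith))
  have hδ4 : δ ≤ yr/4 := min_le_left _ _
  obtain ⟨q, hq1, hq2⟩ := exists_rat_btwn (show yr - δ < yr by linarith)
  have hq0 : (0:ℝ) < q := by linarith
  have hPy : ENNReal.ofReal (q:ℝ) ≤ y := by
    conv_rhs => rw [← ENNReal.ofReal_toReal hyt]
    exact ENNReal.ofReal_le_ofReal hq2.le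
  have hgP : g (ENNReal.ofReal (q:ℝ)) ≠ ∞ :=
    fun hc => hgy (top_le_iff.mp (hc ▸ g_mono hg hPy))
  have hP0 : ENNReal.ofReal (q:ℝ) ≠ 0 := (ENNReal.ofReal_pos.mpr hq0).ne'
  have hPt : ENNReal.ofReal (q:ℝ) ≠ ∞ := ENNReal.ofReal_ne_top
  have hgood : 0 < q ∧ g (ENNReal.ofReal (q:ℚ)) ≠ ∞ := ⟨by exact_mod_cast hq0, hgP⟩
  obtain ⟨hmp, hmt⟩ := slope_mul_le hg hP0 hPt hgP
  have hval : lineC g q + lineM g q * y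
      = g (ENNReal.ofReal (q:ℝ))
        + slopeSup g (ENNReal.ofReal (q:ℝ)) * (y - ENNReal.ofReal (q:ℝ)) := by
    rw [lineC, lineM, if_pos hgood, if_pos hgood]
    rw [show slopeSup g (ENNReal.ofReal (q:ℝ)) * y
        = slopeSup g (ENNReal.ofReal (q:ℝ)) * ENNReal.ofReal (q:ℝ)
          + slopeSup g (ENNReal.ofReal (q:ℝ)) * (y - ENNReal.ofReal (q:ℝ)) by
      rw [← mul_add, add_tsub_cancel_of_le hPy]]
    rw [← add_assoc, tsub_add_cancel_of_le hmp]
  have hx2 : ENNReal.ofReal (yr/2) < ENNReal.ofReal (q:ℝ) := by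
    rw [ENNReal.ofReal_lt_ofReal_iff hq0]
    linarith
  have hmb : slopeSup g (ENNReal.ofReal (q:ℝ)) ≤ ENNReal.ofReal Kr := by
    have h1 := slope_lower hg hP0 hPt hgP hx2
    have h2 : g (ENNReal.ofReal (q:ℝ)) - g (ENNReal.ofReal (yr/2)) ≤ g y :=
      tsub_le_self.trans (g_mono hg hPy)
    have h3 : ENNReal.ofReal (yr/4)
        ≤ ENNReal.ofReal (q:ℝ) - ENNReal.ofReal (yr/2) := by
      rw [← ENNReal.ofReal_sub _ (by linarith)]
      exact ENNReal.ofReal_le_ofReal (by linarith)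
    calc slopeSup g (ENNReal.ofReal (q:ℝ))
        ≤ (g (ENNReal.ofReal (q:ℝ)) - g (ENNReal.ofReal (yr/2)))
          / (ENNReal.ofReal (q:ℝ) - ENNReal.ofReal (yr/2)) := h1
    _ ≤ g y / ENNReal.ofReal (yr/4) := ENNReal.div_le_div h2 h3
    _ = ENNReal.ofReal Kr := by
        conv_lhs => rw [← ENNReal.ofReal_toReal hgy]
        rw [← ENNReal.ofReal_div_of_pos (by linarith)]
  have hyP : y - ENNReal.ofReal (q:ℝ) = ENNReal.ofReal (yr - q) := by
    conv_lhs => rw [← ENNReal.ofReal_toReal hyt]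
    rw [← ENNReal.ofReal_sub _ hq0.le]
  have hstep : slopeSup g (ENNReal.ofReal (q:ℝ)) * (y - ENNReal.ofReal (q:ℝ))
      ≤ (ε : ℝ≥0∞) := by
    rw [hyP]
    calc slopeSup g (ENNReal.ofReal (q:ℝ)) * ENNReal.ofReal (yr - q)
        ≤ ENNReal.ofReal Kr * ENNReal.ofReal (yr - q) := mul_le_mul_left hmb _
    _ = ENNReal.ofReal (Kr * (yr - q)) := (ENNReal.ofReal_mul hKr).symm
    _ ≤ ENNReal.ofReal (ε:ℝ) := ENNReal.ofReal_le_ofReal (by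
        have h4 : yr - q ≤ δ := by linarith
        have h5 : δ ≤ (ε:ℝ)/(Kr+1) := min_le_right _ _
        have h6 : Kr * (yr - q) ≤ Kr * ((ε:ℝ)/(Kr+1)) :=
          mul_le_mul_of_nonneg_left (h4.trans h5) hKr
        have h7 : Kr * ((ε:ℝ)/(Kr+1)) ≤ ε := by
          rw [mul_comm, div_mul_eq_mul_div, div_le_iff₀ (by linarith)]
          nlinarith
        linarith)
    _ = (ε : ℝ≥0∞) := ENNReal.ofReal_coe_nnreal
  calc ⨅ r : ℚ, (lineC g r + lineM g r * y) ≤ lineC g q + lineM g q * y :=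
        iInf_le _ q
  _ = _ := hval
  _ ≤ g y + ε := add_le_add (g_mono hg hPy) hstep

end Analytic


section MT

variable {Ω : Type*} {F : MeasurableSpace Ω} [mΩ : MeasurableSpace Ω] {μ : Measure Ω}
  [IsProbabilityMeasure μ]

variable {Ω : Type*} {F : MeasurableSpace Ω} [mΩ : MeasurableSpace Ω] {μ : Measure Ω}
  [IsProbabilityMeasure μ]

lemma integrable_trunc {X : Ω → ℝ≥0∞} (hX : Measurable X) (n : ℕ) :
    Integrable (fun ω => (min (X ω) n).toReal) μ := by
  have hm : Measurable fun ω => (min (X ω) (n:ℝ≥0∞)).toReal :=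
    (hX.min measurable_const).ennreal_toReal
  refine Integrable.mono' (integrable_const (n:ℝ)) hm.aestronglyMeasurable
    (ae_of_all _ fun ω => ?_)
  rw [Real.norm_eq_abs, abs_of_nonneg ENNReal.toReal_nonneg]
  calc (min (X ω) n).toReal ≤ ((n:ℝ≥0∞)).toReal :=
        ENNReal.toReal_mono (ENNReal.natCast_ne_top n) (min_le_right _ _)
  _ = n := by simp

lemma iSup_min_natCast (c : ℝ≥0∞) : ⨆ n : ℕ, min c (n:ℝ≥0∞) = c := by
  apply le_antisymm (iSup_le fun n => min_le_left _ _)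
  rcases eq_or_ne c ∞ with rfl | hc
  · calc (⊤:ℝ≥0∞) = ⨆ n:ℕ, (n:ℝ≥0∞) := ENNReal.iSup_natCast.symm
    _ ≤ _ := iSup_mono fun n => by rw [min_eq_right (le_top : (n:ℝ≥0∞) ≤ ⊤)]
  · obtain ⟨n, hn⟩ := ENNReal.exists_nat_gt hc
    exact le_iSup_of_le n (by rw [min_eq_left hn.le])

lemma extCondExp_const (hF : F ≤ mΩ) (c : ℝ≥0∞) :
    extCondExp μ F (fun _ => c) = fun _ => c := by
  funext ω
  have hc : ∀ n : ℕ, (μ[fun _ω' : Ω => (min c (n:ℝ≥0∞)).toReal|F])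
      = fun _ => (min c (n:ℝ≥0∞)).toReal := fun n => condExp_const hF _
  calc extCondExp μ F (fun _ => c) ω
      = ⨆ n : ℕ, ENNReal.ofReal ((μ[fun _ω' : Ω => (min c (n:ℝ≥0∞)).toReal|F]) ω) := rfl
  _ = ⨆ n : ℕ, min c (n:ℝ≥0∞) := by
      refine iSup_congr fun n => ?_
      rw [hc n]
      exact ENNReal.ofReal_toReal
        ((min_le_right _ _).trans_lt (ENNReal.natCast_lt_top n)).ne
  _ = c := iSup_min_natCast c

lemma extCondExp_mono (hF : F ≤ mΩ) {X Z : Ω → ℝ≥0∞} (hX : Measurable X) (hZ : Measurable Z)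
    (h : ∀ ω, X ω ≤ Z ω) : extCondExp μ F X ≤ᵐ[μ] extCondExp μ F Z := by
  have hn : ∀ n : ℕ, μ[fun ω => (min (X ω) (n:ℝ≥0∞)).toReal|F]
      ≤ᵐ[μ] μ[fun ω => (min (Z ω) (n:ℝ≥0∞)).toReal|F] := fun n =>
    condExp_mono (integrable_trunc hX n) (integrable_trunc hZ n)
      (ae_of_all _ fun ω => ENNReal.toReal_mono
        ((min_le_right _ _).trans_lt (ENNReal.natCast_lt_top n)).ne
        (min_le_min (h ω) le_rfl))
  filter_upwards [ae_all_iff.mpr hn] with ω hω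
  exact iSup_mono fun n => ENNReal.ofReal_le_ofReal (hω n)

lemma extCondExp_affine (hF : F ≤ mΩ) {X : Ω → ℝ≥0∞} (hX : Measurable X)
    {c m : ℝ≥0∞} (hm : m ≠ ∞) :
    extCondExp μ F (fun ω => c + m * X ω) ≤ᵐ[μ] fun ω => c + m * extCondExp μ F X ω := by
  rcases eq_or_ne c ∞ with rfl | hc
  · filter_upwards with ω; simp
  rcases eq_or_ne m 0 with rfl | hm0
  · have heq : (fun ω : Ω => c + 0 * X ω) = fun _ => c := by funext ω; simp
    rw [heq, extCondExp_const hF]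
    filter_upwards with ω
    exact le_self_add
  -- choose truncation levels
  have hnk : ∀ k : ℕ, ∃ nk : ℕ, (k:ℝ≥0∞) ≤ m * nk := by
    intro k
    obtain ⟨n, hn⟩ := ENNReal.exists_nat_gt (ENNReal.div_lt_top (ENNReal.natCast_ne_top k) hm0).ne
    refine ⟨n, ?_⟩
    calc (k:ℝ≥0∞) = (k:ℝ≥0∞) / m * m := (ENNReal.div_mul_cancel hm0 hm).symm
    _ ≤ (n:ℝ≥0∞) * m := mul_le_mul_left hn.le m
    _ = m * n := mul_comm _ _
  choose nk hnkle using hnk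
  have hfin : ∀ ω (k : ℕ), m * min (X ω) (nk k : ℝ≥0∞) ≠ ∞ := fun ω k =>
    ENNReal.mul_ne_top hm ((min_le_right _ _).trans_lt (ENNReal.natCast_lt_top _)).ne
  have hptwise : ∀ (k : ℕ) ω, (min (c + m * X ω) (k:ℝ≥0∞)).toReal
      ≤ c.toReal + m.toReal * (min (X ω) (nk k : ℝ≥0∞)).toReal := by
    intro k ω
    rcases le_total (X ω) (nk k : ℝ≥0∞) with h | h
    · have h1 : min (c + m * X ω) (k:ℝ≥0∞) ≤ c + m * min (X ω) (nk k : ℝ≥0∞) := by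
        rw [min_eq_left h]
        exact min_le_left _ _
      have h2 : c + m * min (X ω) (nk k : ℝ≥0∞) ≠ ∞ :=
        ENNReal.add_ne_top.mpr ⟨hc, hfin ω k⟩
      calc (min (c + m * X ω) (k:ℝ≥0∞)).toReal
          ≤ (c + m * min (X ω) (nk k : ℝ≥0∞)).toReal := ENNReal.toReal_mono h2 h1
      _ = c.toReal + m.toReal * (min (X ω) (nk k : ℝ≥0∞)).toReal := by
          rw [ENNReal.toReal_add hc (hfin ω k), ENNReal.toReal_mul]
    · have h1 : (min (c + m * X ω) (k:ℝ≥0∞)).toReal ≤ (k:ℝ≥0∞).toReal :=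
        ENNReal.toReal_mono (ENNReal.natCast_ne_top k) (min_le_right _ _)
      have h2 : ((k:ℝ≥0∞)).toReal ≤ (m * (nk k : ℝ≥0∞)).toReal :=
        ENNReal.toReal_mono (ENNReal.mul_ne_top hm (ENNReal.natCast_ne_top _)) (hnkle k)
      have h3 : min (X ω) (nk k : ℝ≥0∞) = (nk k : ℝ≥0∞) := min_eq_right h
      rw [h3]
      rw [ENNReal.toReal_mul] at h2
      have : (0:ℝ) ≤ c.toReal := ENNReal.toReal_nonneg
      linarith [h1, h2]
  set Y := fun ω => c + m * X ω with hYdef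
  have hY : Measurable Y := (hX.const_mul m).const_add c
  have haek : ∀ k : ℕ, μ[fun ω => (min (Y ω) (k:ℝ≥0∞)).toReal|F]
      ≤ᵐ[μ] fun ω => c.toReal + m.toReal * (μ[fun ω' => (min (X ω') (nk k : ℝ≥0∞)).toReal|F]) ω := by
    intro k
    have hint2 : Integrable (fun ω => c.toReal
        + m.toReal * (min (X ω) (nk k : ℝ≥0∞)).toReal) μ :=
      (integrable_const c.toReal).add ((integrable_trunc hX (nk k)).const_mul m.toReal)
    have h1 : μ[fun ω => (min (Y ω) (k:ℝ≥0∞)).toReal|F]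
        ≤ᵐ[μ] μ[fun ω => c.toReal + m.toReal * (min (X ω) (nk k : ℝ≥0∞)).toReal|F] :=
      condExp_mono (integrable_trunc hY k) hint2 (ae_of_all _ (hptwise k))
    have heqf : (fun ω => c.toReal + m.toReal * (min (X ω) (nk k : ℝ≥0∞)).toReal)
        = (fun _ => c.toReal) + m.toReal • (fun ω => (min (X ω) (nk k : ℝ≥0∞)).toReal) := by
      funext ω; simp [smul_eq_mul]
    have h2 : μ[fun ω => c.toReal + m.toReal * (min (X ω) (nk k : ℝ≥0∞)).toReal|F]
        =ᵐ[μ] fun ω => c.toReal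
          + m.toReal * (μ[fun ω' => (min (X ω') (nk k : ℝ≥0∞)).toReal|F]) ω := by
      rw [heqf]
      refine (condExp_add (integrable_const c.toReal)
        ((integrable_trunc hX (nk k)).smul m.toReal) F).trans ?_
      have h3 := condExp_smul (μ := μ) (m := F) m.toReal
        (fun ω => (min (X ω) (nk k : ℝ≥0∞)).toReal)
      filter_upwards [h3] with ω hω
      have h4 : (μ[fun _ : Ω => c.toReal|F]) = fun _ => c.toReal := condExp_const hF _
      simp only [Pi.add_apply, h4, hω, Pi.smul_apply, smul_eq_mul]
    exact h1.trans h2.le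
  filter_upwards [ae_all_iff.mpr haek] with ω hω
  show (⨆ k : ℕ, ENNReal.ofReal ((μ[fun ω' => (min (Y ω') (k:ℝ≥0∞)).toReal|F]) ω))
    ≤ c + m * extCondExp μ F X ω
  refine iSup_le fun k => ?_
  calc ENNReal.ofReal ((μ[fun ω' => (min (Y ω') (k:ℝ≥0∞)).toReal|F]) ω)
      ≤ ENNReal.ofReal (c.toReal
        + m.toReal * (μ[fun ω' => (min (X ω') (nk k:ℝ≥0∞)).toReal|F]) ω) :=
        ENNReal.ofReal_le_ofReal (hω k)
  _ ≤ ENNReal.ofReal c.toReal + ENNReal.ofReal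
        (m.toReal * (μ[fun ω' => (min (X ω') (nk k:ℝ≥0∞)).toReal|F]) ω) :=
        ENNReal.ofReal_add_le
  _ = c + m * ENNReal.ofReal ((μ[fun ω' => (min (X ω') (nk k:ℝ≥0∞)).toReal|F]) ω) := by
        rw [ENNReal.ofReal_toReal hc, ENNReal.ofReal_mul ENNReal.toReal_nonneg,
          ENNReal.ofReal_toReal hm]
  _ ≤ c + m * extCondExp μ F X ω := by
        gcongr
        exact le_iSup (fun n : ℕ =>
          ENNReal.ofReal ((μ[fun ω' => (min (X ω') (n:ℝ≥0∞)).toReal|F]) ω)) (nk k)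

lemma condexp_restrict_congr (hF : F ≤ mΩ) {A : Set Ω} (hA : MeasurableSet[F] A)
    {f h : Ω → ℝ} (hfi : Integrable f μ) (hhi : Integrable h μ)
    (hfh : f =ᵐ[μ.restrict A] h) : μ[f|F] =ᵐ[μ.restrict A] μ[h|F] := by
  have hA' : MeasurableSet A := hF _ hA
  have hind : A.indicator f =ᵐ[μ] A.indicator h := by
    filter_upwards [(ae_restrict_iff' hA').mp hfh] with ω hω
    by_cases hmem : ω ∈ A
    · simp [Set.indicator_of_mem hmem, hω hmem]
    · simp [Set.indicator_of_notMem hmem]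
  have h1 := condExp_indicator hfi hA
  have h2 := condExp_indicator hhi hA
  have h4 : A.indicator (μ[f|F]) =ᵐ[μ] A.indicator (μ[h|F]) :=
    h1.symm.trans ((condExp_congr_ae hind).trans h2)
  rw [Filter.EventuallyEq, ae_restrict_iff' hA']
  filter_upwards [h4] with ω hω hmem
  simpa [Set.indicator_of_mem hmem] using hω

lemma extCondExp_restrict_congr (hF : F ≤ mΩ) {A : Set Ω} (hA : MeasurableSet[F] A)
    {X Z : Ω → ℝ≥0∞} (hX : Measurable X) (hZ : Measurable Z)
    (h : X =ᵐ[μ.restrict A] Z) :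
    extCondExp μ F X =ᵐ[μ.restrict A] extCondExp μ F Z := by
  have hn : ∀ n : ℕ, μ[fun ω => (min (X ω) (n:ℝ≥0∞)).toReal|F]
      =ᵐ[μ.restrict A] μ[fun ω => (min (Z ω) (n:ℝ≥0∞)).toReal|F] := by
    intro n
    refine condexp_restrict_congr hF hA (integrable_trunc hX n) (integrable_trunc hZ n) ?_
    filter_upwards [h] with ω hω
    rw [hω]
  filter_upwards [ae_all_iff.mpr hn] with ω hω
  exact iSup_congr fun n => by rw [hω n]

lemma extCondExp_F_meas {X : Ω → ℝ≥0∞} : Measurable[F] (extCondExp μ F X) := by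
  refine Measurable.iSup fun n => ?_
  exact ENNReal.measurable_ofReal.comp stronglyMeasurable_condExp.measurable

lemma extCondExp_zero_set (hF : F ≤ mΩ) {X : Ω → ℝ≥0∞} (hX : Measurable X) :
    X =ᵐ[μ.restrict {ω | extCondExp μ F X ω = 0}] (fun _ => (0:ℝ≥0∞)) := by
  set A := {ω | extCondExp μ F X ω = 0} with hAdef
  have hAF : MeasurableSet[F] A :=
    (extCondExp_F_meas (mΩ := mΩ) (μ := μ) (X := X)) (measurableSet_singleton 0)
  have hA' : MeasurableSet A := hF _ hAF
  have hle : ∀ ω ∈ A, (μ[fun ω' => (min (X ω') ((1:ℕ):ℝ≥0∞)).toReal|F]) ω ≤ 0 := by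
    intro ω hω
    have h1 : ENNReal.ofReal ((μ[fun ω' => (min (X ω') ((1:ℕ):ℝ≥0∞)).toReal|F]) ω)
        ≤ extCondExp μ F X ω :=
      le_iSup (fun n : ℕ =>
        ENNReal.ofReal ((μ[fun ω' => (min (X ω') (n:ℝ≥0∞)).toReal|F]) ω)) 1
    rw [show extCondExp μ F X ω = 0 from hω] at h1
    exact ENNReal.ofReal_eq_zero.mp (le_antisymm h1 (zero_le))
  have hint := setIntegral_condExp (μ := μ) hF (integrable_trunc hX 1) hAF
  have hnonpos : ∫ ω in A, (μ[fun ω' => (min (X ω') ((1:ℕ):ℝ≥0∞)).toReal|F]) ω ∂μ ≤ 0 :=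
    setIntegral_nonpos hA' hle
  have hnonneg : 0 ≤ ∫ ω in A, (min (X ω) ((1:ℕ):ℝ≥0∞)).toReal ∂μ :=
    setIntegral_nonneg hA' fun ω _ => ENNReal.toReal_nonneg
  have hzero : ∫ ω in A, (min (X ω) ((1:ℕ):ℝ≥0∞)).toReal ∂μ = 0 :=
    le_antisymm (hint ▸ hnonpos) hnonneg
  have hae := (integral_eq_zero_iff_of_nonneg_ae
    (ae_of_all _ fun ω => ENNReal.toReal_nonneg)
    ((integrable_trunc hX 1).restrict (s := A))).mp hzero
  filter_upwards [hae] with ω hω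
  have hmin : min (X ω) ((1:ℕ):ℝ≥0∞) = 0 := by
    have hne : min (X ω) ((1:ℕ):ℝ≥0∞) ≠ ∞ :=
      ((min_le_right _ _).trans_lt (ENNReal.natCast_lt_top 1)).ne
    rcases (ENNReal.toReal_eq_zero_iff _).mp hω with h | h
    · exact h
    · exact absurd h hne
  rcases le_total (X ω) ((1:ℕ):ℝ≥0∞) with h | h
  · rw [min_eq_left h] at hmin; exact hmin
  · rw [min_eq_right h] at hmin; simp at hmin

lemma extCondExp_fin_set (hF : F ≤ mΩ) {X : Ω → ℝ≥0∞} (hX : Measurable X) :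
    ∀ᵐ ω ∂(μ.restrict {ω | extCondExp μ F X ω ≠ ∞}), X ω ≠ ∞ := by
  set D := {ω | extCondExp μ F X ω ≠ ∞} with hDdef
  have hDF : MeasurableSet[F] D :=
    ((extCondExp_F_meas (mΩ := mΩ) (μ := μ) (X := X)) (measurableSet_singleton ∞)).compl
  have hD' : MeasurableSet D := hF _ hDF
  set ind : Ω → ℝ := {ω | X ω = ∞}.indicator (fun _ => (1:ℝ)) with hinddef
  have hindint : Integrable ind μ :=
    (integrable_const (1:ℝ)).indicator (hX (measurableSet_singleton ∞))
  have hindnn : ∀ ω, 0 ≤ ind ω := fun ω => Set.indicator_nonneg (fun _ _ => zero_le_one) ω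
  have hbound : ∀ (n:ℕ) ω, (n:ℝ) * ind ω ≤ (min (X ω) (n:ℝ≥0∞)).toReal := by
    intro n ω
    by_cases hmem : X ω = ∞
    · rw [hinddef]
      simp only [Set.indicator_of_mem (by exact hmem : ω ∈ {ω | X ω = ∞}), mul_one]
      rw [hmem, min_eq_right (le_top : (n:ℝ≥0∞) ≤ ⊤)]
      simp
    · rw [hinddef]
      simp only [Set.indicator_of_notMem (by exact hmem : ω ∉ {ω | X ω = ∞}), mul_zero]
      exact ENNReal.toReal_nonneg
  have h1 : ∀ n : ℕ, μ[(n:ℝ) • ind|F] ≤ᵐ[μ] μ[fun ω => (min (X ω) (n:ℝ≥0∞)).toReal|F] :=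
    fun n => condExp_mono (hindint.smul (n:ℝ)) (integrable_trunc hX n)
      (ae_of_all _ fun ω => by simpa [smul_eq_mul] using hbound n ω)
  have h2 : ∀ n : ℕ, μ[(n:ℝ) • ind|F] =ᵐ[μ] (n:ℝ) • μ[ind|F] := fun n => condExp_smul _ _ _
  have h3 : 0 ≤ᵐ[μ] μ[ind|F] := condExp_nonneg (ae_of_all _ hindnn)
  have hkey : ∀ᵐ ω ∂μ, ω ∈ D → (μ[ind|F]) ω ≤ 0 := by
    filter_upwards [ae_all_iff.mpr h1, ae_all_iff.mpr (fun n => (h2 n).symm.le),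
      ae_all_iff.mpr (fun n => (h2 n).le)] with ω hω1 hω2 hω3 hmem
    by_contra hcon
    push_neg at hcon
    apply hmem
    have hchain : ∀ n : ℕ, (n:ℝ≥0∞) * ENNReal.ofReal ((μ[ind|F]) ω)
        ≤ ENNReal.ofReal ((μ[fun ω' => (min (X ω') (n:ℝ≥0∞)).toReal|F]) ω) := by
      intro n
      have ha : (n:ℝ) * (μ[ind|F]) ω ≤ (μ[fun ω' => (min (X ω') (n:ℝ≥0∞)).toReal|F]) ω := by
        have := le_trans (hω2 n) (hω1 n)
        simpa [smul_eq_mul] using this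
      calc (n:ℝ≥0∞) * ENNReal.ofReal ((μ[ind|F]) ω)
          = ENNReal.ofReal ((n:ℝ) * (μ[ind|F]) ω) := by
            rw [ENNReal.ofReal_mul (Nat.cast_nonneg n), ENNReal.ofReal_natCast]
      _ ≤ _ := ENNReal.ofReal_le_ofReal ha
    have htop : (⨆ n : ℕ,
        ENNReal.ofReal ((μ[fun ω' => (min (X ω') (n:ℝ≥0∞)).toReal|F]) ω)) = ∞ := by
      rw [eq_top_iff]
      calc (⊤:ℝ≥0∞) = (⨆ n:ℕ, (n:ℝ≥0∞)) * ENNReal.ofReal ((μ[ind|F]) ω) := by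
            rw [ENNReal.iSup_natCast, ENNReal.top_mul
              (by simpa [ENNReal.ofReal_eq_zero] using hcon)]
      _ = ⨆ n:ℕ, (n:ℝ≥0∞) * ENNReal.ofReal ((μ[ind|F]) ω) := ENNReal.iSup_mul _ _
      _ ≤ _ := iSup_mono hchain
    exact htop
  have hres : ∀ᵐ ω ∂(μ.restrict D), (μ[ind|F]) ω ≤ 0 := (ae_restrict_iff' hD').mpr hkey
  have hres0 : μ[ind|F] =ᵐ[μ.restrict D] 0 := by
    filter_upwards [hres, ae_restrict_of_ae h3] with ω hω1 hω2
    exact le_antisymm hω1 hω2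
  have hintD : ∫ ω in D, ind ω ∂μ = 0 := by
    rw [← setIntegral_condExp hF hindint hDF]
    calc ∫ ω in D, (μ[ind|F]) ω ∂μ = ∫ _ω in D, (0:ℝ) ∂μ := integral_congr_ae hres0
    _ = 0 := by simp
  have hae := (integral_eq_zero_iff_of_nonneg_ae
    (ae_of_all _ hindnn) (hindint.restrict (s := D))).mp hintD
  filter_upwards [hae] with ω hω
  intro hcon
  rw [hinddef] at hω
  simp only [Set.indicator_of_mem (by exact hcon : ω ∈ {ω | X ω = ∞})] at hω
  exact one_ne_zero hω

end MT

/-- conditional Jensen's inequality in the extended regime: for concave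
`g : [0,∞] → [0,∞]`, `E[g(X)|F] ≤ g(E[X|F])` a.s. -/
theorem extCondExp_jensen_concave
    {Ω : Type*} (F : MeasurableSpace Ω) {mΩ : MeasurableSpace Ω} (μ : Measure Ω) [IsProbabilityMeasure μ]
    (hF : F ≤ mΩ) (X : Ω → ℝ≥0∞) (hX : Measurable X)
    (g : ℝ≥0∞ → ℝ≥0∞)
    (hg : ∀ x y a b : ℝ≥0∞, a + b = 1 → a * g x + b * g y ≤ g (a * x + b * y)) :
    extCondExp μ F (fun ω => g (X ω)) ≤ᵐ[μ] fun ω => g (extCondExp μ F X ω) := by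
  classical
  have hmono := g_mono hg
  have hgm : Measurable g := hmono.measurable
  have hXm : Measurable[mΩ] X := hX
  set X' : Ω → ℝ≥0∞ := fun ω => if X ω = ∞ then 0 else X ω with hX'def
  have hX' : Measurable[mΩ] X' :=
    Measurable.ite (hXm (measurableSet_singleton ∞)) measurable_const hXm
  have hX'ne : ∀ ω, X' ω ≠ ∞ := by
    intro ω
    show (if X ω = ∞ then 0 else X ω) ≠ ∞
    split_ifs with h
    · simp
    · exact h
  set D := {ω | extCondExp μ F X ω ≠ ∞} with hD
  have hDF : MeasurableSet[F] D :=
    ((extCondExp_F_meas (mΩ := mΩ) (μ := μ) (X := X)) (measurableSet_singleton ∞)).compl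
  have hD' : MeasurableSet[mΩ] D := hF _ hDF
  set A := {ω | extCondExp μ F X ω = 0} with hA
  have hAF : MeasurableSet[F] A :=
    (extCondExp_F_meas (mΩ := mΩ) (μ := μ) (X := X)) (measurableSet_singleton 0)
  have hA' : MeasurableSet[mΩ] A := hF _ hAF
  have hXX' : X =ᵐ[μ.restrict D] X' := by
    filter_upwards [extCondExp_fin_set (mΩ := mΩ) hF hXm] with ω hω
    show X ω = if X ω = ∞ then 0 else X ω
    rw [if_neg hω]
  have hF1 : extCondExp μ F (fun ω => g (X ω)) ≤ᵐ[μ] fun _ => g ∞ := by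
    have h1 : extCondExp μ F (fun ω => g (X ω)) ≤ᵐ[μ] extCondExp μ F (fun _ => g ∞) :=
      extCondExp_mono (mΩ := mΩ) hF (hgm.comp hXm) measurable_const (fun ω => hmono le_top)
    rwa [extCondExp_const (mΩ := mΩ) hF] at h1
  have hF2 : extCondExp μ F (fun ω => g (X ω)) =ᵐ[μ.restrict A] fun _ => g 0 := by
    have h1 : (fun ω => g (X ω)) =ᵐ[μ.restrict A] (fun _ => g 0) := by
      filter_upwards [extCondExp_zero_set (mΩ := mΩ) hF hXm] with ω hω
      rw [show X ω = 0 from hω]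
    have h2 := extCondExp_restrict_congr (mΩ := mΩ) hF hAF (hgm.comp hXm) measurable_const h1
    rwa [extCondExp_const (mΩ := mΩ) hF] at h2
  have hF3S : extCondExp μ F (fun ω => g (X ω))
      =ᵐ[μ.restrict D] extCondExp μ F (fun ω => g (X' ω)) :=
    extCondExp_restrict_congr (mΩ := mΩ) hF hDF (hgm.comp hXm) (hgm.comp hX')
      (by filter_upwards [hXX'] with ω hω; rw [show X ω = X' ω from hω])
  have hF3E : extCondExp μ F X =ᵐ[μ.restrict D] extCondExp μ F X' :=
    extCondExp_restrict_congr (mΩ := mΩ) hF hDF hXm hX' hXX'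
  have hF4 : ∀ q : ℚ, extCondExp μ F (fun ω => g (X' ω)) ≤ᵐ[μ]
      fun ω => lineC g q + lineM g q * extCondExp μ F X' ω := by
    intro q
    have h1 : extCondExp μ F (fun ω => g (X' ω)) ≤ᵐ[μ]
        extCondExp μ F (fun ω => lineC g q + lineM g q * X' ω) :=
      extCondExp_mono (mΩ := mΩ) hF (hgm.comp hX') ((hX'.const_mul _).const_add _)
        (fun ω => line_dom' hg q (hX'ne ω))
    exact h1.trans (extCondExp_affine (mΩ := mΩ) hF hX' (lineM_ne_top hg q))
  have hF2' := (ae_restrict_iff' hA').mp hF2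
  have hF3S' := (ae_restrict_iff' hD').mp hF3S
  have hF3E' := (ae_restrict_iff' hD').mp hF3E
  filter_upwards [hF1, hF2', hF3S', hF3E', ae_all_iff.mpr hF4] with ω h1 h2 h3 h4 h5
  rcases eq_or_ne (extCondExp μ F X ω) ∞ with htop | hfin
  · rw [htop]
    exact h1
  rcases eq_or_ne (extCondExp μ F X ω) 0 with hzero | hpos
  · rw [hzero]
    exact le_of_eq (h2 hzero)
  · have hmemD : ω ∈ D := hfin
    rw [h3 hmemD]
    calc extCondExp μ F (fun ω => g (X' ω)) ω
        ≤ ⨅ q : ℚ, (lineC g q + lineM g q * extCondExp μ F X' ω) := le_iInf fun q => h5 q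
    _ = ⨅ q : ℚ, (lineC g q + lineM g q * extCondExp μ F X ω) := by rw [← h4 hmemD]
    _ ≤ g (extCondExp μ F X ω) := line_inf_le hg hpos hfin
end

section
/- A [0,∞]-valued adapted process M is an extended nonnegative supermartingale if and only if it is an almost-sure upward (pointwise increasing) limit of a sequence of integrable nonnegative supermartingales adapted to the same filtration. -/
/-
Truncating at level `k` preserves the supermartingale property of `M` (conditional expectation
is monotone and fixes constants), and the truncations increase to `M`. Conversely, the
extended conditional expectation agrees a.e. with the conditional Lebesgue expectation
`μ⁻[X|F]`, so the ENSM inequality is equivalent to `∫⁻_s M (n+1) ≤ ∫⁻_s M n` for all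
`s ∈ 𝒢 n`; this family of inequalities passes to increasing limits by monotone convergence.
-/

open MeasureTheory Filter
open scoped ENNReal NNReal

/-- Extended nonnegative supermartingale: a `[0,∞]`-valued adapted process with
`E[M_n | F_{n-1}] ≤ M_{n-1}` a.s. for all `n ≥ 1`, using the extended conditional
expectation. -/
def IsENSM {Ω : Type*} {mΩ : MeasurableSpace Ω} (μ : Measure Ω)
    (𝒢 : Filtration ℕ mΩ) (M : ℕ → Ω → ℝ≥0∞) : Prop :=
  (∀ n, Measurable[𝒢 n] (M n)) ∧
  ∀ n : ℕ, extCondExp μ (𝒢 n) (M (n + 1)) ≤ᵐ[μ] M n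

namespace ENNReal

theorem min_natCast_ne_top (x : ℝ≥0∞) (m : ℕ) : min x m ≠ ∞ :=
  (min_lt_of_right_lt (natCast_lt_top m)).ne

theorem monotone_min_natCast (x : ℝ≥0∞) : Monotone fun m : ℕ => min x m :=
  fun _ _ h => min_le_min_left x (Nat.cast_le.2 h)

theorem iSup_min_natCast (x : ℝ≥0∞) : ⨆ m : ℕ, min x (m : ℝ≥0∞) = x := by
  rw [← inf_iSup_eq, iSup_natCast, inf_top_eq]

end ENNReal

section ExtCondExp

variable {Ω : Type*} {mΩ : MeasurableSpace Ω} {μ : Measure Ω} {F : MeasurableSpace Ω}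

theorem measurable_extCondExp (X : Ω → ℝ≥0∞) : Measurable[F] (extCondExp μ F X) :=
  Measurable.iSup fun _ => stronglyMeasurable_condExp.measurable.ennreal_ofReal

theorem condLExp_ae_le_iff_forall_setLIntegral_le (hF : F ≤ mΩ) [SigmaFinite (μ.trim hF)]
    {X Y : Ω → ℝ≥0∞} (hY : Measurable[F] Y) :
    μ⁻[X|F] ≤ᵐ[μ] Y ↔ ∀ s, MeasurableSet[F] s → ∫⁻ ω in s, X ω ∂μ ≤ ∫⁻ ω in s, Y ω ∂μ := by
  constructor
  · intro h s hs
    rw [← setLIntegral_condLExp hF μ X hs]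
    exact setLIntegral_mono_ae (hY.mono hF le_rfl).aemeasurable.restrict
      (h.mono fun ω hω _ => hω)
  · intro h
    refine ae_le_of_ae_le_trim (ae_le_of_forall_setLIntegral_le_of_sigmaFinite
      (measurable_condLExp F μ X) fun s hs _ => ?_)
    rw [setLIntegral_condLExp_trim hF μ X hs, setLIntegral_trim hF hY hs]
    exact h s hs

variable [IsFiniteMeasure μ]

theorem integrable_toReal_min_natCast {X : Ω → ℝ≥0∞} (hX : AEMeasurable X μ) (m : ℕ) :
    Integrable (fun ω => (min (X ω) m).toReal) μ := by
  refine Integrable.mono' (integrable_const (m : ℝ))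
    (hX.min aemeasurable_const).ennreal_toReal.aestronglyMeasurable (ae_of_all _ fun ω => ?_)
  rw [Real.norm_of_nonneg ENNReal.toReal_nonneg]
  simpa using ENNReal.toReal_mono (ENNReal.natCast_ne_top m) (min_le_right _ _)

theorem setLIntegral_extCondExp (hF : F ≤ mΩ) {X : Ω → ℝ≥0∞} (hX : AEMeasurable X μ)
    {s : Set Ω} (hs : MeasurableSet[F] s) :
    ∫⁻ ω in s, extCondExp μ F X ω ∂μ = ∫⁻ ω in s, X ω ∂μ := by
  set g : ℕ → Ω → ℝ := fun m => μ[fun ω => (min (X ω) m).toReal | F]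
  have hg_mono : ∀ᵐ ω ∂μ, Monotone fun m => ENNReal.ofReal (g m ω) := by
    have hle : ∀ m : ℕ, g m ≤ᵐ[μ] g (m + 1) := fun m =>
      condExp_mono (integrable_toReal_min_natCast hX m)
        (integrable_toReal_min_natCast hX (m + 1)) (ae_of_all _ fun ω =>
          ENNReal.toReal_mono (ENNReal.min_natCast_ne_top _ _)
            (ENNReal.monotone_min_natCast _ m.le_succ))
    filter_upwards [ae_all_iff.2 hle] with ω hω
    exact monotone_nat_of_le_succ fun m => ENNReal.ofReal_le_ofReal (hω m)
  calc ∫⁻ ω in s, extCondExp μ F X ω ∂μ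
      = ⨆ m : ℕ, ∫⁻ ω in s, ENNReal.ofReal (g m ω) ∂μ :=
        lintegral_iSup' (fun _ => (stronglyMeasurable_condExp.measurable.mono hF le_rfl
          |>.ennreal_ofReal).aemeasurable) (ae_restrict_of_ae hg_mono)
    _ = ⨆ m : ℕ, ∫⁻ ω in s, min (X ω) m ∂μ := by
        congr 1 with m
        have htrunc : (fun ω => ENNReal.ofReal (min (X ω) m).toReal) = fun ω => min (X ω) m :=
          funext fun ω => ENNReal.ofReal_toReal (ENNReal.min_natCast_ne_top _ _)
        conv_rhs => rw [← htrunc, ← setLIntegral_condLExp hF μ _ hs]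
        exact setLIntegral_congr_fun_ae (hF s hs) <|
          (condLExp_ofReal F (integrable_toReal_min_natCast hX m)
            (ae_of_all _ fun _ => ENNReal.toReal_nonneg)).mono fun ω hω _ => hω.symm
    _ = ∫⁻ ω in s, X ω ∂μ := by
        rw [← lintegral_iSup' (fun m => (hX.min aemeasurable_const).restrict)
          (ae_of_all _ fun ω => ENNReal.monotone_min_natCast (X ω))]
        simp only [ENNReal.iSup_min_natCast]

theorem extCondExp_ae_eq_condLExp (hF : F ≤ mΩ) {X : Ω → ℝ≥0∞} (hX : AEMeasurable X μ) :
    extCondExp μ F X =ᵐ[μ] μ⁻[X|F] :=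
  ae_eq_condLExp hF μ X (measurable_extCondExp X) fun _ hs => setLIntegral_extCondExp hF hX hs

end ExtCondExp

section IsENSM

variable {Ω : Type*} {mΩ : MeasurableSpace Ω} {μ : Measure Ω} [IsFiniteMeasure μ]
  {𝒢 : Filtration ℕ mΩ} {M : ℕ → Ω → ℝ≥0∞}

theorem isENSM_iff_forall_condLExp_ae_le (hM : ∀ n, Measurable[𝒢 n] (M n)) :
    IsENSM μ 𝒢 M ↔ ∀ n, μ⁻[M (n + 1)|𝒢 n] ≤ᵐ[μ] M n := by
  refine (and_iff_right hM).trans (forall_congr' fun n => ?_)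
  have hext := extCondExp_ae_eq_condLExp (μ := μ) (𝒢.le n)
    ((hM (n + 1)).mono (𝒢.le (n + 1)) le_rfl).aemeasurable
  exact ⟨fun h => hext.symm.le.trans h, fun h => hext.le.trans h⟩

theorem isENSM_iff_forall_setLIntegral_le (hM : ∀ n, Measurable[𝒢 n] (M n)) :
    IsENSM μ 𝒢 M ↔ ∀ n s, MeasurableSet[𝒢 n] s →
      ∫⁻ ω in s, M (n + 1) ω ∂μ ≤ ∫⁻ ω in s, M n ω ∂μ := by
  rw [isENSM_iff_forall_condLExp_ae_le hM]
  exact forall_congr' fun n => condLExp_ae_le_iff_forall_setLIntegral_le (𝒢.le n) (hM n)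

theorem IsENSM.min_const (hM : IsENSM μ 𝒢 M) (c : ℝ≥0∞) :
    IsENSM μ 𝒢 fun n ω => min (M n ω) c := by
  have hM_condLExp := (isENSM_iff_forall_condLExp_ae_le hM.1).1 hM
  refine (isENSM_iff_forall_condLExp_ae_le fun n => (hM.1 n).min measurable_const).2 fun n => ?_
  have hle_M : μ⁻[fun ω => min (M (n + 1) ω) c|𝒢 n] ≤ᵐ[μ] M n :=
    (condLExp_mono (ae_of_all _ fun ω => min_le_left _ _)).trans (hM_condLExp n)
  have hle_c : μ⁻[fun ω => min (M (n + 1) ω) c|𝒢 n] ≤ᵐ[μ] fun _ => c :=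
    (condLExp_mono (ae_of_all _ fun ω => min_le_right _ _)).trans
      (Eventually.of_forall fun ω => (congrFun (condLExp_const (𝒢.le n) μ c) ω).le)
  filter_upwards [hle_M, hle_c] with ω hω_M hω_c using le_min hω_M hω_c

theorem IsENSM.of_monotone_iSup (hM : ∀ n, Measurable[𝒢 n] (M n))
    {N : ℕ → ℕ → Ω → ℝ≥0∞} (hN : ∀ k, IsENSM μ 𝒢 (N k))
    (hlim : ∀ n, ∀ᵐ ω ∂μ, Monotone (fun k => N k n ω) ∧ (⨆ k, N k n ω) = M n ω) :
    IsENSM μ 𝒢 M := by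
  have hsetLIntegral : ∀ n s, ∫⁻ ω in s, M n ω ∂μ = ⨆ k, ∫⁻ ω in s, N k n ω ∂μ := fun n s => by
    rw [← lintegral_iSup' (fun k => ((hN k).1 n).mono (𝒢.le n) le_rfl |>.aemeasurable)
      (ae_restrict_of_ae ((hlim n).mono fun _ h => h.1))]
    exact lintegral_congr_ae (ae_restrict_of_ae ((hlim n).mono fun _ h => h.2.symm))
  rw [isENSM_iff_forall_setLIntegral_le hM]
  intro n s hs
  rw [hsetLIntegral, hsetLIntegral]
  exact iSup_mono fun k => (isENSM_iff_forall_setLIntegral_le (hN k).1).1 (hN k) n s hs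

end IsENSM

/-- a `[0,∞]`-valued adapted process is an ENSM if and only if it is an
almost-sure upward (pointwise increasing) limit of integrable nonnegative
supermartingales adapted to the same filtration. -/
theorem isENSM_iff_upward_limit_of_integrable_NSMs
    {Ω : Type*} {mΩ : MeasurableSpace Ω} (μ : Measure Ω) [IsProbabilityMeasure μ]
    (𝒢 : Filtration ℕ mΩ) (M : ℕ → Ω → ℝ≥0∞) (hadapted : ∀ n, Measurable[𝒢 n] (M n)) :
    IsENSM μ 𝒢 M ↔
      ∃ N : ℕ → ℕ → Ω → ℝ≥0∞,
        (∀ k, IsENSM μ 𝒢 (N k) ∧ ∀ n, ∫⁻ ω, N k n ω ∂μ ≠ ⊤) ∧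
        ∀ n, ∀ᵐ ω ∂μ, Monotone (fun k => N k n ω) ∧ (⨆ k, N k n ω) = M n ω := by
  constructor
  · intro hM
    refine ⟨fun k n ω => min (M n ω) k, fun k => ⟨hM.min_const k, fun n => ?_⟩, fun n => ?_⟩
    · exact ne_top_of_le_ne_top (lintegral_const_lt_top (ENNReal.natCast_ne_top k)).ne
        (lintegral_mono fun ω => min_le_right _ _)
    · exact ae_of_all _ fun ω =>
        ⟨ENNReal.monotone_min_natCast (M n ω), ENNReal.iSup_min_natCast (M n ω)⟩
  · rintro ⟨N, hN, hlim⟩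
    exact IsENSM.of_monotone_iSup hadapted (fun k => (hN k).1) hlim
end

section
/- Every extended nonnegative supermartingale M converges almost surely (in [0,∞]) to a random variable M_∞ taking values in [0,∞]. -/
/-!
For every level `c ∈ ℕ` the truncation `min M_n c`, read in `ℝ`, is a supermartingale bounded
by `c`: its classical conditional expectation is one of the terms whose supremum defines the
extended one. By Doob's convergence theorem each truncation converges almost surely, and on the
intersection of these countably many events `M` itself converges: either `liminf M = ∞`, or the
truncation at a level `c` above the `liminf` has a limit below `c` and so eventually equals `M`.
-/

open MeasureTheory Filter
open scoped ENNReal NNReal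

open scoped Topology

theorem ENNReal.toReal_min_natCast_le (x : ℝ≥0∞) (c : ℕ) : (min x c).toReal ≤ c :=
  ENNReal.toReal_le_of_le_ofReal c.cast_nonneg (by simp)

theorem ENNReal.min_natCast_ne_top_s9 (x : ℝ≥0∞) (c : ℕ) : min x c ≠ ∞ :=
  ne_top_of_le_ne_top (ENNReal.natCast_ne_top c) (min_le_right _ _)

theorem ENNReal.tendsto_of_forall_tendsto_min_natCast {α : Type*} {f : Filter α} [f.NeBot]
    {u : α → ℝ≥0∞} (h : ∀ c : ℕ, ∃ l, Tendsto (fun a => min (u a) c) f (𝓝 l)) :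
    ∃ l, Tendsto u f (𝓝 l) := by
  rcases eq_or_ne (liminf u f) ∞ with htop | hfin
  · exact ⟨∞, ENNReal.tendsto_nhds_top fun n =>
      eventually_lt_of_lt_liminf (htop ▸ ENNReal.natCast_lt_top n)⟩
  obtain ⟨c, hc⟩ := ENNReal.exists_nat_gt hfin
  obtain ⟨l, hl⟩ := h c
  have hlc : l < c := calc
    l = liminf (fun a => min (u a) c) f := hl.liminf_eq.symm
    _ ≤ liminf u f := liminf_le_liminf (.of_forall fun _ => min_le_left _ _)
    _ < c := hc
  refine ⟨l, hl.congr' ?_⟩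
  filter_upwards [hl.eventually_lt_const hlc] with a ha
  exact min_eq_left (min_lt_iff.mp ha |>.resolve_right (lt_irrefl _)).le

theorem MeasureTheory.Supermartingale.exists_ae_tendsto_of_bdd {Ω : Type*} {m0 : MeasurableSpace Ω}
    {μ : Measure Ω} [IsFiniteMeasure μ] {ℱ : Filtration ℕ m0} {f : ℕ → Ω → ℝ} {R : ℝ≥0}
    (hf : Supermartingale f ℱ μ) (hbdd : ∀ n, eLpNorm (f n) 1 μ ≤ R) :
    ∀ᵐ ω ∂μ, ∃ c, Tendsto (fun n => f n ω) atTop (𝓝 c) := by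
  filter_upwards [hf.neg.exists_ae_tendsto_of_bdd (R := R) fun n => by simpa using hbdd n]
    with ω ⟨c, hc⟩
  exact ⟨-c, by simpa using hc.neg⟩

section ENSM

variable {Ω : Type*} {mΩ : MeasurableSpace Ω} {μ : Measure Ω}

theorem ofReal_condExp_toReal_min_le_extCondExp (F : MeasurableSpace Ω) (X : Ω → ℝ≥0∞) (c : ℕ)
    (ω : Ω) :
    ENNReal.ofReal (μ[fun ω' => (min (X ω') c).toReal | F] ω) ≤ extCondExp μ F X ω :=
  le_iSup (fun k : ℕ => ENNReal.ofReal (μ[fun ω' => (min (X ω') k).toReal | F] ω)) c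

theorem condExp_toReal_min_le_of_extCondExp_le {F : MeasurableSpace Ω} {X Y : Ω → ℝ≥0∞}
    (hXY : extCondExp μ F X ≤ᵐ[μ] Y) (c : ℕ) :
    μ[fun ω => (min (X ω) c).toReal | F] ≤ᵐ[μ] fun ω => (min (Y ω) c).toReal := by
  filter_upwards [condExp_nonneg (m := F) (μ := μ) (.of_forall fun ω => ENNReal.toReal_nonneg),
    condExp_le_nonneg_const (m := F) (μ := μ) c.cast_nonneg
      (.of_forall fun ω => ENNReal.toReal_min_natCast_le (X ω) c), hXY] with ω h0 hc hY
  rw [← ENNReal.toReal_ofReal h0]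
  refine ENNReal.toReal_mono (ENNReal.min_natCast_ne_top_s9 _ _) (le_min ?_ ?_)
  · exact (ofReal_condExp_toReal_min_le_extCondExp F X c ω).trans hY
  · simpa using ENNReal.ofReal_le_ofReal hc

variable [IsFiniteMeasure μ] {𝒢 : Filtration ℕ mΩ} {M : ℕ → Ω → ℝ≥0∞}

theorem IsENSM.supermartingale_toReal_min (hM : IsENSM μ 𝒢 M) (c : ℕ) :
    Supermartingale (fun n ω => (min (M n ω) c).toReal) 𝒢 μ := by
  have hadapted : StronglyAdapted 𝒢 fun n ω => (min (M n ω) c).toReal := fun n =>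
    ((hM.1 n).min measurable_const).ennreal_toReal.stronglyMeasurable
  refine supermartingale_nat hadapted (fun n => ?_)
    (fun n => condExp_toReal_min_le_of_extCondExp_le (hM.2 n) c)
  refine .of_bound ((hadapted n).mono (𝒢.le n)).aestronglyMeasurable c (.of_forall fun ω => ?_)
  rw [Real.norm_of_nonneg ENNReal.toReal_nonneg]
  exact ENNReal.toReal_min_natCast_le _ c

theorem IsENSM.ae_tendsto_min (hM : IsENSM μ 𝒢 M) (c : ℕ) :
    ∀ᵐ ω ∂μ, ∃ l, Tendsto (fun n => min (M n ω) c) atTop (𝓝 l) := by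
  have hbdd (n : ℕ) :
      eLpNorm (fun ω => (min (M n ω) c).toReal) 1 μ ≤ ((μ Set.univ).toNNReal * c : ℝ≥0) := by
    refine (eLpNorm_le_of_ae_bound (C := c) (.of_forall fun ω => ?_)).trans
      (by simp [ENNReal.coe_toNNReal (measure_ne_top μ _)])
    rw [Real.norm_of_nonneg ENNReal.toReal_nonneg]
    exact ENNReal.toReal_min_natCast_le _ c
  filter_upwards [(hM.supermartingale_toReal_min c).exists_ae_tendsto_of_bdd hbdd]
    with ω ⟨l, hl⟩
  refine ⟨ENNReal.ofReal l, ?_⟩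
  simpa only [Function.comp_def, ENNReal.ofReal_toReal (ENNReal.min_natCast_ne_top_s9 _ _)]
    using (ENNReal.continuous_ofReal.tendsto l).comp hl

end ENSM

/-- every extended nonnegative supermartingale converges almost surely
in `[0,∞]` to some limit. -/
theorem isENSM_ae_tendsto
    {Ω : Type*} {mΩ : MeasurableSpace Ω} (μ : Measure Ω) [IsProbabilityMeasure μ]
    (𝒢 : Filtration ℕ mΩ) (M : ℕ → Ω → ℝ≥0∞) (hM : IsENSM μ 𝒢 M) :
    ∀ᵐ ω ∂μ, ∃ l : ℝ≥0∞, Tendsto (fun n => M n ω) atTop (nhds l) := by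
  filter_upwards [ae_all_iff.mpr hM.ae_tendsto_min] with ω hω
  exact ENNReal.tendsto_of_forall_tendsto_min_natCast hω
end

section
/- Optional sampling for extended nonnegative supermartingales: if M is an extended nonnegative supermartingale and ν₁ ≤ ν₂ are stopping times (possibly infinite, with M_∞ defined as the a.s. limit of M), then E[M_{ν₂}|F_{ν₁}] ≤ M_{ν₁} almost surely. -/
open MeasureTheory Filter
open scoped ENNReal NNReal

/-- A (possibly infinite) stopping time for a discrete-time filtration:
`{τ ≤ n} ∈ F_n` for every `n`. -/
def IsExtStoppingTime {Ω : Type*} {mΩ : MeasurableSpace Ω}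
    (𝒢 : Filtration ℕ mΩ) (τ : Ω → ℕ∞) : Prop :=
  ∀ n : ℕ, MeasurableSet[𝒢 n] {ω | τ ω ≤ (n : ℕ∞)}

/-- The stopped process `M^τ = {M_{n ∧ τ}}`. -/
noncomputable def extStopped {Ω : Type*} (M : ℕ → Ω → ℝ≥0∞) (τ : Ω → ℕ∞) :
    ℕ → Ω → ℝ≥0∞ :=
  fun n ω => M ((min (n : ℕ∞) (τ ω)).toNat) ω

/-- The value `M_τ` of the process at a possibly infinite stopping time, using the
limit value `Minf` where `τ = ∞`. -/
noncomputable def extStoppedValue {Ω : Type*} (M : ℕ → Ω → ℝ≥0∞) (Minf : Ω → ℝ≥0∞)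
    (τ : Ω → ℕ∞) : Ω → ℝ≥0∞ :=
  fun ω => if τ ω = ⊤ then Minf ω else M ((τ ω).toNat) ω

/-- The σ-algebra of the `τ`-past: generated by the sets `A` with
`A ∩ {τ ≤ n} ∈ F_n` for all `n` (for a stopping time `τ` this collection is itself a
σ-algebra, so generation does not enlarge it). -/
def pastSigma {Ω : Type*} {mΩ : MeasurableSpace Ω} (𝒢 : Filtration ℕ mΩ)
    (τ : Ω → ℕ∞) : MeasurableSpace Ω :=
  MeasurableSpace.generateFrom
    {A : Set Ω | ∀ n : ℕ, MeasurableSet[𝒢 n] (A ∩ {ω | τ ω ≤ (n : ℕ∞)})}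

section Aux

variable {Ω : Type*} {mΩ : MeasurableSpace Ω} {𝒢 : Filtration ℕ mΩ} {ν : Ω → ℕ∞}

/-- The collection defining `pastSigma` is itself a σ-algebra. -/
def pastSigmaAux (𝒢 : Filtration ℕ mΩ) (ν : Ω → ℕ∞) (hν : IsExtStoppingTime 𝒢 ν) :
    MeasurableSpace Ω where
  MeasurableSet' A := ∀ n : ℕ, MeasurableSet[𝒢 n] (A ∩ {ω | ν ω ≤ (n : ℕ∞)})
  measurableSet_empty := fun n => by
    simpa using (MeasurableSet.empty : MeasurableSet[𝒢 n] ∅)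
  measurableSet_compl := fun A hA n => by
    have h : Aᶜ ∩ {ω | ν ω ≤ (n : ℕ∞)} =
        {ω | ν ω ≤ (n : ℕ∞)} \ (A ∩ {ω | ν ω ≤ (n : ℕ∞)}) := by
      ext ω; simp only [Set.mem_inter_iff, Set.mem_compl_iff, Set.mem_diff, Set.mem_setOf_eq]
      tauto
    rw [h]; exact (hν n).diff (hA n)
  measurableSet_iUnion := fun f hf n => by
    rw [Set.iUnion_inter]; exact MeasurableSet.iUnion fun i => hf i n

lemma pastSigma_iff (hν : IsExtStoppingTime 𝒢 ν) {A : Set Ω} :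
    MeasurableSet[pastSigma 𝒢 ν] A ↔
      ∀ n : ℕ, MeasurableSet[𝒢 n] (A ∩ {ω | ν ω ≤ (n : ℕ∞)}) := by
  constructor
  · intro h
    exact (MeasurableSpace.generateFrom_le (m := pastSigmaAux 𝒢 ν hν)
      (fun t ht => ht)) _ h
  · exact fun h => MeasurableSpace.measurableSet_generateFrom h

lemma stop_eq_mem (hν : IsExtStoppingTime 𝒢 ν) (k : ℕ) :
    MeasurableSet[𝒢 k] {ω | ν ω = (k : ℕ∞)} := by
  cases k with
  | zero =>
      have h : {ω | ν ω = ((0 : ℕ) : ℕ∞)} = {ω | ν ω ≤ ((0 : ℕ) : ℕ∞)} := by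
        ext ω; simp [le_zero_iff]
      rw [h]; exact hν 0
  | succ k =>
      have h : {ω | ν ω = ((k + 1 : ℕ) : ℕ∞)} =
          {ω | ν ω ≤ ((k + 1 : ℕ) : ℕ∞)} \ {ω | ν ω ≤ (k : ℕ∞)} := by
        ext ω
        simp only [Set.mem_setOf_eq, Set.mem_diff]
        constructor
        · intro h; refine ⟨le_of_eq h, ?_⟩
          rw [h]; exact_mod_cast Nat.not_succ_le_self k
        · rintro ⟨h1, h2⟩
          refine le_antisymm h1 ?_
          have hk : (k : ℕ∞) < ν ω := lt_of_not_ge h2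
          rw [Nat.cast_add, Nat.cast_one]
          exact (ENat.add_one_le_iff (by simp)).mpr hk
      rw [h]
      exact (hν (k + 1)).diff (𝒢.mono (Nat.le_succ k) _ (hν k))

lemma stop_top_meas (hν : IsExtStoppingTime 𝒢 ν) :
    MeasurableSet {ω | ν ω = ⊤} := by
  have h : {ω | ν ω = ⊤} = (⋃ n : ℕ, {ω | ν ω ≤ (n : ℕ∞)})ᶜ := by
    ext ω
    simp only [Set.mem_setOf_eq, Set.mem_compl_iff, Set.mem_iUnion, not_exists]
    constructor
    · rintro h n hn; rw [h] at hn; exact ((by simp : (n:ℕ∞) ≠ ⊤)) (top_le_iff.mp hn)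
    · intro h
      by_contra hne
      obtain ⟨m, hm⟩ := WithTop.ne_top_iff_exists.mp hne
      exact h m (le_of_eq hm.symm)
  rw [h]
  exact (MeasurableSet.iUnion fun n => 𝒢.le n _ (hν n)).compl

lemma IsExtStoppingTime.measurable_nu (hν : IsExtStoppingTime 𝒢 ν) : Measurable ν := by
  apply measurable_to_countable'
  intro y
  induction y using ENat.recTopCoe with
  | top =>
      have : ν ⁻¹' {⊤} = {ω | ν ω = ⊤} := by ext ω; simp
      rw [this]; exact stop_top_meas hν
  | coe n =>
      have : ν ⁻¹' {(n : ℕ∞)} = {ω | ν ω = (n : ℕ∞)} := by ext ω; simp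
      rw [this]; exact 𝒢.le n _ (stop_eq_mem hν n)

end Aux

section Aux2

variable {Ω : Type*} {mΩ : MeasurableSpace Ω} {𝒢 : Filtration ℕ mΩ} {ν : Ω → ℕ∞}

/-- Truncation of a possibly infinite stopping time at time `m`. -/
noncomputable def hitTrunc (ν : Ω → ℕ∞) (m : ℕ) (ω : Ω) : ℕ :=
  (min (m : ℕ∞) (ν ω)).toNat

lemma hitTrunc_of_le {m : ℕ} {ω : Ω} (h : ν ω ≤ (m : ℕ∞)) :
    (hitTrunc ν m ω : ℕ∞) = ν ω := by
  have hne : ν ω ≠ ⊤ := ne_top_of_le_ne_top (by simp) h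
  rw [hitTrunc, min_eq_right h, ENat.coe_toNat hne]

lemma hitTrunc_of_not_le {m : ℕ} {ω : Ω} (h : ¬ ν ω ≤ (m : ℕ∞)) :
    hitTrunc ν m ω = m := by
  rw [hitTrunc, min_eq_left (le_of_lt (lt_of_not_ge h)), ENat.toNat_coe]

lemma hitTrunc_measurable (hν : IsExtStoppingTime 𝒢 ν) (m : ℕ) :
    Measurable (hitTrunc ν m) := by
  have h1 : Measurable (fun x : ℕ∞ => (min (m : ℕ∞) x).toNat) := Measurable.of_discrete
  exact h1.comp hν.measurable_nu

/-- Telescoping identity for a stopped sequence between two ordered (extended) times. -/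
lemma tele_sum (f : ℕ → ℝ) {a b : ℕ∞} (hab : a ≤ b) (m : ℕ) :
    f ((min (m : ℕ∞) b).toNat) = f ((min (m : ℕ∞) a).toNat) +
      ∑ k ∈ Finset.range m,
        (if a ≤ (k : ℕ∞) ∧ ¬ b ≤ (k : ℕ∞) then f (k + 1) - f k else 0) := by
  induction m with
  | zero => simp
  | succ m ih =>
      rw [Finset.sum_range_succ]
      by_cases hbm : b ≤ (m : ℕ∞)
      · have ham : a ≤ (m : ℕ∞) := hab.trans hbm
        have h1 : min ((m + 1 : ℕ) : ℕ∞) b = min (m : ℕ∞) b := by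
          rw [min_eq_right hbm, min_eq_right (hbm.trans (by exact_mod_cast Nat.le_succ m))]
        have h2 : min ((m + 1 : ℕ) : ℕ∞) a = min (m : ℕ∞) a := by
          rw [min_eq_right ham, min_eq_right (ham.trans (by exact_mod_cast Nat.le_succ m))]
        rw [h1, h2, if_neg (by tauto), add_zero]
        exact ih
      · have hmb : (m : ℕ∞) < b := lt_of_not_ge hbm
        have hm1b : ((m + 1 : ℕ) : ℕ∞) ≤ b := by
          rw [Nat.cast_add, Nat.cast_one]
          exact (ENat.add_one_le_iff (by simp)).mpr hmb
        have h1 : (min ((m + 1 : ℕ) : ℕ∞) b).toNat = m + 1 := by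
          rw [min_eq_left hm1b, ENat.toNat_coe]
        have h2 : (min (m : ℕ∞) b).toNat = m := by
          rw [min_eq_left hmb.le, ENat.toNat_coe]
        by_cases ham : a ≤ (m : ℕ∞)
        · have h3 : min ((m + 1 : ℕ) : ℕ∞) a = min (m : ℕ∞) a := by
            rw [min_eq_right ham, min_eq_right (ham.trans (by exact_mod_cast Nat.le_succ m))]
          rw [h1, h3, if_pos ⟨ham, hbm⟩]
          rw [h2] at ih
          rw [ih]; ring
        · have hma : ((m + 1 : ℕ) : ℕ∞) ≤ a := by
            rw [Nat.cast_add, Nat.cast_one]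
            exact (ENat.add_one_le_iff (by simp)).mpr (lt_of_not_ge ham)
          have h4 : (min ((m + 1 : ℕ) : ℕ∞) a).toNat = m + 1 := by
            rw [min_eq_left hma, ENat.toNat_coe]
          have h5 : (min (m : ℕ∞) a).toNat = m := by
            rw [min_eq_left (lt_of_not_ge ham).le, ENat.toNat_coe]
          rw [h2, h5] at ih
          rw [h1, h4, if_neg (by tauto), add_zero]
          linarith [ih]

end Aux2

section Aux3

variable {Ω : Type*} {mΩ : MeasurableSpace Ω} {μ : Measure Ω} {𝒢 : Filtration ℕ mΩ}
  {M : ℕ → Ω → ℝ≥0∞}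

/-- Real-valued truncated process. -/
noncomputable def truncProc (M : ℕ → Ω → ℝ≥0∞) (c k : ℕ) (ω : Ω) : ℝ :=
  (min (M k ω) (c : ℝ≥0∞)).toReal

lemma truncProc_nonneg (c k : ℕ) (ω : Ω) : 0 ≤ truncProc M c k ω :=
  ENNReal.toReal_nonneg

lemma truncProc_le (c k : ℕ) (ω : Ω) : truncProc M c k ω ≤ (c : ℝ) := by
  have := ENNReal.toReal_mono (a := min (M k ω) (c : ℝ≥0∞)) (b := (c : ℝ≥0∞))
    (by simp) (min_le_right _ _)
  simpa [ENNReal.toReal_natCast, truncProc] using this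

lemma truncProc_measurable (hM1 : ∀ n, Measurable[𝒢 n] (M n)) (c k : ℕ) :
    Measurable[𝒢 k] (truncProc M c k) :=
  ENNReal.measurable_toReal.comp ((hM1 k).min measurable_const)

lemma integrable_of_bdd [IsFiniteMeasure μ] {f : Ω → ℝ} (hf : AEStronglyMeasurable f μ)
    {C : ℝ} (h0 : ∀ ω, 0 ≤ f ω) (hC : ∀ ω, f ω ≤ C) : Integrable f μ :=
  ⟨hf, HasFiniteIntegral.of_bounded (C := C) (ae_of_all _ fun ω => by
    rw [Real.norm_eq_abs, abs_of_nonneg (h0 ω)]; exact hC ω)⟩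

lemma truncProc_integrable [IsProbabilityMeasure μ]
    (hM1 : ∀ n, Measurable[𝒢 n] (M n)) (c k : ℕ) : Integrable (truncProc M c k) μ :=
  integrable_of_bdd (((truncProc_measurable hM1 c k).mono (𝒢.le k)
    le_rfl).aestronglyMeasurable) (truncProc_nonneg c k) (truncProc_le c k)

/-- The truncated process is a (real) supermartingale. -/
lemma truncProc_supermart [IsProbabilityMeasure μ] (hM : IsENSM μ 𝒢 M) (c k : ℕ) :
    μ[truncProc M c (k + 1) | 𝒢 k] ≤ᵐ[μ] truncProc M c k := by
  have h1 : ∀ᵐ ω ∂μ,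
      ENNReal.ofReal ((μ[truncProc M c (k + 1) | 𝒢 k]) ω) ≤ M k ω := by
    filter_upwards [hM.2 k] with ω hω
    exact le_trans (le_iSup (fun n : ℕ => ENNReal.ofReal
      ((μ[fun ω' => (min (M (k+1) ω') n).toReal | 𝒢 k]) ω)) c) hω
  have h2 : μ[truncProc M c (k + 1) | 𝒢 k] ≤ᵐ[μ] fun _ => (c : ℝ) := by
    have := condExp_mono (m := 𝒢 k) (truncProc_integrable hM.1 c (k+1))
      (integrable_const (μ := μ) (c : ℝ)) (ae_of_all _ (truncProc_le c (k+1)))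
    have hcc : μ[(fun _ => (c : ℝ)) | 𝒢 k] = fun _ => (c : ℝ) :=
      condExp_const (𝒢.le k) (c : ℝ)
    filter_upwards [this] with ω hω
    calc (μ[truncProc M c (k + 1)|𝒢 k]) ω ≤ (μ[(fun _ => (c:ℝ))|𝒢 k]) ω := hω
    _ = (c : ℝ) := congrFun hcc ω
  have h3 : 0 ≤ᵐ[μ] μ[truncProc M c (k + 1) | 𝒢 k] :=
    condExp_nonneg (ae_of_all _ (truncProc_nonneg c (k+1)))
  filter_upwards [h1, h2, h3] with ω hω1 hω2 hω3
  have hofr : ENNReal.ofReal ((μ[truncProc M c (k + 1) | 𝒢 k]) ω) ≤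
      min (M k ω) (c : ℝ≥0∞) := by
    refine le_min hω1 ?_
    calc ENNReal.ofReal ((μ[truncProc M c (k + 1) | 𝒢 k]) ω)
        ≤ ENNReal.ofReal (c : ℝ) := ENNReal.ofReal_le_ofReal hω2
      _ = (c : ℝ≥0∞) := ENNReal.ofReal_natCast c
  have := ENNReal.toReal_mono (ne_top_of_le_ne_top (by simp) (min_le_right (M k ω) _)) hofr
  rwa [ENNReal.toReal_ofReal hω3] at this

end Aux3

section Aux4

variable {Ω : Type*} {mΩ : MeasurableSpace Ω} {μ : Measure Ω} {𝒢 : Filtration ℕ mΩ}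
  {M : ℕ → Ω → ℝ≥0∞} {Minf : Ω → ℝ≥0∞} {ν ν₁ ν₂ : Ω → ℕ∞}

lemma stopped_measurable (hM1 : ∀ n, Measurable[𝒢 n] (M n))
    (hν : IsExtStoppingTime 𝒢 ν) (c m : ℕ) :
    Measurable (fun ω => truncProc M c (hitTrunc ν m ω) ω) := by
  have h : (fun ω => truncProc M c (hitTrunc ν m ω) ω) =
      fun ω => (fun p : Ω × ℕ => truncProc M c p.2 p.1) (ω, hitTrunc ν m ω) := rfl
  rw [h]
  have h2 : Measurable (fun p : Ω × ℕ => truncProc M c p.2 p.1) :=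
    measurable_from_prod_countable_left fun k =>
      ((truncProc_measurable hM1 c k).mono (𝒢.le k) le_rfl)
  exact h2.comp (measurable_id.prodMk (hitTrunc_measurable hν m))

lemma stopped_integrable [IsProbabilityMeasure μ] (hM1 : ∀ n, Measurable[𝒢 n] (M n))
    (hν : IsExtStoppingTime 𝒢 ν) (c m : ℕ) :
    Integrable (fun ω => truncProc M c (hitTrunc ν m ω) ω) μ :=
  integrable_of_bdd (stopped_measurable hM1 hν c m).aestronglyMeasurable
    (fun ω => truncProc_nonneg c _ ω) (fun ω => truncProc_le c _ ω)

/-- Step A: set-integral comparison of stopped processes at bounded horizons. -/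
lemma stepA [IsProbabilityMeasure μ] (hM : IsENSM μ 𝒢 M)
    (hν₁ : IsExtStoppingTime 𝒢 ν₁) (hν₂ : IsExtStoppingTime 𝒢 ν₂)
    (hle : ∀ ω, ν₁ ω ≤ ν₂ ω) (c m : ℕ) {A : Set Ω}
    (hA : ∀ n : ℕ, MeasurableSet[𝒢 n] (A ∩ {ω | ν₁ ω ≤ (n : ℕ∞)})) :
    ∫ ω in A, truncProc M c (hitTrunc ν₂ m ω) ω ∂μ ≤
      ∫ ω in A, truncProc M c (hitTrunc ν₁ m ω) ω ∂μ := by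
  classical
  set g : ℕ → Ω → ℝ := fun k ω =>
    if ν₁ ω ≤ (k : ℕ∞) ∧ ¬ ν₂ ω ≤ (k : ℕ∞) then
      truncProc M c (k + 1) ω - truncProc M c k ω else 0 with hg
  have hident : ∀ ω, truncProc M c (hitTrunc ν₂ m ω) ω =
      truncProc M c (hitTrunc ν₁ m ω) ω + ∑ k ∈ Finset.range m, g k ω := by
    intro ω
    exact tele_sum (fun j => truncProc M c j ω) (hle ω) m
  have hBmeas : ∀ k : ℕ, MeasurableSet[𝒢 k]
      ({ω | ν₁ ω ≤ (k : ℕ∞)} ∩ {ω | ν₂ ω ≤ (k : ℕ∞)}ᶜ) :=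
    fun k => (hν₁ k).inter (hν₂ k).compl
  have hgind : ∀ k, g k = Set.indicator
      ({ω | ν₁ ω ≤ (k : ℕ∞)} ∩ {ω | ν₂ ω ≤ (k : ℕ∞)}ᶜ)
      (fun ω => truncProc M c (k + 1) ω - truncProc M c k ω) := by
    intro k; ext ω
    rw [hg, Set.indicator_apply]
    simp only [Set.mem_inter_iff, Set.mem_compl_iff, Set.mem_setOf_eq]
  have hgmeas : ∀ k, Measurable (g k) := by
    intro k
    rw [hgind k]
    exact (((truncProc_measurable hM.1 c (k+1)).mono (𝒢.le (k+1)) le_rfl).sub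
      ((truncProc_measurable hM.1 c k).mono (𝒢.le k) le_rfl)).indicator
      (𝒢.le k _ (hBmeas k))
  have hgint : ∀ k, Integrable (g k) μ := by
    intro k
    rw [hgind k]
    exact (((truncProc_integrable hM.1 c (k+1)).sub
      (truncProc_integrable hM.1 c k))).indicator (𝒢.le k _ (hBmeas k))
  have hgle : ∀ k, ∫ ω in A, g k ω ∂μ ≤ 0 := by
    intro k
    set C := A ∩ ({ω | ν₁ ω ≤ (k : ℕ∞)} ∩ {ω | ν₂ ω ≤ (k : ℕ∞)}ᶜ) with hC
    have hCk : MeasurableSet[𝒢 k] C := by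
      have : C = (A ∩ {ω | ν₁ ω ≤ (k : ℕ∞)}) ∩ {ω | ν₂ ω ≤ (k : ℕ∞)}ᶜ := by
        rw [hC]; ext ω; simp only [Set.mem_inter_iff, Set.mem_compl_iff]; tauto
      rw [this]
      exact (hA k).inter (hν₂ k).compl
    have h1 : ∫ ω in A, g k ω ∂μ =
        ∫ ω in C, (truncProc M c (k + 1) ω - truncProc M c k ω) ∂μ := by
      rw [hgind k]
      exact setIntegral_indicator (𝒢.le k _ (hBmeas k))
    rw [h1]
    have h2 : ∫ ω in C, (truncProc M c (k + 1) ω - truncProc M c k ω) ∂μ =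
        ∫ ω in C, truncProc M c (k + 1) ω ∂μ - ∫ ω in C, truncProc M c k ω ∂μ :=
      integral_sub ((truncProc_integrable hM.1 c (k+1)).restrict)
        ((truncProc_integrable hM.1 c k).restrict)
    rw [h2, sub_nonpos]
    rw [← setIntegral_condExp (𝒢.le k) (truncProc_integrable hM.1 c (k+1)) hCk]
    exact integral_mono_ae integrable_condExp.restrict
      (truncProc_integrable hM.1 c k).restrict
      (ae_restrict_of_ae (truncProc_supermart hM c k))
  calc ∫ ω in A, truncProc M c (hitTrunc ν₂ m ω) ω ∂μ
      = ∫ ω in A, (truncProc M c (hitTrunc ν₁ m ω) ω + ∑ k ∈ Finset.range m, g k ω) ∂μ := by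
        apply integral_congr_ae
        exact ae_of_all _ fun ω => hident ω
    _ = ∫ ω in A, truncProc M c (hitTrunc ν₁ m ω) ω ∂μ +
          ∑ k ∈ Finset.range m, ∫ ω in A, g k ω ∂μ := by
        rw [integral_add ((stopped_integrable hM.1 hν₁ c m).restrict)
          (integrable_finset_sum _ (fun k _ => (hgint k).restrict))]
        rw [integral_finset_sum _ (fun k _ => (hgint k).restrict)]
    _ ≤ ∫ ω in A, truncProc M c (hitTrunc ν₁ m ω) ω ∂μ := by
        have : ∑ k ∈ Finset.range m, ∫ ω in A, g k ω ∂μ ≤ 0 :=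
          Finset.sum_nonpos fun k _ => hgle k
        linarith

/-- Step B: convergence of the stopped set-integrals to the stopped value. -/
lemma stepB [IsProbabilityMeasure μ] (hM1 : ∀ n, Measurable[𝒢 n] (M n))
    (hν : IsExtStoppingTime 𝒢 ν)
    (hMinf : ∀ᵐ ω ∂μ, Tendsto (fun n => M n ω) atTop (nhds (Minf ω))) (c : ℕ)
    {A : Set Ω} (hAm : MeasurableSet A) :
    Tendsto (fun m => ∫ ω in A, truncProc M c (hitTrunc ν m ω) ω ∂μ) atTop
      (nhds (∫ ω in A, (min (extStoppedValue M Minf ν ω) (c : ℝ≥0∞)).toReal ∂μ)) := by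
  apply tendsto_integral_of_dominated_convergence (bound := fun _ => (c : ℝ))
  · exact fun m => (stopped_measurable hM1 hν c m).aestronglyMeasurable.restrict
  · exact integrable_const _
  · intro m
    refine ae_of_all _ fun ω => ?_
    rw [Real.norm_eq_abs, abs_of_nonneg (truncProc_nonneg c _ ω)]
    exact truncProc_le c _ ω
  · apply ae_restrict_of_ae
    filter_upwards [hMinf] with ω hω
    by_cases htop : ν ω = ⊤
    · have heq : ∀ m : ℕ, hitTrunc ν m ω = m := by
        intro m
        apply hitTrunc_of_not_le
        rw [htop]; simp
      have hSV : extStoppedValue M Minf ν ω = Minf ω := by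
        rw [extStoppedValue, if_pos htop]
      simp only [heq, hSV, truncProc]
      have h1 : Tendsto (fun m => min (M m ω) (c : ℝ≥0∞)) atTop
          (nhds (min (Minf ω) (c : ℝ≥0∞))) := hω.min tendsto_const_nhds
      exact (ENNReal.tendsto_toReal
        (ne_top_of_le_ne_top (by simp) (min_le_right _ _))).comp h1
    · set j : ℕ := (ν ω).toNat with hjdef
      have hj : (j : ℕ∞) = ν ω := ENat.coe_toNat htop
      have hSV : (min (extStoppedValue M Minf ν ω) (c : ℝ≥0∞)).toReal =
          truncProc M c j ω := by
        rw [extStoppedValue, if_neg htop, truncProc]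
      rw [hSV]
      have heq : ∀ᶠ m in atTop, truncProc M c (hitTrunc ν m ω) ω = truncProc M c j ω := by
        filter_upwards [eventually_ge_atTop j] with m hm
        have h1 : ν ω ≤ (m : ℕ∞) := by rw [← hj]; exact_mod_cast hm
        have h2 : (hitTrunc ν m ω : ℕ∞) = (j : ℕ∞) := by rw [hitTrunc_of_le h1, hj]
        have h3 : hitTrunc ν m ω = j := by exact_mod_cast h2
        rw [h3]
      exact Tendsto.congr' (heq.mono fun m h => h.symm) tendsto_const_nhds

end Aux4

section Aux5

variable {Ω : Type*} {mΩ : MeasurableSpace Ω} {μ : Measure Ω} {𝒢 : Filtration ℕ mΩ}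
  {M : ℕ → Ω → ℝ≥0∞} {Minf : Ω → ℝ≥0∞} {ν : Ω → ℕ∞}

lemma sv_preimage_decomp (M : ℕ → Ω → ℝ≥0∞) (Minf : Ω → ℝ≥0∞) (ν : Ω → ℕ∞)
    (B : Set ℝ≥0∞) :
    extStoppedValue M Minf ν ⁻¹' B =
      ((Minf ⁻¹' B) ∩ {ω | ν ω = ⊤}) ∪
        ⋃ n : ℕ, (M n ⁻¹' B ∩ {ω | ν ω = (n : ℕ∞)}) := by
  ext ω
  simp only [Set.mem_preimage, Set.mem_union, Set.mem_inter_iff, Set.mem_iUnion,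
    Set.mem_setOf_eq]
  by_cases htop : ν ω = ⊤
  · have hSV : extStoppedValue M Minf ν ω = Minf ω := by
      rw [extStoppedValue, if_pos htop]
    rw [hSV]
    constructor
    · intro h; exact Or.inl ⟨h, htop⟩
    · rintro (⟨h, -⟩ | ⟨n, -, hn⟩)
      · exact h
      · exact absurd (htop ▸ hn) (by simp)
  · set j : ℕ := (ν ω).toNat with hjdef
    have hj : (j : ℕ∞) = ν ω := ENat.coe_toNat htop
    have hSV : extStoppedValue M Minf ν ω = M j ω := by
      rw [extStoppedValue, if_neg htop]
    rw [hSV]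
    constructor
    · intro h; exact Or.inr ⟨j, h, hj.symm⟩
    · rintro (⟨-, h⟩ | ⟨n, hn, hn'⟩)
      · exact absurd h htop
      · have : n = j := by
          have : (n : ℕ∞) = (j : ℕ∞) := by rw [hj, hn']
          exact_mod_cast this
        rwa [this] at hn

/-- `M_ν` is measurable w.r.t. the σ-algebra of the ν-past (no assumption on `Minf`). -/
lemma sv_measurable_past (hM1 : ∀ n, Measurable[𝒢 n] (M n))
    (hν : IsExtStoppingTime 𝒢 ν) (Minf : Ω → ℝ≥0∞) :
    Measurable[pastSigma 𝒢 ν] (extStoppedValue M Minf ν) := by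
  intro B hB
  rw [sv_preimage_decomp]
  have hTsub : ∀ D : Set Ω, D ⊆ {ω | ν ω = ⊤} → MeasurableSet[pastSigma 𝒢 ν] D := by
    intro D hD
    rw [pastSigma_iff hν]
    intro n
    have : D ∩ {ω | ν ω ≤ (n : ℕ∞)} = ∅ := by
      ext ω
      simp only [Set.mem_inter_iff, Set.mem_setOf_eq, Set.mem_empty_iff_false, iff_false,
        not_and]
      intro hωD hle
      have := hD hωD
      simp only [Set.mem_setOf_eq] at this
      rw [this] at hle
      exact absurd (top_le_iff.mp hle) (by simp)
    rw [this]
    exact @MeasurableSet.empty Ω (𝒢 n)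
  have hEn : ∀ n : ℕ, MeasurableSet[pastSigma 𝒢 ν] (M n ⁻¹' B ∩ {ω | ν ω = (n : ℕ∞)}) := by
    intro n
    rw [pastSigma_iff hν]
    intro m
    rcases le_or_gt n m with hnm | hmn
    · have h : M n ⁻¹' B ∩ {ω | ν ω = (n : ℕ∞)} ∩ {ω | ν ω ≤ (m : ℕ∞)} =
          M n ⁻¹' B ∩ {ω | ν ω = (n : ℕ∞)} := by
        ext ω
        simp only [Set.mem_inter_iff, Set.mem_setOf_eq]
        constructor
        · tauto
        · rintro ⟨h1, h2⟩
          exact ⟨⟨h1, h2⟩, by rw [h2]; exact_mod_cast hnm⟩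
      rw [h]
      exact 𝒢.mono hnm _ (((hM1 n) hB).inter (stop_eq_mem hν n))
    · have h : M n ⁻¹' B ∩ {ω | ν ω = (n : ℕ∞)} ∩ {ω | ν ω ≤ (m : ℕ∞)} = ∅ := by
        ext ω
        simp only [Set.mem_inter_iff, Set.mem_setOf_eq, Set.mem_empty_iff_false, iff_false,
          not_and]
        rintro ⟨-, h2⟩ hle
        rw [h2] at hle
        exact absurd (by exact_mod_cast hle : n ≤ m) (not_le.mpr hmn)
      rw [h]
      exact @MeasurableSet.empty Ω (𝒢 m)
  exact ((hTsub _ Set.inter_subset_right).union (MeasurableSet.iUnion hEn))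

/-- `M_ν` is `mΩ`-measurable when `Minf` is measurable. -/
lemma sv_measurable (hM1 : ∀ n, Measurable[𝒢 n] (M n))
    (hν : IsExtStoppingTime 𝒢 ν) (hMinf' : Measurable Minf) :
    Measurable (extStoppedValue M Minf ν) := by
  intro B hB
  rw [sv_preimage_decomp]
  refine MeasurableSet.union ((hMinf' hB).inter (stop_top_meas hν)) ?_
  exact MeasurableSet.iUnion fun n =>
    ((hM1 n).mono (𝒢.le n) le_rfl hB).inter (𝒢.le n _ (stop_eq_mem hν n))

end Aux5

/-- optional sampling for ENSMs: for stopping times `ν₁ ≤ ν₂` (possibly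
infinite, with `M_∞` the a.s. limit of `M`), `E[M_{ν₂} | F_{ν₁}] ≤ M_{ν₁}` a.s. -/
theorem isENSM_optional_sampling
    {Ω : Type*} {mΩ : MeasurableSpace Ω} (μ : Measure Ω) [IsProbabilityMeasure μ]
    (𝒢 : Filtration ℕ mΩ) (M : ℕ → Ω → ℝ≥0∞) (hM : IsENSM μ 𝒢 M)
    (Minf : Ω → ℝ≥0∞)
    (hMinf : ∀ᵐ ω ∂μ, Tendsto (fun n => M n ω) atTop (nhds (Minf ω)))
    (ν₁ ν₂ : Ω → ℕ∞) (hν₁ : IsExtStoppingTime 𝒢 ν₁) (hν₂ : IsExtStoppingTime 𝒢 ν₂)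
    (hle : ∀ ω, ν₁ ω ≤ ν₂ ω) :
    extCondExp μ (pastSigma 𝒢 ν₁) (extStoppedValue M Minf ν₂) ≤ᵐ[μ]
      extStoppedValue M Minf ν₁ := by
  classical
  by_cases hm : pastSigma 𝒢 ν₁ ≤ mΩ
  swap
  · refine ae_of_all _ fun ω => ?_
    simp only [extCondExp, condExp_of_not_le hm, Pi.zero_apply, ENNReal.ofReal_zero,
      iSup_const]
    exact zero_le
  haveI hsf : SigmaFinite (μ.trim hm) := inferInstance
  have hminle : ∀ (x : ℝ≥0∞) (c : ℕ), (min x (c : ℝ≥0∞)).toReal ≤ (c : ℝ) := by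
    intro x c
    have := ENNReal.toReal_mono (a := min x (c : ℝ≥0∞)) (b := (c : ℝ≥0∞))
      (by simp) (min_le_right _ _)
    simpa [ENNReal.toReal_natCast] using this
  have hminnetop : ∀ (x : ℝ≥0∞) (c : ℕ), min x (c : ℝ≥0∞) ≠ ⊤ := fun x c =>
    ne_top_of_le_ne_top (by simp) (min_le_right _ _)
  -- measurable a.e.-version of the limit
  have hM'meas : Measurable fun ω => Filter.liminf (fun n => M n ω) atTop :=
    Measurable.liminf fun n => (hM.1 n).mono (𝒢.le n) le_rfl
  have hSV2ae : extStoppedValue M Minf ν₂ =ᵐ[μ]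
      extStoppedValue M (fun ω => Filter.liminf (fun n => M n ω) atTop) ν₂ := by
    filter_upwards [hMinf] with ω hω
    rw [extStoppedValue, extStoppedValue]
    split
    · exact hω.liminf_eq.symm
    · rfl
  -- truncations of M_{ν₂}
  have hYae : ∀ c : ℕ, (fun ω => (min (extStoppedValue M Minf ν₂ ω) (c : ℝ≥0∞)).toReal) =ᵐ[μ]
      (fun ω => (min (extStoppedValue M
        (fun ω' => Filter.liminf (fun n => M n ω') atTop) ν₂ ω) (c : ℝ≥0∞)).toReal) :=
    fun c => hSV2ae.mono fun ω h => by dsimp only; rw [h]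
  have hYsm : ∀ c : ℕ,
      AEStronglyMeasurable (fun ω => (min (extStoppedValue M Minf ν₂ ω) (c : ℝ≥0∞)).toReal) μ :=
    fun c => ⟨_, (ENNReal.measurable_toReal.comp
      (((sv_measurable hM.1 hν₂ hM'meas)).min measurable_const)).stronglyMeasurable,
      hYae c⟩
  have hYint : ∀ c : ℕ,
      Integrable (fun ω => (min (extStoppedValue M Minf ν₂ ω) (c : ℝ≥0∞)).toReal) μ :=
    fun c => integrable_of_bdd (hYsm c) (fun ω => ENNReal.toReal_nonneg)
      (fun ω => hminle _ c)
  -- truncations of M_{ν₁}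
  have hZmeasG : ∀ c : ℕ, Measurable[pastSigma 𝒢 ν₁]
      (fun ω => (min (extStoppedValue M Minf ν₁ ω) (c : ℝ≥0∞)).toReal) := fun c =>
    ENNReal.measurable_toReal.comp ((sv_measurable_past hM.1 hν₁ Minf).min measurable_const)
  have hZint : ∀ c : ℕ,
      Integrable (fun ω => (min (extStoppedValue M Minf ν₁ ω) (c : ℝ≥0∞)).toReal) μ :=
    fun c => integrable_of_bdd (((hZmeasG c).mono hm le_rfl).aestronglyMeasurable)
      (fun ω => ENNReal.toReal_nonneg) (fun ω => hminle _ c)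
  -- key conditional-expectation comparison for each truncation level
  have key : ∀ c : ℕ,
      μ[fun ω => (min (extStoppedValue M Minf ν₂ ω) (c : ℝ≥0∞)).toReal | pastSigma 𝒢 ν₁]
        ≤ᵐ[μ] fun ω => (min (extStoppedValue M Minf ν₁ ω) (c : ℝ≥0∞)).toReal := by
    intro c
    have hsetle : ∀ A : Set Ω, MeasurableSet[pastSigma 𝒢 ν₁] A →
        ∫ ω in A, (min (extStoppedValue M Minf ν₂ ω) (c : ℝ≥0∞)).toReal ∂μ ≤
          ∫ ω in A, (min (extStoppedValue M Minf ν₁ ω) (c : ℝ≥0∞)).toReal ∂μ := by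
      intro A hAG
      have hA := (pastSigma_iff hν₁).mp hAG
      have hAm : MeasurableSet A := hm _ hAG
      exact le_of_tendsto_of_tendsto' (stepB hM.1 hν₂ hMinf c hAm)
        (stepB hM.1 hν₁ hMinf c hAm) (fun m => stepA hM hν₁ hν₂ hle c m hA)
    set f := μ[fun ω =>
      (min (extStoppedValue M Minf ν₂ ω) (c : ℝ≥0∞)).toReal | pastSigma 𝒢 ν₁] with hf
    set Z : Ω → ℝ := fun ω => (min (extStoppedValue M Minf ν₁ ω) (c : ℝ≥0∞)).toReal with hZ
    have hset2 : ∀ A : Set Ω, MeasurableSet[pastSigma 𝒢 ν₁] A →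
        ∫ ω in A, f ω ∂μ ≤ ∫ ω in A, Z ω ∂μ := by
      intro A hAG
      rw [hf, setIntegral_condExp hm (hYint c) hAG]
      exact hsetle A hAG
    have hfsm : StronglyMeasurable[pastSigma 𝒢 ν₁] f := stronglyMeasurable_condExp
    have hZsm : StronglyMeasurable[pastSigma 𝒢 ν₁] Z := (hZmeasG c).stronglyMeasurable
    have hd_sm : StronglyMeasurable[pastSigma 𝒢 ν₁] (Z - f) := hZsm.sub hfsm
    have hd_int : Integrable (Z - f) μ := (hZint c).sub integrable_condExp
    have htrim : 0 ≤ᵐ[μ.trim hm] (Z - f) := by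
      apply ae_nonneg_of_forall_setIntegral_nonneg (hd_int.trim hm hd_sm)
      intro s hs _
      rw [← setIntegral_trim hm hd_sm hs]
      have hsub : ∫ ω in s, (Z - f) ω ∂μ = ∫ ω in s, Z ω ∂μ - ∫ ω in s, f ω ∂μ := by
        simp only [Pi.sub_apply]
        exact integral_sub ((hZint c).restrict) (integrable_condExp.restrict)
      rw [hsub, sub_nonneg]
      exact hset2 s hs
    filter_upwards [ae_le_of_ae_le_trim htrim] with ω hω
    have : (0 : ℝ) ≤ Z ω - f ω := by simpa using hω
    linarith
  have hall : ∀ᵐ ω ∂μ, ∀ c : ℕ,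
      (μ[fun ω' => (min (extStoppedValue M Minf ν₂ ω') (c : ℝ≥0∞)).toReal
        | pastSigma 𝒢 ν₁]) ω ≤
        (min (extStoppedValue M Minf ν₁ ω) (c : ℝ≥0∞)).toReal := ae_all_iff.mpr key
  filter_upwards [hall] with ω hω
  rw [extCondExp]
  refine iSup_le fun c => ?_
  calc ENNReal.ofReal ((μ[fun ω' =>
        (min (extStoppedValue M Minf ν₂ ω') (c : ℝ≥0∞)).toReal | pastSigma 𝒢 ν₁]) ω)
      ≤ ENNReal.ofReal ((min (extStoppedValue M Minf ν₁ ω) (c : ℝ≥0∞)).toReal) :=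
        ENNReal.ofReal_le_ofReal (hω c)
    _ = min (extStoppedValue M Minf ν₁ ω) (c : ℝ≥0∞) :=
        ENNReal.ofReal_toReal (hminnetop _ c)
    _ ≤ extStoppedValue M Minf ν₁ ω := min_le_left _ _
end

section
/- Extended Ville's inequality: let M be an extended nonnegative supermartingale, C > 0, and m ≥ 0. Then P[∃ n ≥ m: M_n ≥ C] ≤ P[M_m ≥ C] + C⁻¹·E[M_m·1{M_m < C}] = C⁻¹·E[M_m ∧ C]. -/
open MeasureTheory Filter
open scoped ENNReal NNReal

lemma key_le {Ω : Type*} {mΩ : MeasurableSpace Ω} (μ : Measure Ω) [IsProbabilityMeasure μ]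
    {F : MeasurableSpace Ω} (hF : F ≤ mΩ) {X : Ω → ℝ≥0∞} (hX : Measurable[mΩ] X)
    (C : ℝ≥0) {A : Set Ω} (hA : MeasurableSet[F] A) :
    ∫⁻ ω in A, min (X ω) C ∂μ ≤ ∫⁻ ω in A, min (extCondExp μ F X ω) C ∂μ := by
  set f : Ω → ℝ := fun ω => (min (X ω) C).toReal with hf
  have hfmeas : Measurable[mΩ] f := (hX.min measurable_const).ennreal_toReal
  have hf0 : ∀ ω, 0 ≤ f ω := fun ω => ENNReal.toReal_nonneg
  have hfC : ∀ ω, f ω ≤ C := fun ω => by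
    have : (min (X ω) (C:ℝ≥0∞)).toReal ≤ ((C:ℝ≥0∞)).toReal :=
      ENNReal.toReal_mono ENNReal.coe_ne_top (min_le_right _ _)
    simpa using this
  have hfint : Integrable f μ := by
    refine Integrable.mono' (integrable_const (C:ℝ))
      hfmeas.aestronglyMeasurable (ae_of_all _ fun ω => ?_)
    rw [Real.norm_eq_abs, abs_of_nonneg (hf0 ω)]; exact hfC ω
  have h1 : ∫⁻ ω in A, min (X ω) C ∂μ = ENNReal.ofReal (∫ ω in A, f ω ∂μ) := by
    rw [MeasureTheory.ofReal_integral_eq_lintegral_ofReal hfint.restrict (ae_of_all _ hf0)]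
    refine lintegral_congr fun ω => (ENNReal.ofReal_toReal ?_).symm
    exact ne_top_of_le_ne_top ENNReal.coe_ne_top (min_le_right _ _)
  have h2 : ∫ ω in A, f ω ∂μ = ∫ ω in A, (μ[f|F]) ω ∂μ := (setIntegral_condExp hF hfint hA).symm
  have hgint : Integrable (μ[f|F]) μ := integrable_condExp
  have hg0 : 0 ≤ᵐ[μ] μ[f|F] := condExp_nonneg (ae_of_all _ hf0)
  have h3 : ENNReal.ofReal (∫ ω in A, (μ[f|F]) ω ∂μ)
      = ∫⁻ ω in A, ENNReal.ofReal ((μ[f|F]) ω) ∂μ :=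
    MeasureTheory.ofReal_integral_eq_lintegral_ofReal hgint.restrict (ae_restrict_of_ae hg0)
  have hae : ∀ᵐ ω ∂μ, ENNReal.ofReal ((μ[f|F]) ω) ≤ min (extCondExp μ F X ω) C := by
    set k : ℕ := ⌈C⌉₊ with hk
    have hCk : (C:ℝ≥0∞) ≤ (k:ℝ≥0∞) := by
      rw [← ENNReal.coe_natCast]
      exact_mod_cast Nat.le_ceil C
    set fk : Ω → ℝ := fun ω => (min (X ω) (k:ℝ≥0∞)).toReal with hfk
    have hfkmeas : Measurable[mΩ] fk := (hX.min measurable_const).ennreal_toReal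
    have hfkint : Integrable fk μ := by
      refine Integrable.mono' (integrable_const ((k:ℝ)))
        hfkmeas.aestronglyMeasurable (ae_of_all _ fun ω => ?_)
      rw [Real.norm_eq_abs, abs_of_nonneg ENNReal.toReal_nonneg]
      have : (min (X ω) ((k:ℕ):ℝ≥0∞)).toReal ≤ (((k:ℕ):ℝ≥0∞)).toReal :=
        ENNReal.toReal_mono (ENNReal.natCast_ne_top k) (min_le_right _ _)
      simpa using this
    have hle : f ≤ fk := fun ω => by
      refine ENNReal.toReal_mono
        (ne_top_of_le_ne_top (ENNReal.natCast_ne_top k) (min_le_right _ _)) ?_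
      exact min_le_min le_rfl hCk
    have hmono := condExp_mono (m := F) hfint hfkint (ae_of_all _ hle)
    have hmonoC := condExp_mono (m := F) hfint (integrable_const (C:ℝ)) (ae_of_all _ hfC)
    rw [condExp_const hF] at hmonoC
    filter_upwards [hmono, hmonoC] with ω h1 h2
    refine le_min ?_ ?_
    · refine le_trans (ENNReal.ofReal_le_ofReal h1) ?_
      exact le_iSup (fun n : ℕ => ENNReal.ofReal ((μ[fun ω' => (min (X ω') n).toReal|F]) ω)) k
    · calc ENNReal.ofReal ((μ[f|F]) ω) ≤ ENNReal.ofReal (C:ℝ) := ENNReal.ofReal_le_ofReal h2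
        _ = (C:ℝ≥0∞) := ENNReal.ofReal_coe_nnreal
  calc ∫⁻ ω in A, min (X ω) C ∂μ = ENNReal.ofReal (∫ ω in A, (μ[f|F]) ω ∂μ) := by rw [h1, h2]
    _ = ∫⁻ ω in A, ENNReal.ofReal ((μ[f|F]) ω) ∂μ := h3
    _ ≤ ∫⁻ ω in A, min (extCondExp μ F X ω) C ∂μ := lintegral_mono_ae (ae_restrict_of_ae hae)

open scoped Classical in
noncomputable def villeV {Ω : Type*} (M : ℕ → Ω → ℝ≥0∞) (C : ℝ≥0) (m : ℕ) : ℕ → Ω → ℝ≥0∞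
  | 0 => fun ω => min (M m ω) C
  | (k+1) => fun ω => if villeV M C m k ω = (C:ℝ≥0∞) then (C:ℝ≥0∞) else min (M (m+k+1) ω) C

lemma villeV_eq_C_iff {Ω : Type*} (M : ℕ → Ω → ℝ≥0∞) (C : ℝ≥0) (m : ℕ) (k : ℕ) (ω : Ω) :
    villeV M C m k ω = C ↔ ∃ j ≤ k, (C:ℝ≥0∞) ≤ M (m+j) ω := by
  induction k with
  | zero =>
    simp only [villeV, min_eq_right_iff]
    constructor
    · intro h; exact ⟨0, le_rfl, h⟩
    · rintro ⟨j, hj, h⟩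
      obtain rfl := Nat.le_zero.mp hj
      exact h
  | succ k ih =>
    show (if villeV M C m k ω = (C:ℝ≥0∞) then (C:ℝ≥0∞) else min (M (m+k+1) ω) C) = C ↔ _
    by_cases h : villeV M C m k ω = (C:ℝ≥0∞)
    · rw [if_pos h]
      obtain ⟨j, hj, hle⟩ := ih.mp h
      exact iff_of_true rfl ⟨j, hj.trans (Nat.le_succ k), hle⟩
    · rw [if_neg h, min_eq_right_iff]
      constructor
      · intro hle; exact ⟨k+1, le_rfl, hle⟩
      · rintro ⟨j, hj, hle⟩
        rcases Nat.lt_or_ge j (k+1) with hj' | hj'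
        · exact absurd (ih.mpr ⟨j, Nat.lt_succ_iff.mp hj', hle⟩) h
        · obtain rfl : j = k+1 := le_antisymm hj hj'
          exact hle

lemma villeV_succ_of_eq {Ω : Type*} {M : ℕ → Ω → ℝ≥0∞} {C : ℝ≥0} {m k : ℕ} {ω : Ω}
    (h : villeV M C m k ω = C) : villeV M C m (k+1) ω = C := by
  show (if villeV M C m k ω = (C:ℝ≥0∞) then (C:ℝ≥0∞) else min (M (m+k+1) ω) C) = C
  rw [if_pos h]

lemma villeV_succ_of_ne {Ω : Type*} {M : ℕ → Ω → ℝ≥0∞} {C : ℝ≥0} {m k : ℕ} {ω : Ω}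
    (h : villeV M C m k ω ≠ C) : villeV M C m (k+1) ω = min (M (m+k+1) ω) C := by
  show (if villeV M C m k ω = (C:ℝ≥0∞) then (C:ℝ≥0∞) else min (M (m+k+1) ω) C) = _
  rw [if_neg h]

lemma villeV_of_ne {Ω : Type*} {M : ℕ → Ω → ℝ≥0∞} {C : ℝ≥0} {m : ℕ} (k : ℕ) {ω : Ω}
    (h : villeV M C m k ω ≠ C) : villeV M C m k ω = min (M (m+k) ω) C := by
  cases k with
  | zero => rfl
  | succ k =>
    by_cases hc : villeV M C m k ω = (C:ℝ≥0∞)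
    · exact absurd (villeV_succ_of_eq hc) h
    · exact villeV_succ_of_ne hc

/-- extended Ville's inequality: for an ENSM `M`, `C > 0` and `m ≥ 0`,
`P[∃ n ≥ m, M_n ≥ C] ≤ P[M_m ≥ C] + C⁻¹·E[M_m·1{M_m < C}] = C⁻¹·E[M_m ∧ C]`. -/
theorem extended_ville_inequality
    {Ω : Type*} {mΩ : MeasurableSpace Ω} (μ : Measure Ω) [IsProbabilityMeasure μ]
    (𝒢 : Filtration ℕ mΩ) (M : ℕ → Ω → ℝ≥0∞) (hM : IsENSM μ 𝒢 M)
    (C : ℝ≥0) (hC : 0 < C) (m : ℕ) :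
    μ {ω | ∃ n, m ≤ n ∧ (C : ℝ≥0∞) ≤ M n ω} ≤
        μ {ω | (C : ℝ≥0∞) ≤ M m ω} +
          (C : ℝ≥0∞)⁻¹ * ∫⁻ ω in {ω | M m ω < (C : ℝ≥0∞)}, M m ω ∂μ ∧
      μ {ω | (C : ℝ≥0∞) ≤ M m ω} +
          (C : ℝ≥0∞)⁻¹ * ∫⁻ ω in {ω | M m ω < (C : ℝ≥0∞)}, M m ω ∂μ =
        (C : ℝ≥0∞)⁻¹ * ∫⁻ ω, min (M m ω) (C : ℝ≥0∞) ∂μ := by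
  obtain ⟨hMad, hSM⟩ := hM
  have hC0 : (C:ℝ≥0∞) ≠ 0 := by exact_mod_cast hC.ne'
  have hMmeas : ∀ n, Measurable[mΩ] (M n) := fun n => (hMad n).mono (𝒢.le n) le_rfl
  -- measurability of the crossing sets
  have hsetV : ∀ k, MeasurableSet[𝒢 (m+k)] {ω | villeV M C m k ω = (C:ℝ≥0∞)} := by
    intro k
    have hEq : {ω | villeV M C m k ω = (C:ℝ≥0∞)}
        = ⋃ j, ⋃ (_ : j ≤ k), {ω | (C:ℝ≥0∞) ≤ M (m+j) ω} := by
      ext ω; simp [villeV_eq_C_iff]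
    rw [hEq]
    refine MeasurableSet.iUnion fun j => MeasurableSet.iUnion fun hj => ?_
    exact (𝒢.mono (by omega)) _ ((hMad (m+j)) measurableSet_Ici)
  have hVmeas : ∀ k, Measurable[mΩ] (villeV M C m k) := by
    intro k
    induction k with
    | zero => exact (hMmeas m).min measurable_const
    | succ k ih =>
      have hset : MeasurableSet[mΩ] {ω | villeV M C m k ω = (C:ℝ≥0∞)} :=
        (𝒢.le (m+k)) _ (hsetV k)
      classical
      exact Measurable.ite hset measurable_const ((hMmeas (m+k+1)).min measurable_const)
  -- one-step supermartingale decrease of ∫ V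
  have hstep : ∀ k, ∫⁻ ω, villeV M C m (k+1) ω ∂μ ≤ ∫⁻ ω, villeV M C m k ω ∂μ := by
    intro k
    set A := {ω | villeV M C m k ω = (C:ℝ≥0∞)} with hA
    have hAm : MeasurableSet[mΩ] A := (𝒢.le (m+k)) _ (hsetV k)
    rw [← lintegral_add_compl (villeV M C m (k+1)) hAm,
        ← lintegral_add_compl (villeV M C m k) hAm]
    refine add_le_add ?_ ?_
    · refine le_of_eq (setLIntegral_congr_fun hAm (fun ω hω => ?_))
      have h1 : villeV M C m k ω = C := hω
      rw [villeV_succ_of_eq h1, h1]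
    · have h1 : ∫⁻ ω in Aᶜ, villeV M C m (k+1) ω ∂μ
          = ∫⁻ ω in Aᶜ, min (M (m+k+1) ω) C ∂μ :=
        setLIntegral_congr_fun hAm.compl (fun ω hω => villeV_succ_of_ne hω)
      have h2 : ∫⁻ ω in Aᶜ, villeV M C m k ω ∂μ
          = ∫⁻ ω in Aᶜ, min (M (m+k) ω) C ∂μ :=
        setLIntegral_congr_fun hAm.compl (fun ω hω => villeV_of_ne k hω)
      rw [h1, h2]
      have hAc : MeasurableSet[𝒢 (m+k)] Aᶜ := (hsetV k).compl
      calc ∫⁻ ω in Aᶜ, min (M (m+k+1) ω) C ∂μ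
          ≤ ∫⁻ ω in Aᶜ, min (extCondExp μ (𝒢 (m+k)) (M (m+k+1)) ω) C ∂μ :=
            key_le μ (𝒢.le (m+k)) (hMmeas (m+k+1)) C hAc
        _ ≤ ∫⁻ ω in Aᶜ, min (M (m+k) ω) C ∂μ := by
            refine lintegral_mono_ae (ae_restrict_of_ae ?_)
            exact (hSM (m+k)).mono fun ω h => min_le_min h le_rfl
  have hdec : ∀ k, ∫⁻ ω, villeV M C m k ω ∂μ ≤ ∫⁻ ω, min (M m ω) C ∂μ := by
    intro k
    induction k with
    | zero => exact le_of_eq rfl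
    | succ k ih => exact (hstep k).trans ih
  -- per-k bound
  have hbound : ∀ k, μ {ω | villeV M C m k ω = (C:ℝ≥0∞)}
      ≤ (C:ℝ≥0∞)⁻¹ * ∫⁻ ω, min (M m ω) C ∂μ := by
    intro k
    set A := {ω | villeV M C m k ω = (C:ℝ≥0∞)} with hA
    have hAm : MeasurableSet[mΩ] A := (𝒢.le (m+k)) _ (hsetV k)
    have h1 : (C:ℝ≥0∞) * μ A ≤ ∫⁻ ω, villeV M C m k ω ∂μ := by
      calc (C:ℝ≥0∞) * μ A = ∫⁻ _ in A, (C:ℝ≥0∞) ∂μ := by rw [setLIntegral_const]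
        _ = ∫⁻ ω in A, villeV M C m k ω ∂μ :=
            setLIntegral_congr_fun hAm (fun ω hω => (Set.mem_setOf_eq ▸ hω).symm)
        _ ≤ ∫⁻ ω, villeV M C m k ω ∂μ := lintegral_mono' Measure.restrict_le_self le_rfl
    calc μ A = (C:ℝ≥0∞)⁻¹ * ((C:ℝ≥0∞) * μ A) := by
          rw [← mul_assoc, ENNReal.inv_mul_cancel hC0 ENNReal.coe_ne_top, one_mul]
      _ ≤ (C:ℝ≥0∞)⁻¹ * ∫⁻ ω, villeV M C m k ω ∂μ := mul_le_mul_right h1 _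
      _ ≤ (C:ℝ≥0∞)⁻¹ * ∫⁻ ω, min (M m ω) C ∂μ := mul_le_mul_right (hdec k) _
  -- the union identity
  have hsetEq : {ω | ∃ n, m ≤ n ∧ (C : ℝ≥0∞) ≤ M n ω}
      = ⋃ k, {ω | villeV M C m k ω = (C:ℝ≥0∞)} := by
    ext ω
    simp only [Set.mem_setOf_eq, Set.mem_iUnion, villeV_eq_C_iff]
    constructor
    · rintro ⟨n, hn, h⟩
      exact ⟨n - m, n - m, le_rfl, by rwa [Nat.add_sub_cancel' hn]⟩
    · rintro ⟨k, j, hj, h⟩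
      exact ⟨m + j, Nat.le_add_right m j, h⟩
  have hmonoSets : Monotone fun k => {ω | villeV M C m k ω = (C:ℝ≥0∞)} :=
    monotone_nat_of_le_succ fun k ω hω => villeV_succ_of_eq hω
  have hmain : μ {ω | ∃ n, m ≤ n ∧ (C : ℝ≥0∞) ≤ M n ω}
      ≤ (C:ℝ≥0∞)⁻¹ * ∫⁻ ω, min (M m ω) C ∂μ := by
    rw [hsetEq, hmonoSets.directed_le.measure_iUnion]
    exact iSup_le hbound
  -- the equality part
  set S := {ω | (C : ℝ≥0∞) ≤ M m ω} with hSdef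
  have hS : MeasurableSet[mΩ] S := (hMmeas m) measurableSet_Ici
  have hSc : Sᶜ = {ω | M m ω < (C:ℝ≥0∞)} := by
    ext ω; simp [hSdef, not_le]
  have hon : ∫⁻ ω in S, min (M m ω) C ∂μ = (C:ℝ≥0∞) * μ S := by
    rw [setLIntegral_congr_fun hS (fun ω hω => min_eq_right hω), setLIntegral_const]
  have hless : ∫⁻ ω in Sᶜ, min (M m ω) C ∂μ = ∫⁻ ω in {ω | M m ω < (C:ℝ≥0∞)}, M m ω ∂μ := by
    rw [setLIntegral_congr_fun hS.compl
      (fun ω hω => min_eq_left (le_of_lt (by simpa [hSdef, not_le] using hω)))]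
    rw [hSc]
  have heq : μ S + (C:ℝ≥0∞)⁻¹ * ∫⁻ ω in {ω | M m ω < (C:ℝ≥0∞)}, M m ω ∂μ
      = (C:ℝ≥0∞)⁻¹ * ∫⁻ ω, min (M m ω) C ∂μ := by
    rw [← lintegral_add_compl (fun ω => min (M m ω) C) hS, hon, hless, mul_add, ← mul_assoc,
      ENNReal.inv_mul_cancel hC0 ENNReal.coe_ne_top, one_mul]
  exact ⟨heq ▸ hmain, heq⟩
end

section
/- Let M be an extended nonnegative supermartingale and π, τ stopping times, C > 0. Then P[M_{τ∨π} ≥ C] ≤ C⁻¹·E[M_π]. -/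
open MeasureTheory Filter
open scoped ENNReal NNReal

/-! ### Auxiliary lemmas -/

theorem VilleAux.min_toNat_lt (x : ℕ∞) (n j : ℕ) (hj : j < n) :
    ((min (n:ℕ∞) x).toNat = j) ↔ x = (j:ℕ∞) := by
  cases x with
  | top => simpa using hj.ne'
  | coe m =>
    rw [show min (n:ℕ∞) (m:ℕ∞) = ((min n m : ℕ) : ℕ∞) from by exact_mod_cast rfl]
    simp only [ENat.toNat_coe, Nat.cast_inj]
    omega

theorem VilleAux.min_toNat_self (x : ℕ∞) (n : ℕ) :
    ((min (n:ℕ∞) x).toNat = n) ↔ (n:ℕ∞) ≤ x := by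
  cases x with
  | top => simp
  | coe m =>
    rw [show min (n:ℕ∞) (m:ℕ∞) = ((min n m : ℕ) : ℕ∞) from by exact_mod_cast rfl]
    simp only [ENat.toNat_coe, Nat.cast_le]
    omega

theorem VilleAux.enat_succ_le (n : ℕ) (x : ℕ∞) (h : ¬ x ≤ (n:ℕ∞)) : ((n+1:ℕ):ℕ∞) ≤ x := by
  cases x with
  | top => simp
  | coe m => rw [Nat.cast_le]; rw [Nat.cast_le] at h; omega

theorem VilleAux.enat_lt_coe (x : ℕ∞) (n : ℕ) : x < (n:ℕ∞) ↔ ∃ i : ℕ, i < n ∧ x = (i:ℕ∞) := by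
  cases x with
  | top => simp
  | coe m =>
    rw [Nat.cast_lt]
    constructor
    · intro h; exact ⟨m, h, rfl⟩
    · rintro ⟨i, hi, he⟩; rw [Nat.cast_inj] at he; omega

section Aux
variable {Ω : Type*} {mΩ : MeasurableSpace Ω} {𝒢 : Filtration ℕ mΩ} {σ : Ω → ℕ∞}

theorem VilleAux.measSet_lt (hσ : IsExtStoppingTime 𝒢 σ) (n : ℕ) :
    MeasurableSet[𝒢 n] {ω | σ ω < (n:ℕ∞)} := by
  have : {ω | σ ω < (n:ℕ∞)} = ⋃ i ∈ Finset.range n, {ω | σ ω ≤ (i:ℕ∞)} := by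
    ext ω
    simp only [Set.mem_setOf_eq, Set.mem_iUnion, Finset.mem_range, exists_prop]
    constructor
    · intro h
      obtain ⟨i, hi, he⟩ := (VilleAux.enat_lt_coe _ _).1 h
      exact ⟨i, hi, le_of_eq he⟩
    · rintro ⟨i, hi, he⟩
      exact lt_of_le_of_lt he (by exact_mod_cast hi)
  rw [this]
  exact MeasurableSet.biUnion (Finset.range n).countable_toSet
    (fun i hi => 𝒢.mono (le_of_lt (Finset.mem_range.1 hi)) _ (hσ i))

theorem VilleAux.measSet_eq (hσ : IsExtStoppingTime 𝒢 σ) (n : ℕ) :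
    MeasurableSet[𝒢 n] {ω | σ ω = (n:ℕ∞)} := by
  have : {ω | σ ω = (n:ℕ∞)} = {ω | σ ω ≤ (n:ℕ∞)} \ {ω | σ ω < (n:ℕ∞)} := by
    ext ω; simp only [Set.mem_setOf_eq, Set.mem_diff, not_lt]
    constructor
    · intro h; exact ⟨le_of_eq h, ge_of_eq h⟩
    · intro ⟨h1, h2⟩; exact le_antisymm h1 h2
  rw [this]
  exact (hσ n).diff (VilleAux.measSet_lt hσ n)

theorem VilleAux.measSet_top (hσ : IsExtStoppingTime 𝒢 σ) :
    MeasurableSet {ω | σ ω = (⊤:ℕ∞)} := by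
  have : {ω | σ ω = (⊤:ℕ∞)} = (⋃ n : ℕ, {ω | σ ω ≤ (n:ℕ∞)})ᶜ := by
    ext ω
    simp only [Set.mem_setOf_eq, Set.mem_compl_iff, Set.mem_iUnion, not_exists]
    constructor
    · intro h n hn
      rw [h] at hn
      exact absurd hn (by simp)
    · intro h
      cases hc : σ ω with
      | top => rfl
      | coe m => exact absurd (le_of_eq hc) (h m)
  rw [this]
  exact (MeasurableSet.iUnion fun n => 𝒢.le n _ (hσ n)).compl

variable {M : ℕ → Ω → ℝ≥0∞}

/-- The stopped process is measurable. -/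
theorem VilleAux.measurable_extStopped (hM : ∀ k, Measurable (M k))
    (hσ : IsExtStoppingTime 𝒢 σ) (n : ℕ) : Measurable (extStopped M σ n) := by
  have hrep : extStopped M σ n = fun ω => ∑ j ∈ Finset.range (n+1),
      Set.indicator {ω' | (min (n:ℕ∞) (σ ω')).toNat = j} (M j) ω := by
    funext ω
    have hρ : (min (n:ℕ∞) (σ ω)).toNat ≤ n := by
      cases h : σ ω with
      | top => simp [h]
      | coe m =>
        rw [show min (n:ℕ∞) (m:ℕ∞) = ((min n m : ℕ) : ℕ∞) from by exact_mod_cast rfl]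
        simp [ENat.toNat_coe]
    rw [Finset.sum_eq_single_of_mem ((min (n:ℕ∞) (σ ω)).toNat)
      (Finset.mem_range.2 (Nat.lt_succ_of_le hρ))]
    · rw [Set.indicator_of_mem (by exact rfl)]
      rfl
    · intro j _ hj
      exact Set.indicator_of_notMem (fun hmem => hj (by exact hmem.symm ▸ rfl)) _
  rw [hrep]
  refine Finset.measurable_sum _ (fun j hj => Measurable.indicator (hM j) ?_)
  rcases Nat.lt_or_ge j n with hjn | hjn
  · have : {ω' | (min (n:ℕ∞) (σ ω')).toNat = j} = {ω' | σ ω' = (j:ℕ∞)} := by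
      ext ω'; exact VilleAux.min_toNat_lt _ n j hjn
    rw [this]
    exact 𝒢.le j _ (VilleAux.measSet_eq hσ j)
  · have hjeq : j = n ∨ n < j := by omega
    rcases hjeq with rfl | hjn'
    · have : {ω' | (min (j:ℕ∞) (σ ω')).toNat = j} = {ω' | σ ω' < (j:ℕ∞)}ᶜ := by
        ext ω'
        simp only [Set.mem_compl_iff, Set.mem_setOf_eq, not_lt]
        exact VilleAux.min_toNat_self _ j
      rw [this]
      exact (𝒢.le j _ (VilleAux.measSet_lt hσ j)).compl
    · have : {ω' | (min (n:ℕ∞) (σ ω')).toNat = j} = ∅ := by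
        ext ω'
        simp only [Set.mem_setOf_eq, Set.mem_empty_iff_false, iff_false]
        intro h
        have : (min (n:ℕ∞) (σ ω')).toNat ≤ n := by
          cases hs : σ ω' with
          | top => simp [hs]
          | coe m =>
            rw [show min (n:ℕ∞) (m:ℕ∞) = ((min n m : ℕ) : ℕ∞) from by exact_mod_cast rfl]
            simp [ENat.toNat_coe]
        omega
      rw [this]
      exact MeasurableSet.empty
end Aux

section Aux2
variable {Ω : Type*} {mΩ : MeasurableSpace Ω} {μ : Measure Ω} [IsProbabilityMeasure μ]
  {𝒢 : Filtration ℕ mΩ} {M : ℕ → Ω → ℝ≥0∞}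

omit [IsProbabilityMeasure μ] in
theorem VilleAux.ensm_measurable (hM : IsENSM μ 𝒢 M) (n : ℕ) : Measurable (M n) :=
  (hM.1 n).mono (𝒢.le n) le_rfl

/-- One step of the supermartingale property in lower-integral form over a set. -/
theorem VilleAux.step_le (hM : IsENSM μ 𝒢 M) {n : ℕ} {B : Set Ω}
    (hB : MeasurableSet[𝒢 n] B) :
    ∫⁻ ω in B, M (n+1) ω ∂μ ≤ ∫⁻ ω in B, M n ω ∂μ := by
  have hle : 𝒢 n ≤ mΩ := 𝒢.le n
  have hmeas : ∀ k, Measurable (M k) := VilleAux.ensm_measurable hM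
  have htrunc : ∀ ω, (⨆ k : ℕ, min (M (n+1) ω) (k:ℝ≥0∞)) = M (n+1) ω := by
    intro ω
    refine le_antisymm (iSup_le fun k => min_le_left _ _) ?_
    rcases eq_or_ne (M (n+1) ω) ⊤ with h | h
    · have : (⨆ k : ℕ, min (M (n+1) ω) (k:ℝ≥0∞)) = ⨆ k : ℕ, (k:ℝ≥0∞) := by
        refine iSup_congr fun k => ?_
        rw [h, min_eq_right le_top]
      rw [this, ENNReal.iSup_natCast, h]
    · obtain ⟨k, hk⟩ := ENNReal.exists_nat_gt h
      refine le_trans (le_of_eq (min_eq_left hk.le).symm) (le_iSup (fun k : ℕ => min (M (n+1) ω) (k:ℝ≥0∞)) k)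
  have hmono : Monotone (fun (k : ℕ) (ω : Ω) => min (M (n+1) ω) (k:ℝ≥0∞)) := by
    intro i j hij ω
    exact min_le_min le_rfl (by exact_mod_cast hij)
  calc ∫⁻ ω in B, M (n+1) ω ∂μ
      = ⨆ k : ℕ, ∫⁻ ω in B, min (M (n+1) ω) (k:ℝ≥0∞) ∂μ := by
        rw [← lintegral_iSup (fun k => (hmeas (n+1)).min measurable_const) hmono]
        exact lintegral_congr fun ω => (htrunc ω).symm
    _ ≤ ∫⁻ ω in B, M n ω ∂μ := by
        refine iSup_le fun k => ?_
        have hg0 : ∀ ω, (0:ℝ) ≤ (min (M (n+1) ω) ((k:ℕ):ℝ≥0∞)).toReal :=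
          fun ω => ENNReal.toReal_nonneg
        have hgmeas : Measurable fun ω => (min (M (n+1) ω) ((k:ℕ):ℝ≥0∞)).toReal :=
          ((hmeas (n+1)).min measurable_const).ennreal_toReal
        have hgbdd : ∀ ω, ‖(min (M (n+1) ω) ((k:ℕ):ℝ≥0∞)).toReal‖ ≤ (k:ℝ) := by
          intro ω
          rw [Real.norm_eq_abs, abs_of_nonneg (hg0 ω)]
          calc (min (M (n+1) ω) ((k:ℕ):ℝ≥0∞)).toReal
              ≤ (((k:ℕ):ℝ≥0∞)).toReal :=
                ENNReal.toReal_mono (ENNReal.natCast_ne_top k) (min_le_right _ _)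
            _ = (k:ℝ) := by simp
        have hgint : Integrable (fun ω => (min (M (n+1) ω) ((k:ℕ):ℝ≥0∞)).toReal) μ :=
          Integrable.mono' (integrable_const (k:ℝ)) hgmeas.aestronglyMeasurable
            (ae_of_all _ hgbdd)
        have hnt : ∀ ω, min (M (n+1) ω) ((k:ℕ):ℝ≥0∞) ≠ ⊤ :=
          fun ω => ne_top_of_le_ne_top (ENNReal.natCast_ne_top k) (min_le_right _ _)
        have e1 : ∫⁻ ω in B, min (M (n+1) ω) ((k:ℕ):ℝ≥0∞) ∂μ
            = ∫⁻ ω in B, ENNReal.ofReal ((min (M (n+1) ω) ((k:ℕ):ℝ≥0∞)).toReal) ∂μ :=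
          lintegral_congr fun ω => (ENNReal.ofReal_toReal (hnt ω)).symm
        have e2 : ∫⁻ ω in B, ENNReal.ofReal ((min (M (n+1) ω) ((k:ℕ):ℝ≥0∞)).toReal) ∂μ
            = ENNReal.ofReal (∫ ω in B, (min (M (n+1) ω) ((k:ℕ):ℝ≥0∞)).toReal ∂μ) :=
          (MeasureTheory.ofReal_integral_eq_lintegral_ofReal hgint.restrict
            (ae_of_all _ hg0)).symm
        have e3 : ∫ ω in B, (min (M (n+1) ω) ((k:ℕ):ℝ≥0∞)).toReal ∂μ
            = ∫ ω in B, (μ[fun ω' => (min (M (n+1) ω') ((k:ℕ):ℝ≥0∞)).toReal | 𝒢 n]) ω ∂μ :=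
          (setIntegral_condExp hle hgint hB).symm
        have e4 : ENNReal.ofReal
              (∫ ω in B, (μ[fun ω' => (min (M (n+1) ω') ((k:ℕ):ℝ≥0∞)).toReal | 𝒢 n]) ω ∂μ)
            = ∫⁻ ω in B, ENNReal.ofReal
              ((μ[fun ω' => (min (M (n+1) ω') ((k:ℕ):ℝ≥0∞)).toReal | 𝒢 n]) ω) ∂μ :=
          MeasureTheory.ofReal_integral_eq_lintegral_ofReal integrable_condExp.restrict
            (ae_restrict_of_ae (condExp_nonneg (ae_of_all _ fun ω => ENNReal.toReal_nonneg)))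
        have e5 : ∫⁻ ω in B, ENNReal.ofReal
              ((μ[fun ω' => (min (M (n+1) ω') ((k:ℕ):ℝ≥0∞)).toReal | 𝒢 n]) ω) ∂μ
            ≤ ∫⁻ ω in B, M n ω ∂μ := by
          refine lintegral_mono_ae (ae_restrict_of_ae ?_)
          filter_upwards [hM.2 n] with ω hω
          refine le_trans ?_ hω
          exact le_iSup (fun j : ℕ => ENNReal.ofReal
            ((μ[fun ω' => (min (M (n+1) ω') ((j:ℕ):ℝ≥0∞)).toReal | 𝒢 n]) ω)) k
        rw [e1, e2, e3, e4]
        exact e5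

/-- The stopped process has antitone set-integrals from time `k` on, for `B ∈ 𝒢 k`. -/
theorem VilleAux.stopped_antitone (hM : IsENSM μ 𝒢 M) {σ : Ω → ℕ∞}
    (hσ : IsExtStoppingTime 𝒢 σ) {k : ℕ} {B : Set Ω} (hB : MeasurableSet[𝒢 k] B)
    {n : ℕ} (hkn : k ≤ n) :
    ∫⁻ ω in B, extStopped M σ (n+1) ω ∂μ ≤ ∫⁻ ω in B, extStopped M σ n ω ∂μ := by
  have hBm : MeasurableSet B := 𝒢.le k _ hB
  have hSm' : MeasurableSet[𝒢 n] {ω | σ ω ≤ (n:ℕ∞)} := hσ n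
  have hSm : MeasurableSet {ω | σ ω ≤ (n:ℕ∞)} := 𝒢.le n _ hSm'
  have split : ∀ f : Ω → ℝ≥0∞, ∫⁻ ω in B, f ω ∂μ
      = ∫⁻ ω in {ω | σ ω ≤ (n:ℕ∞)} ∩ B, f ω ∂μ
        + ∫⁻ ω in {ω | σ ω ≤ (n:ℕ∞)}ᶜ ∩ B, f ω ∂μ := by
    intro f
    rw [← Measure.restrict_restrict hSm, ← Measure.restrict_restrict hSm.compl]
    exact (lintegral_add_compl f hSm (μ := μ.restrict B)).symm
  rw [split (extStopped M σ (n+1)), split (extStopped M σ n)]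
  gcongr ?_ + ?_
  · refine le_of_eq (setLIntegral_congr_fun (hSm.inter hBm) ?_)
    rintro ω ⟨hω, -⟩
    have h1 : min ((n+1:ℕ):ℕ∞) (σ ω) = σ ω :=
      min_eq_right (le_trans hω (by exact_mod_cast Nat.le_succ n))
    have h2 : min ((n:ℕ):ℕ∞) (σ ω) = σ ω := min_eq_right hω
    simp only [extStopped]
    rw [show ((n+1:ℕ):ℕ∞) = ((n:ℕ):ℕ∞) + 1 from by push_cast; ring] at h1
    rw [show (((n:ℕ):ℕ∞) + 1) = ((n+1:ℕ):ℕ∞) from by push_cast; ring] at h1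
    rw [h1, h2]
  · have hC : MeasurableSet[𝒢 n] ({ω | σ ω ≤ (n:ℕ∞)}ᶜ ∩ B) :=
      hSm'.compl.inter (𝒢.mono hkn _ hB)
    calc ∫⁻ ω in {ω | σ ω ≤ (n:ℕ∞)}ᶜ ∩ B, extStopped M σ (n+1) ω ∂μ
        = ∫⁻ ω in {ω | σ ω ≤ (n:ℕ∞)}ᶜ ∩ B, M (n+1) ω ∂μ := by
          refine setLIntegral_congr_fun (hSm.compl.inter hBm) ?_
          rintro ω ⟨hω, -⟩
          have hge : ((n+1:ℕ):ℕ∞) ≤ σ ω := VilleAux.enat_succ_le n (σ ω) hω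
          simp only [extStopped, min_eq_left hge, ENat.toNat_coe]
      _ ≤ ∫⁻ ω in {ω | σ ω ≤ (n:ℕ∞)}ᶜ ∩ B, M n ω ∂μ := VilleAux.step_le hM hC
      _ = ∫⁻ ω in {ω | σ ω ≤ (n:ℕ∞)}ᶜ ∩ B, extStopped M σ n ω ∂μ := by
          refine (setLIntegral_congr_fun (hSm.compl.inter hBm) ?_).symm
          rintro ω ⟨hω, -⟩
          have hge : ((n:ℕ):ℕ∞) ≤ σ ω :=
            le_trans (by exact_mod_cast Nat.le_succ n) (VilleAux.enat_succ_le n (σ ω) hω)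
          simp only [extStopped, min_eq_left hge, ENat.toNat_coe]

omit [IsProbabilityMeasure μ] in
/-- A.e. convergence of the stopped process to the stopped value. -/
theorem VilleAux.tendsto_extStopped {Minf : Ω → ℝ≥0∞}
    (hMinf : ∀ᵐ ω ∂μ, Tendsto (fun n => M n ω) atTop (nhds (Minf ω))) (σ : Ω → ℕ∞) :
    ∀ᵐ ω ∂μ, Tendsto (fun n => extStopped M σ n ω) atTop
      (nhds (extStoppedValue M Minf σ ω)) := by
  filter_upwards [hMinf] with ω hω
  cases hσω : σ ω with
  | top =>
    have h1 : ∀ n : ℕ, extStopped M σ n ω = M n ω := by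
      intro n; simp [extStopped, hσω]
    have h2 : extStoppedValue M Minf σ ω = Minf ω := by simp [extStoppedValue, hσω]
    rw [h2]
    exact hω.congr (fun n => (h1 n).symm)
  | coe m =>
    have h2 : extStoppedValue M Minf σ ω = M m ω := by
      simp [extStoppedValue, hσω]
    rw [h2]
    refine tendsto_const_nhds.congr' ?_
    filter_upwards [eventually_ge_atTop m] with n hn
    have : min ((n:ℕ):ℕ∞) (σ ω) = ((m:ℕ):ℕ∞) := by
      rw [hσω]; exact min_eq_right (by exact_mod_cast hn)
    simp [extStopped, this]

end Aux2

/-- Ville's inequality on ENSMs for stopping times: for stopping times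
`π`, `τ` and `C > 0`, `P[M_{τ∨π} ≥ C] ≤ C⁻¹·E[M_π]`. -/
theorem ville_inequality_stopping_times
    {Ω : Type*} {mΩ : MeasurableSpace Ω} (μ : Measure Ω) [IsProbabilityMeasure μ]
    (𝒢 : Filtration ℕ mΩ) (M : ℕ → Ω → ℝ≥0∞) (hM : IsENSM μ 𝒢 M)
    (Minf : Ω → ℝ≥0∞)
    (hMinf : ∀ᵐ ω ∂μ, Tendsto (fun n => M n ω) atTop (nhds (Minf ω)))
    (π τ : Ω → ℕ∞) (hπ : IsExtStoppingTime 𝒢 π) (hτ : IsExtStoppingTime 𝒢 τ)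
    (C : ℝ≥0) (hC : 0 < C) :
    μ {ω | (C : ℝ≥0∞) ≤ extStoppedValue M Minf (fun ω' => max (τ ω') (π ω')) ω} ≤
      (C : ℝ≥0∞)⁻¹ * ∫⁻ ω, extStoppedValue M Minf π ω ∂μ := by
  set σ : Ω → ℕ∞ := fun ω => max (τ ω) (π ω) with hσdef
  have hσ : IsExtStoppingTime 𝒢 σ := by
    intro n
    have : {ω | σ ω ≤ (n:ℕ∞)} = {ω | τ ω ≤ (n:ℕ∞)} ∩ {ω | π ω ≤ (n:ℕ∞)} := by
      ext ω
      simp only [hσdef, Set.mem_setOf_eq, Set.mem_inter_iff, max_le_iff]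
    rw [this]
    exact (hτ n).inter (hπ n)
  have hmeas : ∀ k, Measurable (M k) := VilleAux.ensm_measurable hM
  have hπσ : ∀ ω, π ω ≤ σ ω := fun ω => le_max_right _ _
  -- Key comparison: E[M_σ] ≤ E[M_π]
  have hkey : ∫⁻ ω, extStoppedValue M Minf σ ω ∂μ
      ≤ ∫⁻ ω, extStoppedValue M Minf π ω ∂μ := by
    have hcov : (⋃ k : ℕ∞, {ω | π ω = k}) = Set.univ := by
      ext ω; simp
    have hmk : ∀ k : ℕ∞, MeasurableSet {ω | π ω = k} := by
      intro k
      cases k with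
      | top => exact VilleAux.measSet_top hπ
      | coe j => exact 𝒢.le j _ (VilleAux.measSet_eq hπ j)
    have hdisj : Pairwise (Function.onFun Disjoint fun k : ℕ∞ => {ω | π ω = k}) := by
      intro a b hab
      rw [Function.onFun, Set.disjoint_left]
      intro ω ha hb
      exact hab (ha.symm.trans hb)
    have hper : ∀ k : ℕ∞, ∫⁻ ω in {ω | π ω = k}, extStoppedValue M Minf σ ω ∂μ
        ≤ ∫⁻ ω in {ω | π ω = k}, extStoppedValue M Minf π ω ∂μ := by
      intro k
      cases k with
      | top =>
        refine le_of_eq (setLIntegral_congr_fun (hmk ⊤) ?_)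
        intro ω hω
        rw [Set.mem_setOf_eq] at hω
        have hσt : σ ω = ⊤ := by
          show τ ω ⊔ π ω = ⊤
          rw [hω]; exact sup_top_eq _
        simp [extStoppedValue, hσt, hω]
      | coe j =>
        have hB : MeasurableSet[𝒢 j] {ω | π ω = ((j:ℕ):ℕ∞)} := VilleAux.measSet_eq hπ j
        have hBm : MeasurableSet {ω | π ω = ((j:ℕ):ℕ∞)} := 𝒢.le j _ hB
        have hchain : ∀ n, j ≤ n →
            ∫⁻ ω in {ω | π ω = ((j:ℕ):ℕ∞)}, extStopped M σ n ω ∂μ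
              ≤ ∫⁻ ω in {ω | π ω = ((j:ℕ):ℕ∞)}, extStopped M σ j ω ∂μ := by
          intro n hn
          induction n, hn using Nat.le_induction with
          | base => exact le_rfl
          | succ n hn ih => exact le_trans (VilleAux.stopped_antitone hM hσ hB hn) ih
        calc ∫⁻ ω in {ω | π ω = ((j:ℕ):ℕ∞)}, extStoppedValue M Minf σ ω ∂μ
            = ∫⁻ ω in {ω | π ω = ((j:ℕ):ℕ∞)},
                liminf (fun n => extStopped M σ n ω) atTop ∂μ := by
              refine lintegral_congr_ae (ae_restrict_of_ae ?_)
              filter_upwards [VilleAux.tendsto_extStopped hMinf σ] with ω hω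
              exact hω.liminf_eq.symm
          _ ≤ liminf (fun n => ∫⁻ ω in {ω | π ω = ((j:ℕ):ℕ∞)}, extStopped M σ n ω ∂μ)
                atTop :=
              lintegral_liminf_le (fun n => VilleAux.measurable_extStopped hmeas hσ n)
          _ ≤ ∫⁻ ω in {ω | π ω = ((j:ℕ):ℕ∞)}, extStopped M σ j ω ∂μ := by
              refine liminf_le_of_frequently_le' ?_
              rw [frequently_atTop]
              intro N
              exact ⟨max N j, le_max_left _ _, hchain _ (le_max_right _ _)⟩
          _ = ∫⁻ ω in {ω | π ω = ((j:ℕ):ℕ∞)}, extStoppedValue M Minf π ω ∂μ := by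
              refine setLIntegral_congr_fun hBm ?_
              intro ω hω
              rw [Set.mem_setOf_eq] at hω
              have hge : ((j:ℕ):ℕ∞) ≤ σ ω := hω ▸ hπσ ω
              simp only [extStopped, extStoppedValue, min_eq_left hge, ENat.toNat_coe, hω]
              simp
    calc ∫⁻ ω, extStoppedValue M Minf σ ω ∂μ
        = ∫⁻ ω in ⋃ k : ℕ∞, {ω | π ω = k}, extStoppedValue M Minf σ ω ∂μ := by
          rw [hcov, Measure.restrict_univ]
      _ = ∑' k : ℕ∞, ∫⁻ ω in {ω | π ω = k}, extStoppedValue M Minf σ ω ∂μ :=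
          lintegral_iUnion hmk hdisj _
      _ ≤ ∑' k : ℕ∞, ∫⁻ ω in {ω | π ω = k}, extStoppedValue M Minf π ω ∂μ :=
          ENNReal.tsum_le_tsum hper
      _ = ∫⁻ ω in ⋃ k : ℕ∞, {ω | π ω = k}, extStoppedValue M Minf π ω ∂μ :=
          (lintegral_iUnion hmk hdisj _).symm
      _ = ∫⁻ ω, extStoppedValue M Minf π ω ∂μ := by
          rw [hcov, Measure.restrict_univ]
  -- a.e. measurability of the stopped value at σ
  have hLmeas : Measurable fun ω => limsup (fun n => M n ω) atTop :=
    Measurable.limsup hmeas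
  have hgmeas : Measurable (extStoppedValue M (fun ω => limsup (fun n => M n ω) atTop) σ) := by
    have hrep : extStoppedValue M (fun ω => limsup (fun n => M n ω) atTop) σ = fun ω =>
        (∑' j : ℕ, Set.indicator {ω' | σ ω' = ((j:ℕ):ℕ∞)} (M j) ω)
        + Set.indicator {ω' | σ ω' = (⊤:ℕ∞)}
            (fun ω => limsup (fun n => M n ω) atTop) ω := by
      funext ω
      cases hσω : σ ω with
      | top =>
        have h0 : ∀ j : ℕ, Set.indicator {ω' | σ ω' = ((j:ℕ):ℕ∞)} (M j) ω = 0 := by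
          intro j
          exact Set.indicator_of_notMem (by simp [Set.mem_setOf_eq, hσω]) _
        rw [tsum_congr h0, tsum_zero, zero_add,
          Set.indicator_of_mem (by exact hσω : ω ∈ {ω' | σ ω' = (⊤:ℕ∞)})]
        simp [extStoppedValue, hσω]
      | coe m =>
        have h1 : (∑' j : ℕ, Set.indicator {ω' | σ ω' = ((j:ℕ):ℕ∞)} (M j) ω) = M m ω := by
          rw [tsum_eq_single m]
          · exact Set.indicator_of_mem (by exact hσω) _
          · intro j hj
            refine Set.indicator_of_notMem ?_ _
            simp only [Set.mem_setOf_eq, hσω, Nat.cast_inj]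
            exact fun h => hj h.symm
        rw [h1, Set.indicator_of_notMem (by simp [Set.mem_setOf_eq, hσω]) _, add_zero]
        simp [extStoppedValue, hσω]
    rw [hrep]
    exact (Measurable.ennreal_tsum fun j =>
      (hmeas j).indicator (𝒢.le j _ (VilleAux.measSet_eq hσ j))).add
      (hLmeas.indicator (VilleAux.measSet_top hσ))
  have hfσae : AEMeasurable (extStoppedValue M Minf σ) μ := by
    refine hgmeas.aemeasurable.congr ?_
    filter_upwards [hMinf] with ω hω
    simp only [extStoppedValue]
    by_cases h : σ ω = ⊤
    · simp only [h, if_pos rfl]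
      exact hω.limsup_eq
    · simp [h]
  -- Markov inequality and conclusion
  have hmar := mul_meas_ge_le_lintegral₀ hfσae (C:ℝ≥0∞)
  calc μ {ω | (C:ℝ≥0∞) ≤ extStoppedValue M Minf σ ω}
      = (C:ℝ≥0∞)⁻¹ * ((C:ℝ≥0∞) * μ {ω | (C:ℝ≥0∞) ≤ extStoppedValue M Minf σ ω}) := by
        rw [← mul_assoc, ENNReal.inv_mul_cancel (by exact_mod_cast hC.ne')
          ENNReal.coe_ne_top, one_mul]
    _ ≤ (C:ℝ≥0∞)⁻¹ * ∫⁻ ω, extStoppedValue M Minf σ ω ∂μ := mul_le_mul_right hmar _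
    _ ≤ (C:ℝ≥0∞)⁻¹ * ∫⁻ ω, extStoppedValue M Minf π ω ∂μ := mul_le_mul_right hkey _
end

section
/- If X₁, X₂, … are i.i.d. standard normal (mean μ₀ = 0, variance 1), then the process K_n = n^{−1/2}·exp(n·(X̄_n)²/2) for n ≥ 1 (with X̄_n the sample mean), together with K_0 = ∞, is an extended nonnegative martingale: E[K_n|F_{n−1}] = K_{n−1} a.s. for all n ≥ 1 under the extended conditional expectation, and each K_n for n ≥ 1 has infinite expectation. -/
open MeasureTheory Filter
open scoped ENNReal NNReal

open ProbabilityTheory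

/-- Extended nonnegative martingale: as `IsENSM` but with a.s. equality. -/
def IsENM {Ω : Type*} {mΩ : MeasurableSpace Ω} (μ : Measure Ω)
    (𝒢 : Filtration ℕ mΩ) (M : ℕ → Ω → ℝ≥0∞) : Prop :=
  (∀ n, Measurable[𝒢 n] (M n)) ∧
  ∀ n : ℕ, extCondExp μ (𝒢 n) (M (n + 1)) =ᵐ[μ] M n

/-- The flat-mixture process: `K_0 = ∞` and
`K_n = n^{-1/2}·exp(n·(X̄_n)²/2)` for `n ≥ 1`. -/
noncomputable def flatMixK {Ω : Type*} (X : ℕ → Ω → ℝ) : ℕ → Ω → ℝ≥0∞ :=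
  fun n ω =>
    if n = 0 then ⊤
    else ENNReal.ofReal ((Real.sqrt n)⁻¹ *
      Real.exp ((n : ℝ) * ((∑ i ∈ Finset.Icc 1 n, X i ω) / n) ^ 2 / 2))

section GaussAux
open Real

lemma sqrt_arith (m : ℕ) (hm : 1 ≤ m) :
    (Real.sqrt (2*π))⁻¹ * (Real.sqrt (m+1))⁻¹ * Real.sqrt (π / ((m:ℝ) / (2*((m:ℝ)+1))))
      = (Real.sqrt m)⁻¹ := by
  have hm0 : (0:ℝ) < m := by exact_mod_cast hm
  have hpi : (0:ℝ) < π := Real.pi_pos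
  have h1 : π / ((m:ℝ) / (2*((m:ℝ)+1))) = (2*π) * (((m:ℝ)+1) / m) := by
    field_simp
  have e1 : Real.sqrt ((2*π) * (((m:ℝ)+1)/(m:ℝ))) = Real.sqrt (2*π) * Real.sqrt (((m:ℝ)+1)/(m:ℝ)) :=
    Real.sqrt_mul (by positivity) _
  have e2 : Real.sqrt (((m:ℝ)+1)/(m:ℝ)) = Real.sqrt ((m:ℝ)+1) / Real.sqrt (m:ℝ) :=
    Real.sqrt_div (by positivity) _
  rw [h1, e1, e2]
  have s1 : (0:ℝ) < Real.sqrt (2*π) := Real.sqrt_pos.2 (by positivity)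
  have s2 : (0:ℝ) < Real.sqrt ((m:ℝ)+1) := Real.sqrt_pos.2 (by positivity)
  have s3 : (0:ℝ) < Real.sqrt m := Real.sqrt_pos.2 hm0
  field_simp

lemma gauss_step (m : ℕ) (hm : 1 ≤ m) (s : ℝ) :
    ∫⁻ y, ENNReal.ofReal ((Real.sqrt (m+1))⁻¹ *
        Real.exp ((s+y)^2 / (2*((m:ℝ)+1)))) ∂(gaussianReal 0 1)
      = ENNReal.ofReal ((Real.sqrt m)⁻¹ * Real.exp (s^2 / (2*m))) := by
  have hm0 : (0:ℝ) < m := by exact_mod_cast hm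
  have hm1 : (0:ℝ) < (m:ℝ)+1 := by positivity
  set b : ℝ := (m:ℝ) / (2*((m:ℝ)+1)) with hb
  have hbpos : 0 < b := by positivity
  set C : ℝ := (Real.sqrt (2*π))⁻¹ * (Real.sqrt (m+1))⁻¹ * Real.exp (s^2/(2*m)) with hC
  have hCpos : 0 < C := by positivity
  have hmeas : Measurable fun y : ℝ => ENNReal.ofReal ((Real.sqrt (m+1))⁻¹ *
      Real.exp ((s+y)^2 / (2*((m:ℝ)+1)))) := by
    apply ENNReal.measurable_ofReal.comp
    exact (measurable_const.mul (((measurable_const.add measurable_id).pow_const 2).div_const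
      _).exp)
  rw [gaussianReal_of_var_ne_zero _ one_ne_zero,
    lintegral_withDensity_eq_lintegral_mul _ (measurable_gaussianPDF 0 1) hmeas]
  have hpt : ∀ y : ℝ, (gaussianPDF 0 1 y * ENNReal.ofReal ((Real.sqrt (m+1))⁻¹ *
      Real.exp ((s+y)^2 / (2*((m:ℝ)+1))))) = ENNReal.ofReal (C * Real.exp (-b * (y - s/m)^2)) := by
    intro y
    rw [gaussianPDF, ← ENNReal.ofReal_mul (le_of_lt (gaussianPDFReal_pos _ _ _ one_ne_zero))]
    congr 1
    rw [gaussianPDFReal]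
    simp only [NNReal.coe_one, mul_one, sub_zero]
    have hexp : -y^2/2 + (s+y)^2/(2*((m:ℝ)+1)) = s^2/(2*(m:ℝ)) + (-b*(y-s/m)^2) := by
      rw [hb]; field_simp; ring
    calc (√(2*π))⁻¹ * rexp (-y^2/2) * ((√((m:ℝ)+1))⁻¹ * rexp ((s+y)^2/(2*((m:ℝ)+1))))
        = (√(2*π))⁻¹ * (√((m:ℝ)+1))⁻¹ * rexp (-y^2/2 + (s+y)^2/(2*((m:ℝ)+1))) := by
          rw [Real.exp_add]; ring
      _ = C * rexp (-b*(y-s/m)^2) := by rw [hexp, Real.exp_add, hC]; ring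
  simp_rw [Pi.mul_apply, hpt]
  rw [(ofReal_integral_eq_lintegral_ofReal
    (((integrable_exp_neg_mul_sq hbpos).comp_sub_right (s/m)).const_mul C)
    (Filter.Eventually.of_forall fun y => by positivity)).symm]
  rw [integral_const_mul]
  have h2 : ∫ y : ℝ, Real.exp (-b * (y - s/m)^2) = ∫ y : ℝ, Real.exp (-b * y^2) :=
    integral_sub_right_eq_self (fun y => Real.exp (-b * y^2)) (s/m)
  rw [h2, integral_gaussian]
  congr 1
  rw [hC, hb, mul_right_comm, sqrt_arith m hm]

end GaussAux

lemma iSup_min_nat (x : ℝ≥0∞) : ⨆ n : ℕ, min x n = x := by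
  refine le_antisymm (iSup_le fun n => min_le_left _ _) ?_
  rcases eq_or_ne x ⊤ with hx | hx
  · subst hx
    have h' : ∀ n : ℕ, min (⊤ : ℝ≥0∞) n = n := fun n => min_eq_right le_top
    simp only [h', ENNReal.iSup_natCast, le_refl]
  · obtain ⟨n, hn⟩ := ENNReal.exists_nat_gt hx
    exact le_trans (le_of_eq (min_eq_left hn.le).symm) (le_iSup (fun n : ℕ => min x n) n)

lemma extCondExp_measurable {Ω : Type*} {mΩ : MeasurableSpace Ω} (μ : Measure Ω)
    (F : MeasurableSpace Ω) (X : Ω → ℝ≥0∞) : Measurable[F] (extCondExp μ F X) :=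
  Measurable.iSup fun _ =>
    ENNReal.measurable_ofReal.comp stronglyMeasurable_condExp.measurable

lemma extCondExp_ae_eq {Ω : Type*} {mΩ : MeasurableSpace Ω} (μ : Measure Ω)
    [IsProbabilityMeasure μ] {F : MeasurableSpace Ω} (hF : F ≤ mΩ) {X Y : Ω → ℝ≥0∞}
    (hX : Measurable[mΩ] X) (hY : Measurable[F] Y)
    (h : ∀ A : Set Ω, MeasurableSet[F] A → ∫⁻ ω in A, X ω ∂μ = ∫⁻ ω in A, Y ω ∂μ) :
    extCondExp μ F X =ᵐ[μ] Y := by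
  haveI : IsFiniteMeasure (μ.trim hF) := isFiniteMeasure_trim hF
  set f : ℕ → Ω → ℝ := fun n ω => (min (X ω) n).toReal with hf
  have hfm : ∀ n, Measurable[mΩ] (f n) := fun n => (hX.min measurable_const).ennreal_toReal
  have hfnn : ∀ n, 0 ≤ f n := fun n ω => ENNReal.toReal_nonneg
  have hfbd : ∀ n ω, ‖f n ω‖ ≤ (n : ℝ) := by
    intro n ω
    rw [Real.norm_eq_abs, abs_of_nonneg (hfnn n ω)]
    have : (min (X ω) n).toReal ≤ ((n : ℝ≥0∞)).toReal :=
      ENNReal.toReal_mono (ENNReal.natCast_ne_top n) (min_le_right _ _)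
    simpa using this
  have hfint : ∀ n, Integrable (f n) μ := by
    intro n
    exact Integrable.mono' (μ := μ) (integrable_const (n : ℝ)) (hfm n).aestronglyMeasurable
      (Filter.Eventually.of_forall (hfbd n))
  set c : ℕ → Ω → ℝ := fun n => μ[f n | F] with hc
  have hmono : ∀ᵐ ω ∂μ, ∀ n, c n ω ≤ c (n+1) ω := by
    rw [ae_all_iff]
    intro n
    refine condExp_mono (hfint n) (hfint (n+1)) (Filter.Eventually.of_forall fun ω => ?_)
    exact ENNReal.toReal_mono (ne_top_of_le_ne_top (ENNReal.natCast_ne_top (n+1))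
      (min_le_right _ _)) (min_le_min le_rfl (by exact_mod_cast Nat.le_succ n))
  have hcnn : ∀ n, 0 ≤ᵐ[μ] c n := fun n =>
    condExp_nonneg (Filter.Eventually.of_forall (hfnn n))
  -- set lintegral identity for extCondExp
  have hset : ∀ A : Set Ω, MeasurableSet[F] A →
      ∫⁻ ω in A, extCondExp μ F X ω ∂μ = ∫⁻ ω in A, X ω ∂μ := by
    intro A hA
    have h1 : ∫⁻ ω in A, extCondExp μ F X ω ∂μ
        = ⨆ n, ∫⁻ ω in A, ENNReal.ofReal (c n ω) ∂μ := by
      refine lintegral_iSup' (fun n => ?_) ?_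
      · exact (ENNReal.measurable_ofReal.comp
          (stronglyMeasurable_condExp.measurable.mono hF le_rfl)).aemeasurable
      · refine ae_restrict_of_ae (hmono.mono fun ω hω => monotone_nat_of_le_succ fun n => ?_)
        exact ENNReal.ofReal_le_ofReal (hω n)
    have h2 : ∀ n, ∫⁻ ω in A, ENNReal.ofReal (c n ω) ∂μ = ∫⁻ ω in A, min (X ω) n ∂μ := by
      intro n
      rw [← ofReal_integral_eq_lintegral_ofReal (integrable_condExp.restrict)
        (ae_restrict_of_ae (hcnn n))]
      rw [setIntegral_condExp hF (hfint n) hA]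
      rw [ofReal_integral_eq_lintegral_ofReal ((hfint n).restrict)
        (ae_restrict_of_ae (Filter.Eventually.of_forall (hfnn n)))]
      refine lintegral_congr fun ω => ?_
      exact ENNReal.ofReal_toReal (ne_top_of_le_ne_top (ENNReal.natCast_ne_top n)
        (min_le_right _ _))
    have h3 : ∫⁻ ω in A, X ω ∂μ = ⨆ n : ℕ, ∫⁻ ω in A, min (X ω) (n : ℝ≥0∞) ∂μ :=
      calc ∫⁻ ω in A, X ω ∂μ = ∫⁻ ω in A, ⨆ n : ℕ, min (X ω) (n : ℝ≥0∞) ∂μ :=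
            lintegral_congr fun ω => (iSup_min_nat _).symm
        _ = ⨆ n : ℕ, ∫⁻ ω in A, min (X ω) (n : ℝ≥0∞) ∂μ :=
            lintegral_iSup (fun n => hX.min measurable_const)
              (fun i j hij ω => min_le_min le_rfl (Nat.cast_le.mpr hij))
    rw [h1]; simp_rw [h2]; exact h3.symm
  -- uniqueness via trimmed measure
  refine ae_eq_of_ae_eq_trim (hm := hF)
    (ae_eq_of_forall_setLIntegral_eq_of_sigmaFinite
      (μ := μ.trim hF) (extCondExp_measurable μ F X) hY ?_)
  intro s hs _
  rw [restrict_trim hF μ hs, lintegral_trim _ (extCondExp_measurable μ F X),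
    lintegral_trim _ hY]
  exact (hset s hs).trans (h s hs)

private lemma key_step {Ω : Type*} {mΩ : MeasurableSpace Ω} (μ : Measure Ω) [IsProbabilityMeasure μ]
    (X : ℕ → Ω → ℝ) (hXm : ∀ i, Measurable (X i))
    (hXgauss : ∀ i, μ.map (X i) = gaussianReal 0 1)
    (hXindep : iIndepFun X μ)
    (𝒢 : Filtration ℕ mΩ)
    (h𝒢 : ∀ n, (𝒢 n : MeasurableSpace Ω) =
      ⨆ i ∈ Finset.Icc 1 n, MeasurableSpace.comap (X i) inferInstance)
    (n : ℕ) (hn : 1 ≤ n) (A : Set Ω) (hA : MeasurableSet[𝒢 n] A) :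
    ∫⁻ ω in A, flatMixK X (n+1) ω ∂μ = ∫⁻ ω in A, flatMixK X n ω ∂μ := by
  have hn0 : (0:ℝ) < n := by exact_mod_cast hn
  set ι := (Finset.Icc 1 n : Finset ℕ)
  set V : Ω → (ι → ℝ) := fun ω i => X i ω with hV
  have hVmeas : Measurable V := measurable_pi_lambda _ fun i => hXm i
  -- the σ-algebra 𝒢 n is the comap of V
  have hG : (𝒢 n : MeasurableSpace Ω) = MeasurableSpace.comap V MeasurableSpace.pi := by
    rw [h𝒢 n]
    have hpi : (MeasurableSpace.pi : MeasurableSpace (ι → ℝ))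
        = ⨆ i : ι, MeasurableSpace.comap (fun v : ι → ℝ => v i) inferInstance := rfl
    rw [hpi, MeasurableSpace.comap_iSup]
    simp_rw [MeasurableSpace.comap_comp]
    rw [iSup_subtype]
    rfl
  obtain ⟨B, hB, rfl⟩ : ∃ B, MeasurableSet B ∧ V ⁻¹' B = A := by
    rw [hG] at hA; exact hA
  -- independence
  have hd : Disjoint ι ({n+1} : Finset ℕ) := by
    simp only [Finset.disjoint_singleton_right, ι, Finset.mem_Icc]
    omega
  have H := hXindep.indepFun_finset ι {n+1} hd hXm
  have H2 : IndepFun V (X (n+1)) μ := by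
    have := H.comp measurable_id
      (measurable_pi_apply (⟨n+1, Finset.mem_singleton_self _⟩ : ({n+1} : Finset ℕ)))
    exact this
  haveI : IsProbabilityMeasure (μ.map V) := Measure.isProbabilityMeasure_map hVmeas.aemeasurable
  have hmap : μ.map (fun ω => (V ω, X (n+1) ω)) = (μ.map V).prod (gaussianReal 0 1) := by
    rw [← hXgauss (n+1)]
    exact (indepFun_iff_map_prod_eq_prod_map_map hVmeas.aemeasurable
      (hXm (n+1)).aemeasurable).1 H2
  -- the functions
  set g1 : ℝ → ℝ≥0∞ := fun t =>
    ENNReal.ofReal ((Real.sqrt ((n:ℝ)+1))⁻¹ * Real.exp (t^2/(2*((n:ℝ)+1)))) with hg1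
  set g0 : ℝ → ℝ≥0∞ := fun t =>
    ENNReal.ofReal ((Real.sqrt (n:ℝ))⁻¹ * Real.exp (t^2/(2*(n:ℝ)))) with hg0
  set σf : (ι → ℝ) → ℝ := fun v => ∑ i : ι, v i with hσ
  have hg1m : Measurable g1 := ENNReal.measurable_ofReal.comp
    (measurable_const.mul (((measurable_id.pow_const 2).div_const _).exp))
  have hg0m : Measurable g0 := ENNReal.measurable_ofReal.comp
    (measurable_const.mul (((measurable_id.pow_const 2).div_const _).exp))
  have hσf : Measurable σf := Finset.univ.measurable_sum (fun i _ => measurable_pi_apply i)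
  have hK1 : ∀ ω, flatMixK X (n+1) ω = g1 (σf (V ω) + X (n+1) ω) := by
    intro ω
    rw [flatMixK, if_neg (Nat.succ_ne_zero n), hg1]
    have hsum : ∑ i ∈ Finset.Icc 1 (n+1), X i ω
        = (∑ i ∈ Finset.Icc 1 n, X i ω) + X (n+1) ω :=
      Finset.sum_Icc_succ_top (Nat.succ_le_succ (Nat.zero_le n)) _
    have hσV : σf (V ω) = ∑ i ∈ Finset.Icc 1 n, X i ω :=
      Finset.sum_coe_sort (Finset.Icc 1 n) (fun j => X j ω)
    rw [hsum, hσV]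
    have hc : ((n+1 : ℕ) : ℝ) = (n:ℝ)+1 := by push_cast; ring
    rw [hc]
    congr 1
    have h1 : (0:ℝ) < (n:ℝ)+1 := by positivity
    congr 1
    field_simp
  have hK0 : ∀ ω, flatMixK X n ω = g0 (σf (V ω)) := by
    intro ω
    rw [flatMixK, if_neg (by omega : n ≠ 0), hg0]
    have hσV : σf (V ω) = ∑ i ∈ Finset.Icc 1 n, X i ω :=
      Finset.sum_coe_sort (Finset.Icc 1 n) (fun j => X j ω)
    rw [hσV]
    congr 2
    field_simp
  have hA' : MeasurableSet (V ⁻¹' B) := hVmeas hB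
  have hFmeas : Measurable fun p : (ι → ℝ) × ℝ =>
      (B.indicator (fun _ => (1:ℝ≥0∞)) p.1) * g1 (σf p.1 + p.2) :=
    ((measurable_const.indicator hB).comp measurable_fst).mul
      (hg1m.comp ((hσf.comp measurable_fst).add measurable_snd))
  have hGmeas : Measurable fun v : ι → ℝ =>
      (B.indicator (fun _ => (1:ℝ≥0∞)) v) * g0 (σf v) :=
    (measurable_const.indicator hB).mul (hg0m.comp hσf)
  calc ∫⁻ ω in V ⁻¹' B, flatMixK X (n+1) ω ∂μ
      = ∫⁻ ω, (B.indicator (fun _ => (1:ℝ≥0∞)) (V ω)) * g1 (σf (V ω) + X (n+1) ω) ∂μ := by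
        rw [← lintegral_indicator hA']
        refine lintegral_congr fun ω => ?_
        by_cases hω : V ω ∈ B
        · simp [Set.indicator_of_mem, hω, hK1 ω]
        · simp [Set.indicator_of_notMem, hω]
    _ = ∫⁻ p : (ι → ℝ) × ℝ, (B.indicator (fun _ => (1:ℝ≥0∞)) p.1) * g1 (σf p.1 + p.2)
          ∂(μ.map (fun ω => (V ω, X (n+1) ω))) := by
        rw [lintegral_map hFmeas (hVmeas.prodMk (hXm (n+1)))]
    _ = ∫⁻ v, ∫⁻ y, (B.indicator (fun _ => (1:ℝ≥0∞)) v) * g1 (σf v + y)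
          ∂(gaussianReal 0 1) ∂(μ.map V) := by
        rw [hmap, lintegral_prod _ hFmeas.aemeasurable]
    _ = ∫⁻ v, (B.indicator (fun _ => (1:ℝ≥0∞)) v) * g0 (σf v) ∂(μ.map V) := by
        refine lintegral_congr fun v => ?_
        have hinner : Measurable fun y : ℝ => g1 (σf v + y) :=
          hg1m.comp (measurable_const.add measurable_id)
        rw [lintegral_const_mul _ hinner]
        congr 1
        exact gauss_step n hn (σf v)
    _ = ∫⁻ ω, (B.indicator (fun _ => (1:ℝ≥0∞)) (V ω)) * g0 (σf (V ω)) ∂μ := by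
        rw [lintegral_map hGmeas hVmeas]
    _ = ∫⁻ ω in V ⁻¹' B, flatMixK X n ω ∂μ := by
        rw [← lintegral_indicator hA']
        refine lintegral_congr fun ω => ?_
        by_cases hω : V ω ∈ B
        · simp [Set.indicator_of_mem, hω, hK0 ω]
        · simp [Set.indicator_of_notMem, hω]

/-- for i.i.d. standard normal `X₁, X₂, …` and the natural filtration
`F_n = σ(X₁,…,X_n)` (with trivial `F_0`), the process `K` with `K_0 = ∞` and
`K_n = n^{-1/2} exp(n X̄_n² / 2)` is an extended nonnegative martingale, and each `K_n`
for `n ≥ 1` has infinite expectation. -/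
theorem flatMixK_isENM_and_infinite_mean
    {Ω : Type*} {mΩ : MeasurableSpace Ω} (μ : Measure Ω) [IsProbabilityMeasure μ]
    (X : ℕ → Ω → ℝ) (hXm : ∀ i, Measurable (X i))
    (hXgauss : ∀ i, μ.map (X i) = gaussianReal 0 1)
    (hXindep : iIndepFun X μ)
    (𝒢 : Filtration ℕ mΩ)
    (h𝒢 : ∀ n, (𝒢 n : MeasurableSpace Ω) =
      ⨆ i ∈ Finset.Icc 1 n, MeasurableSpace.comap (X i) inferInstance) :
    IsENM μ 𝒢 (flatMixK X) ∧
      ∀ n : ℕ, 1 ≤ n → ∫⁻ ω, flatMixK X n ω ∂μ = ⊤ := by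
  -- auxiliary facts
  have hKmeas : ∀ n, Measurable[𝒢 n] (flatMixK X n) := by
    intro n
    rcases Nat.eq_zero_or_pos n with h0 | h1
    · subst h0
      have : flatMixK X 0 = fun _ => (⊤ : ℝ≥0∞) := by funext ω; simp [flatMixK]
      rw [this]; exact measurable_const
    · have hXi : ∀ i ∈ Finset.Icc 1 n, Measurable[𝒢 n] (X i) := by
        intro i hi
        refine Measurable.of_comap_le ?_
        rw [h𝒢 n]
        exact le_iSup₂ (f := fun i _ => MeasurableSpace.comap (X i) inferInstance) i hi
      have hS : Measurable[𝒢 n] fun ω => ∑ i ∈ Finset.Icc 1 n, X i ω :=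
        Finset.measurable_sum _ (fun i hi => hXi i hi)
      have hKn : flatMixK X n = fun ω => ENNReal.ofReal ((Real.sqrt n)⁻¹ *
          Real.exp ((n : ℝ) * ((∑ i ∈ Finset.Icc 1 n, X i ω) / n) ^ 2 / 2)) := by
        funext ω; rw [flatMixK, if_neg (by omega)]
      rw [hKn]
      exact ENNReal.measurable_ofReal.comp (measurable_const.mul
        ((((hS.div_const _).pow_const 2).const_mul _).div_const 2).exp)
  have hK1top : ∫⁻ ω, flatMixK X 1 ω ∂μ = ⊤ := by
    have h1 : ∀ ω, flatMixK X 1 ω = ENNReal.ofReal (Real.exp ((X 1 ω) ^ 2 / 2)) := by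
      intro ω
      rw [flatMixK, if_neg one_ne_zero]
      have : ∑ i ∈ Finset.Icc 1 1, X i ω = X 1 ω := by simp
      rw [this]
      norm_num
    simp_rw [h1]
    have hm : Measurable fun x : ℝ => ENNReal.ofReal (Real.exp (x ^ 2 / 2)) :=
      ENNReal.measurable_ofReal.comp ((measurable_id.pow_const 2).div_const 2).exp
    have hmap1 : ∫⁻ ω, ENNReal.ofReal (Real.exp ((X 1 ω) ^ 2 / 2)) ∂μ
        = ∫⁻ x, ENNReal.ofReal (Real.exp (x ^ 2 / 2)) ∂(μ.map (X 1)) :=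
      (lintegral_map hm (hXm 1)).symm
    rw [hmap1, hXgauss 1,
      gaussianReal_of_var_ne_zero _ one_ne_zero,
      lintegral_withDensity_eq_lintegral_mul _ (measurable_gaussianPDF 0 1) hm]
    have hpt : ∀ x : ℝ, gaussianPDF 0 1 x * ENNReal.ofReal (Real.exp (x ^ 2 / 2))
        = ENNReal.ofReal ((Real.sqrt (2 * Real.pi))⁻¹) := by
      intro x
      rw [gaussianPDF, ← ENNReal.ofReal_mul (le_of_lt (gaussianPDFReal_pos _ _ _ one_ne_zero))]
      congr 1
      rw [gaussianPDFReal]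
      simp only [NNReal.coe_one, mul_one, sub_zero]
      rw [mul_assoc, ← Real.exp_add]
      norm_num
      have hz : -x ^ 2 / 2 + x ^ 2 / 2 = 0 := by ring
      rw [hz, Real.exp_zero, mul_one]
    simp_rw [Pi.mul_apply, hpt]
    rw [lintegral_const, Real.volume_univ, ENNReal.mul_top]
    exact (ENNReal.ofReal_pos.2 (by positivity)).ne'
  have hkey : ∀ n : ℕ, 1 ≤ n → ∀ A : Set Ω, MeasurableSet[𝒢 n] A →
      ∫⁻ ω in A, flatMixK X (n + 1) ω ∂μ = ∫⁻ ω in A, flatMixK X n ω ∂μ :=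
    fun n hn A hA => key_step μ X hXm hXgauss hXindep 𝒢 h𝒢 n hn A hA
  have htop : ∀ n : ℕ, 1 ≤ n → ∫⁻ ω, flatMixK X n ω ∂μ = ⊤ := by
    intro n hn
    induction n with
    | zero => omega
    | succ m ih =>
      rcases Nat.eq_zero_or_pos m with h0 | h1
      · subst h0; exact hK1top
      · have h := hkey m h1 Set.univ MeasurableSet.univ
        rw [Measure.restrict_univ] at h
        exact h.trans (ih h1)
  refine ⟨⟨hKmeas, ?_⟩, htop⟩
  intro n
  rcases Nat.eq_zero_or_pos n with h0 | h1
  · subst h0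
    refine extCondExp_ae_eq μ (𝒢.le 0) ((hKmeas 1).mono (𝒢.le 1) le_rfl) (hKmeas 0) ?_
    intro A hA
    have hbot : (𝒢 0 : MeasurableSpace Ω) = ⊥ := by
      rw [h𝒢 0]
      have : Finset.Icc 1 0 = (∅ : Finset ℕ) := Finset.Icc_eq_empty (by omega)
      simp [this]
    rw [hbot] at hA
    rcases MeasurableSpace.measurableSet_bot_iff.1 hA with rfl | rfl
    · simp
    · rw [Measure.restrict_univ]
      have e1 : ∫⁻ ω, flatMixK X (0 + 1) ω ∂μ = ⊤ := hK1top
      rw [e1]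
      have e2 : ∀ ω : Ω, flatMixK X 0 ω = ⊤ := fun ω => by simp [flatMixK]
      simp_rw [e2]
      rw [lintegral_const, measure_univ, mul_one]
  · exact extCondExp_ae_eq μ (𝒢.le n) ((hKmeas (n + 1)).mono (𝒢.le (n + 1)) le_rfl)
      (hKmeas n) (fun A hA => hkey n h1 A hA)
end

section
/- Let Z be a mean-zero 1-subGaussian random variable, i.e., E[exp(λZ)] ≤ exp(λ²/2) for all real λ. Then for any M > 0, E[1{|Z| ≤ M}·exp(Z²/2)] ≤ 1 + M². -/
open MeasureTheory
open scoped ENNReal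

/-- Chernoff bound from the subGaussian MGF bound: `μ {s ≤ Z} ≤ exp(-s²/2)`. -/
lemma chernoff_aux {Ω : Type*} {mΩ : MeasurableSpace Ω} (μ : Measure Ω)
    (Z : Ω → ℝ)
    (hsub : ∀ l : ℝ, ∫⁻ ω, ENNReal.ofReal (Real.exp (l * Z ω)) ∂μ ≤
      ENNReal.ofReal (Real.exp (l ^ 2 / 2)))
    (hZm : Measurable Z) {s : ℝ} (hs : 0 < s) :
    μ {ω | s ≤ Z ω} ≤ ENNReal.ofReal (Real.exp (-(s ^ 2) / 2)) := by
  have key : ENNReal.ofReal (Real.exp (s * s)) * μ {ω | s ≤ Z ω} ≤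
      ENNReal.ofReal (Real.exp (s * s)) * ENNReal.ofReal (Real.exp (-(s ^ 2) / 2)) := by
    have h1 : μ {ω | s ≤ Z ω} ≤
        μ {ω | ENNReal.ofReal (Real.exp (s * s)) ≤ ENNReal.ofReal (Real.exp (s * Z ω))} := by
      apply measure_mono
      intro ω hω
      simp only [Set.mem_setOf_eq] at hω ⊢
      exact ENNReal.ofReal_le_ofReal (Real.exp_le_exp.2 (by nlinarith))
    calc ENNReal.ofReal (Real.exp (s * s)) * μ {ω | s ≤ Z ω}
        ≤ ENNReal.ofReal (Real.exp (s * s)) *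
          μ {ω | ENNReal.ofReal (Real.exp (s * s)) ≤ ENNReal.ofReal (Real.exp (s * Z ω))} :=
          mul_le_mul_right h1 _
      _ ≤ ∫⁻ ω, ENNReal.ofReal (Real.exp (s * Z ω)) ∂μ :=
          mul_meas_ge_le_lintegral₀ ((Real.measurable_exp.comp (hZm.const_mul s)).ennreal_ofReal.aemeasurable) _
      _ ≤ ENNReal.ofReal (Real.exp (s ^ 2 / 2)) := hsub s
      _ = ENNReal.ofReal (Real.exp (s * s)) * ENNReal.ofReal (Real.exp (-(s ^ 2) / 2)) := by
          rw [← ENNReal.ofReal_mul (Real.exp_nonneg _), ← Real.exp_add]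
          ring_nf
  exact (ENNReal.mul_le_mul_iff_right (by positivity) ENNReal.ofReal_ne_top).1 key

/-- if `Z` is mean-zero and 1-subGaussian
(`E[exp(λZ)] ≤ exp(λ²/2)` for all real `λ`), then for any `M > 0`,
`E[1{|Z| ≤ M}·exp(Z²/2)] ≤ 1 + M²`. -/
theorem subGaussian_truncated_exp_sq_le
    {Ω : Type*} {mΩ : MeasurableSpace Ω} (μ : Measure Ω) [IsProbabilityMeasure μ]
    (Z : Ω → ℝ) (hZm : Measurable Z) (hZint : Integrable Z μ)
    (hmean : ∫ ω, Z ω ∂μ = 0)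
    (hsub : ∀ l : ℝ, ∫⁻ ω, ENNReal.ofReal (Real.exp (l * Z ω)) ∂μ ≤
      ENNReal.ofReal (Real.exp (l ^ 2 / 2)))
    (M : ℝ) (hM : 0 < M) :
    ∫⁻ ω in {ω | |Z ω| ≤ M}, ENNReal.ofReal (Real.exp (Z ω ^ 2 / 2)) ∂μ ≤
      ENNReal.ofReal (1 + M ^ 2) := by
  set A : Set Ω := {ω | |Z ω| ≤ M} with hA
  have hAmeas : MeasurableSet A := measurableSet_le (by fun_prop) measurable_const
  set B : ℝ := Real.exp (M ^ 2 / 2) with hB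
  have hB1 : 1 < B := by
    rw [hB, show (1:ℝ) = Real.exp 0 from Real.exp_zero.symm]
    exact Real.exp_lt_exp.2 (by positivity)
  -- layer cake
  have hlc : ∫⁻ ω in A, ENNReal.ofReal (Real.exp (Z ω ^ 2 / 2)) ∂μ =
      ∫⁻ t in Set.Ioi (0:ℝ), (μ.restrict A) {ω | t < Real.exp (Z ω ^ 2 / 2)} :=
    lintegral_eq_lintegral_meas_lt (μ.restrict A)
      (Filter.Eventually.of_forall fun ω => Real.exp_nonneg _) (by fun_prop)
  set g : ℝ → ℝ≥0∞ := fun t => (μ.restrict A) {ω | t < Real.exp (Z ω ^ 2 / 2)} with hg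
  have hg1 : ∀ t : ℝ, g t ≤ 1 := fun t =>
    calc g t ≤ (μ.restrict A) Set.univ := measure_mono (Set.subset_univ _)
      _ ≤ μ Set.univ := Measure.restrict_le_self _
      _ = 1 := measure_univ
  -- piece on Ioc 0 1
  have hpiece1 : ∫⁻ t in Set.Ioc (0:ℝ) 1, g t ≤ 1 := by
    calc ∫⁻ t in Set.Ioc (0:ℝ) 1, g t ≤ ∫⁻ _ in Set.Ioc (0:ℝ) 1, 1 :=
          lintegral_mono fun t => hg1 t
      _ = 1 := by simp [Real.volume_Ioc]
  -- pointwise bound on Ioc 1 B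
  have hpb : ∀ t ∈ Set.Ioc (1:ℝ) B, g t ≤ ENNReal.ofReal (2 / t) := by
    intro t ht
    obtain ⟨ht1, htB⟩ := ht
    have ht0 : (0:ℝ) < t := lt_trans one_pos ht1
    have hlogt : 0 < Real.log t := Real.log_pos ht1
    set s : ℝ := Real.sqrt (2 * Real.log t) with hsdef
    have hs0 : 0 < s := Real.sqrt_pos.2 (by linarith)
    have hs2 : s ^ 2 = 2 * Real.log t := Real.sq_sqrt (by linarith)
    have hsubset : {ω | t < Real.exp (Z ω ^ 2 / 2)} ⊆
        {ω | s ≤ Z ω} ∪ {ω | s ≤ -Z ω} := by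
      intro ω hω
      simp only [Set.mem_setOf_eq] at hω
      have h1 : Real.log t < Z ω ^ 2 / 2 := by
        have := Real.log_lt_log ht0 hω
        rwa [Real.log_exp] at this
      have h2 : s ^ 2 < Z ω ^ 2 := by rw [hs2]; linarith
      have h3 : s < |Z ω| := by
        nlinarith [sq_abs (Z ω), abs_nonneg (Z ω)]
      rcases le_abs.mp h3.le with h | h
      · exact Or.inl h
      · exact Or.inr h
    have hchern1 : μ {ω | s ≤ Z ω} ≤ ENNReal.ofReal (Real.exp (-(s ^ 2) / 2)) :=
      chernoff_aux μ Z hsub hZm hs0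
    have hchern2 : μ {ω | s ≤ -Z ω} ≤ ENNReal.ofReal (Real.exp (-(s ^ 2) / 2)) := by
      refine chernoff_aux μ (fun ω => -Z ω) (fun l => ?_) hZm.neg hs0
      have := hsub (-l)
      simp only [neg_mul] at this
      calc ∫⁻ ω, ENNReal.ofReal (Real.exp (l * -Z ω)) ∂μ
          = ∫⁻ ω, ENNReal.ofReal (Real.exp (-(l * Z ω))) ∂μ := by
            congr 1; funext ω; ring_nf
        _ ≤ ENNReal.ofReal (Real.exp ((-l) ^ 2 / 2)) := this
        _ = ENNReal.ofReal (Real.exp (l ^ 2 / 2)) := by ring_nf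
    have hexp : Real.exp (-(s ^ 2) / 2) = 1 / t := by
      rw [hs2]
      have : -(2 * Real.log t) / 2 = -Real.log t := by ring
      rw [this, Real.exp_neg, Real.exp_log ht0, one_div]
    calc g t ≤ μ {ω | t < Real.exp (Z ω ^ 2 / 2)} := Measure.restrict_le_self _
      _ ≤ μ ({ω | s ≤ Z ω} ∪ {ω | s ≤ -Z ω}) := measure_mono hsubset
      _ ≤ μ {ω | s ≤ Z ω} + μ {ω | s ≤ -Z ω} := measure_union_le _ _
      _ ≤ ENNReal.ofReal (Real.exp (-(s ^ 2) / 2)) + ENNReal.ofReal (Real.exp (-(s ^ 2) / 2)) :=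
          add_le_add hchern1 hchern2
      _ = ENNReal.ofReal (2 / t) := by
          rw [hexp, ← ENNReal.ofReal_add (by positivity) (by positivity)]
          congr 1; ring
  -- piece on Ioc 1 B
  have hint : IntegrableOn (fun t : ℝ => 2 / t) (Set.Ioc 1 B) := by
    apply (ContinuousOn.integrableOn_Icc ?_).mono_set Set.Ioc_subset_Icc_self
    apply ContinuousOn.div continuousOn_const continuousOn_id
    intro x hx
    have : (1:ℝ) ≤ x := hx.1
    intro h; rw [id] at h; linarith
  have hval : ∫ t in Set.Ioc (1:ℝ) B, 2 / t = M ^ 2 := by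
    rw [← intervalIntegral.integral_of_le hB1.le]
    have : ∀ t : ℝ, 2 / t = 2 * (1 / t) := fun t => by ring
    simp_rw [this]
    rw [intervalIntegral.integral_const_mul, integral_one_div (by
      intro h
      rcases Set.mem_uIcc.mp h with ⟨h1, _⟩ | ⟨_, h2⟩ <;> linarith)]
    rw [div_one, hB, Real.log_exp]
    ring
  have hpiece2 : ∫⁻ t in Set.Ioc (1:ℝ) B, g t ≤ ENNReal.ofReal (M ^ 2) := by
    calc ∫⁻ t in Set.Ioc (1:ℝ) B, g t
        ≤ ∫⁻ t in Set.Ioc (1:ℝ) B, ENNReal.ofReal (2 / t) :=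
          setLIntegral_mono (by fun_prop) hpb
      _ = ENNReal.ofReal (∫ t in Set.Ioc (1:ℝ) B, 2 / t) := by
          rw [← ofReal_integral_eq_lintegral_ofReal hint]
          filter_upwards [self_mem_ae_restrict measurableSet_Ioc] with t ht
          have h0 : (0:ℝ) < t := lt_trans one_pos ht.1
          positivity
      _ = ENNReal.ofReal (M ^ 2) := by rw [hval]
  -- piece on Ioi B
  have hpiece3 : ∫⁻ t in Set.Ioi B, g t = 0 := by
    have : ∀ t ∈ Set.Ioi B, g t = 0 := by
      intro t ht
      simp only [Set.mem_Ioi] at ht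
      show (μ.restrict A) {ω | t < Real.exp (Z ω ^ 2 / 2)} = 0
      rw [Measure.restrict_apply' hAmeas]
      convert measure_empty (μ := μ)
      ext ω
      simp only [Set.mem_inter_iff, Set.mem_setOf_eq, Set.mem_empty_iff_false, iff_false]
      rintro ⟨h1, h2⟩
      have h2' : |Z ω| ≤ M := h2
      have hz2 : Z ω ^ 2 ≤ M ^ 2 := by nlinarith [sq_abs (Z ω), abs_nonneg (Z ω)]
      have : Real.exp (Z ω ^ 2 / 2) ≤ B := by
        rw [hB]; exact Real.exp_le_exp.2 (by linarith)
      linarith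
    calc ∫⁻ t in Set.Ioi B, g t = ∫⁻ t in Set.Ioi B, 0 :=
          setLIntegral_congr_fun measurableSet_Ioi this
      _ = 0 := lintegral_zero
  -- assemble
  have hsplit : Set.Ioi (0:ℝ) = Set.Ioc (0:ℝ) 1 ∪ (Set.Ioc (1:ℝ) B ∪ Set.Ioi B) := by
    rw [Set.Ioc_union_Ioi_eq_Ioi hB1.le, Set.Ioc_union_Ioi_eq_Ioi zero_le_one]
  rw [hlc, hsplit]
  rw [lintegral_union (by measurability) (by
    rw [Set.Ioc_union_Ioi_eq_Ioi hB1.le]; exact Set.Ioc_disjoint_Ioi le_rfl)]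
  rw [lintegral_union measurableSet_Ioi (Set.Ioc_disjoint_Ioi le_rfl)]
  have hfinal : (1:ℝ≥0∞) + (ENNReal.ofReal (M ^ 2) + 0) = ENNReal.ofReal (1 + M ^ 2) := by
    rw [add_zero, ENNReal.ofReal_add (by norm_num) (sq_nonneg M), ENNReal.ofReal_one]
  exact le_trans (add_le_add hpiece1 (add_le_add hpiece2 hpiece3.le)) hfinal.le
end
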